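/- arXiv:2602.13493 — 14 statements merged into one kernel-verified Lean document; each statement's English description precedes it below -/
import Mathlib

section
/- If probability density functions f_n on ℝ^d converge in Lebesgue measure to a pdf f, then the family {f_n} is uniformly integrable: for every ε > 0 there exists M > 0 such that sup_n ∫_{f_n > M} f_n dλ < ε. -/
open MeasureTheory Filter
open scoped ENNReal

private lemma scheffe {α : Type*} [MeasurableSpace α] {μ : Measure α}
    {F : ℕ → α → ℝ≥0∞} {G : α → ℝ≥0∞}
    (hF : ∀ n, Measurable (F n)) (hG : Measurable G)
    (hF1 : ∀ n, ∫⁻ x, F n x ∂μ = 1) (hG1 : ∫⁻ x, G x ∂μ = 1)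
    (hae : ∀ᵐ x ∂μ, Filter.Tendsto (fun n => F n x) atTop (nhds (G x))) :
    Filter.Tendsto (fun n => ∫⁻ x, ((F n x - G x) + (G x - F n x)) ∂μ) atTop (nhds 0) := by
  have hmin : Tendsto (fun n => ∫⁻ x, min (F n x) (G x) ∂μ) atTop (nhds 1) := by
    rw [← hG1]
    refine tendsto_lintegral_of_dominated_convergence G (fun n => (hF n).min hG)
      (fun n => Eventually.of_forall fun x => min_le_right _ _) (by rw [hG1]; exact ENNReal.one_ne_top) ?_
    filter_upwards [hae] with x hx
    simpa using hx.min (tendsto_const_nhds : Tendsto (fun _ : ℕ => G x) atTop (nhds (G x)))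
  have key : ∀ n, (∫⁻ x, ((F n x - G x) + (G x - F n x)) ∂μ)
      = 2 - 2 * ∫⁻ x, min (F n x) (G x) ∂μ := by
    intro n
    have hid : ∀ x, min (F n x) (G x) + ((F n x - G x) + (G x - F n x)) = max (F n x) (G x) := by
      intro x
      rcases le_total (F n x) (G x) with h | h
      · rw [min_eq_left h, max_eq_right h, tsub_eq_zero_of_le h, zero_add, add_tsub_cancel_of_le h]
      · rw [min_eq_right h, max_eq_left h, tsub_eq_zero_of_le h, add_zero, add_tsub_cancel_of_le h]
    have hid2 : ∀ x, min (F n x) (G x) + max (F n x) (G x) = F n x + G x := fun x =>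
      min_add_max _ _
    have hDm : Measurable fun x => (F n x - G x) + (G x - F n x) :=
      ((hF n).sub hG).add (hG.sub (hF n))
    have h1 : (∫⁻ x, min (F n x) (G x) ∂μ) + ∫⁻ x, ((F n x - G x) + (G x - F n x)) ∂μ
        = ∫⁻ x, max (F n x) (G x) ∂μ := by
      rw [← lintegral_add_left ((hF n).min hG)]
      exact lintegral_congr hid
    have h2 : (∫⁻ x, min (F n x) (G x) ∂μ) + ∫⁻ x, max (F n x) (G x) ∂μ = 2 := by
      rw [← lintegral_add_left ((hF n).min hG), lintegral_congr hid2,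
        lintegral_add_left (hF n), hF1, hG1]
      norm_num
    set m := ∫⁻ x, min (F n x) (G x) ∂μ with hm
    have hle : m ≤ 1 := by
      rw [← hG1]; exact lintegral_mono fun x => min_le_right _ _
    have hmne : m ≠ ∞ := ne_top_of_le_ne_top ENNReal.one_ne_top hle
    have hMax : (∫⁻ x, max (F n x) (G x) ∂μ) = 2 - m :=
      ENNReal.eq_sub_of_add_eq hmne (by rw [add_comm]; exact h2)
    have hD : (∫⁻ x, ((F n x - G x) + (G x - F n x)) ∂μ) = (2 - m) - m :=
      hMax ▸ ENNReal.eq_sub_of_add_eq hmne (by rw [add_comm]; exact h1)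
    rw [hD, tsub_tsub, two_mul]
  have h2 : Tendsto (fun n => (2 : ℝ≥0∞) - 2 * ∫⁻ x, min (F n x) (G x) ∂μ) atTop (nhds 0) := by
    have : Tendsto (fun n => (2 : ℝ≥0∞) * ∫⁻ x, min (F n x) (G x) ∂μ) atTop (nhds (2 * 1)) :=
      ENNReal.Tendsto.const_mul hmin (Or.inl one_ne_zero)
    have := ENNReal.Tendsto.sub (tendsto_const_nhds : Tendsto (fun _ : ℕ => (2:ℝ≥0∞)) atTop _)
      this (Or.inl ENNReal.ofNat_ne_top)
    simpa using this
  exact h2.congr fun n => (key n).symm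

theorem entropy_stmt1 (d : ℕ) (f : ℕ → EuclideanSpace ℝ (Fin d) → ℝ)
    (g : EuclideanSpace ℝ (Fin d) → ℝ)
    (hfm : ∀ n, Measurable (f n)) (hf0 : ∀ n x, 0 ≤ f n x)
    (hf1 : ∀ n, ∫⁻ x, ENNReal.ofReal (f n x) = 1)
    (hgm : Measurable g) (hg0 : ∀ x, 0 ≤ g x)
    (hg1 : ∫⁻ x, ENNReal.ofReal (g x) = 1)
    (hconv : TendstoInMeasure volume f atTop g) :
    ∀ ε > (0:ℝ), ∃ M > (0:ℝ), ∀ n,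
      ∫⁻ x in {x | M < f n x}, ENNReal.ofReal (f n x) < ENNReal.ofReal ε := by
  set F : ℕ → EuclideanSpace ℝ (Fin d) → ℝ≥0∞ := fun n x => ENNReal.ofReal (f n x) with hF
  set G : EuclideanSpace ℝ (Fin d) → ℝ≥0∞ := fun x => ENNReal.ofReal (g x) with hG
  have hFm : ∀ n, Measurable (F n) := fun n => ENNReal.measurable_ofReal.comp (hfm n)
  have hGm : Measurable G := ENNReal.measurable_ofReal.comp hgm
  -- L¹ convergence via subsequences + Scheffé
  have hA : Tendsto (fun n => ∫⁻ x, ((F n x - G x) + (G x - F n x))) atTop (nhds 0) := by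
    refine tendsto_of_subseq_tendsto fun ns hns => ?_
    have hconv' : TendstoInMeasure volume (fun k => f (ns k)) atTop g :=
      fun ε hε => (hconv ε hε).comp hns
    obtain ⟨ms, -, hae⟩ := hconv'.exists_seq_tendsto_ae
    refine ⟨ms, scheffe (fun k => hFm (ns (ms k))) hGm (fun k => hf1 _) hg1 ?_⟩
    filter_upwards [hae] with x hx
    exact ENNReal.tendsto_ofReal hx
  -- Markov: uniform smallness of superlevel sets
  have markov : ∀ δ : ℝ≥0∞, 0 < δ → ∃ M > (0:ℝ), ∀ n, ∀ M' : ℝ, M ≤ M' →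
      volume {x | M' < f n x} < δ := by
    intro δ hδ
    refine ⟨(1 / δ).toReal + 1, by positivity, fun n M' hM' => ?_⟩
    have hδ' : 1 / δ ≠ ∞ := by
      simp [ENNReal.div_eq_top, hδ.ne']
    have hMpos : (0:ℝ) < M' := lt_of_lt_of_le (by positivity) hM'
    have h1 : 1 / δ < ENNReal.ofReal M' := by
      rw [ENNReal.lt_ofReal_iff_toReal_lt hδ']
      calc (1/δ).toReal < (1/δ).toReal + 1 := by linarith
        _ ≤ M' := hM'
    have hsub : {x | M' < f n x} ⊆ {x : EuclideanSpace ℝ (Fin d) | ENNReal.ofReal M' ≤ F n x} :=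
      fun x hx => ENNReal.ofReal_le_ofReal (le_of_lt hx)
    refine lt_of_le_of_lt (measure_mono hsub) (lt_of_le_of_lt
      (meas_ge_le_lintegral_div (hFm n).aemeasurable (by simp [hMpos]) ENNReal.ofReal_ne_top) ?_)
    rw [hf1 n]
    rw [ENNReal.div_lt_iff (Or.inl (by simp [hMpos])) (Or.inl ENNReal.ofReal_ne_top)]
    rcases eq_or_ne δ ∞ with h | h
    · simp [h, ENNReal.top_mul, (ENNReal.ofReal_pos.mpr hMpos).ne']
    · calc (1:ℝ≥0∞) = δ * (1/δ) := by rw [one_div, ENNReal.mul_inv_cancel hδ.ne' h]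
        _ < δ * ENNReal.ofReal M' := (ENNReal.mul_lt_mul_iff_right hδ.ne' h).mpr h1
  intro ε hε
  set ε' := ENNReal.ofReal ε with hε'
  have hε'0 : ε' ≠ 0 := (ENNReal.ofReal_pos.mpr hε).ne'
  have hε'2 : ε' / 2 ≠ 0 := by simp [ENNReal.div_eq_zero_iff, hε'0]
  -- absolute continuity for G
  obtain ⟨δg, hδg, hδgG⟩ := exists_pos_setLIntegral_lt_of_measure_lt (μ := volume) (f := G)
    (by rw [hg1]; exact ENNReal.one_ne_top) hε'2
  -- N from L¹ convergence
  have hev : ∀ᶠ n in atTop, (∫⁻ x, ((F n x - G x) + (G x - F n x))) < ε' / 2 :=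
    hA.eventually_lt_const (by positivity)
  obtain ⟨N, hN⟩ := eventually_atTop.mp hev
  -- individual bounds for each n
  have h_each : ∀ n, ∃ Mn > (0:ℝ), ∀ M' : ℝ, Mn ≤ M' →
      ∫⁻ x in {x | M' < f n x}, F n x < ε' := by
    intro n
    obtain ⟨δn, hδn, hδnF⟩ := exists_pos_setLIntegral_lt_of_measure_lt (μ := volume) (f := F n)
      (by rw [hf1 n]; exact ENNReal.one_ne_top) hε'0
    obtain ⟨Mn, hMn, hMn'⟩ := markov δn hδn
    exact ⟨Mn, hMn, fun M' hM' => hδnF _ (hMn' n M' hM')⟩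
  choose Mn hMnpos hMn using h_each
  obtain ⟨Mg, hMgpos, hMg⟩ := markov δg hδg
  have hsum0 : (0:ℝ) ≤ ∑ k ∈ Finset.range N, Mn k :=
    Finset.sum_nonneg fun k _ => (hMnpos k).le
  refine ⟨Mg + ∑ k ∈ Finset.range N, Mn k,
    add_pos_of_pos_of_nonneg hMgpos hsum0, fun n => ?_⟩
  set M := Mg + ∑ k ∈ Finset.range N, Mn k with hM
  by_cases hn : n < N
  · have h1 : Mn n ≤ M := by
      have := Finset.single_le_sum (fun k _ => (hMnpos k).le) (Finset.mem_range.mpr hn)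
      rw [hM]; linarith
    exact hMn n M h1
  · push_neg at hn
    have hvol : volume {x | M < f n x} < δg := by
      refine hMg n M ?_
      rw [hM]; linarith
    calc ∫⁻ x in {x | M < f n x}, F n x
        ≤ ∫⁻ x in {x | M < f n x}, ((F n x - G x) + G x) :=
          lintegral_mono fun x => le_tsub_add
      _ = (∫⁻ x in {x | M < f n x}, (F n x - G x)) + ∫⁻ x in {x | M < f n x}, G x :=
          lintegral_add_left ((hFm n).sub hGm) _
      _ ≤ (∫⁻ x, ((F n x - G x) + (G x - F n x))) + ∫⁻ x in {x | M < f n x}, G x :=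
          add_le_add_left (le_trans (lintegral_mono fun x => le_self_add)
            (setLIntegral_le_lintegral _ _)) _
      _ < ε' / 2 + ε' / 2 := ENNReal.add_lt_add (hN n hn) (hδgG _ hvol)
      _ = ε' := ENNReal.add_halves ε'
end

section
/- If probability density functions f_n on ℝ^d converge in Lebesgue measure to a pdf f, then the family {f_n} is tight: for every ε > 0 there exists R > 0 such that sup_n ∫_{|x| > R} f_n dλ < ε. -/
open MeasureTheory Filter
open scoped ENNReal Topology

-- Lemma 1: tails of an integrable nonneg function are eventually small
private lemma tail_small {E : Type*} [NormedAddCommGroup E] [MeasurableSpace E]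
    [BorelSpace E] (μ : Measure E) (h : E → ℝ) (hm : Measurable h)
    (hfin : ∫⁻ x, ENNReal.ofReal (h x) ∂μ ≠ ⊤) {ε : ℝ≥0∞} (hε : 0 < ε) :
    ∃ R > (0:ℝ), ∫⁻ x in {x | R < ‖x‖}, ENNReal.ofReal (h x) ∂μ < ε := by
  set ν := μ.withDensity (fun x => ENNReal.ofReal (h x)) with hν
  have hmeas : ∀ R : ℝ, MeasurableSet {x : E | R < ‖x‖} := fun R =>
    measurableSet_lt measurable_const measurable_norm
  have happ : ∀ R : ℝ, ∫⁻ x in {x | R < ‖x‖}, ENNReal.ofReal (h x) ∂μ = ν {x | R < ‖x‖} :=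
    fun R => (withDensity_apply _ (hmeas R)).symm
  have hanti : Antitone (fun n : ℕ => {x : E | (n:ℝ) < ‖x‖}) := by
    intro a b hab x hx
    simp only [Set.mem_setOf_eq] at hx ⊢
    exact lt_of_le_of_lt (Nat.cast_le.mpr hab) hx
  have hinter : (⋂ n : ℕ, {x : E | (n:ℝ) < ‖x‖}) = ∅ := by
    ext x
    simp only [Set.mem_iInter, Set.mem_setOf_eq, Set.mem_empty_iff_false, iff_false, not_forall,
      not_lt]
    obtain ⟨n, hn⟩ := exists_nat_ge ‖x‖
    exact ⟨n, hn⟩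
  have hfin0 : ν {x : E | (0:ℝ) < ‖x‖} ≠ ⊤ := by
    refine ne_top_of_le_ne_top ?_ (measure_mono (Set.subset_univ _))
    rw [hν, withDensity_apply _ MeasurableSet.univ, Measure.restrict_univ]
    exact hfin
  have htend : Tendsto (fun n : ℕ => ν {x : E | (n:ℝ) < ‖x‖}) atTop (𝓝 0) := by
    have := tendsto_measure_iInter_atTop (μ := ν)
      (s := fun n : ℕ => {x : E | (n:ℝ) < ‖x‖})
      (fun n => (hmeas _).nullMeasurableSet) hanti ⟨0, by simpa using hfin0⟩
    rwa [hinter, measure_empty] at this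
  have := (htend.eventually_lt_const hε).exists
  obtain ⟨n, hn⟩ := this
  refine ⟨(n:ℝ) + 1, by positivity, ?_⟩
  rw [happ]
  refine lt_of_le_of_lt (measure_mono ?_) hn
  intro x hx
  simp only [Set.mem_setOf_eq] at hx ⊢
  linarith

theorem entropy_stmt2 (d : ℕ) (f : ℕ → EuclideanSpace ℝ (Fin d) → ℝ)
    (g : EuclideanSpace ℝ (Fin d) → ℝ)
    (hfm : ∀ n, Measurable (f n)) (hf0 : ∀ n x, 0 ≤ f n x)
    (hf1 : ∀ n, ∫⁻ x, ENNReal.ofReal (f n x) = 1)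
    (hgm : Measurable g) (hg0 : ∀ x, 0 ≤ g x)
    (hg1 : ∫⁻ x, ENNReal.ofReal (g x) = 1)
    (hconv : TendstoInMeasure volume f atTop g) :
    ∀ ε > (0:ℝ), ∃ R > (0:ℝ), ∀ n,
      ∫⁻ x in {x | R < ‖x‖}, ENNReal.ofReal (f n x) < ENNReal.ofReal ε := by
  intro ε hε
  have hε4 : (0:ℝ≥0∞) < ENNReal.ofReal (ε/4) := ENNReal.ofReal_pos.mpr (by linarith)
  obtain ⟨R₀, hR₀pos, hR₀⟩ := tail_small volume g hgm (by rw [hg1]; exact ENNReal.one_ne_top) hε4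
  have hmeas : ∀ R : ℝ, MeasurableSet {x : EuclideanSpace ℝ (Fin d) | R < ‖x‖} := fun R =>
    measurableSet_lt measurable_const measurable_norm
  set s₀ := {x : EuclideanSpace ℝ (Fin d) | R₀ < ‖x‖}ᶜ with hs₀
  set D := ∫⁻ x in s₀, ENNReal.ofReal (g x) with hD
  set C := fun n => ∫⁻ x in s₀, ENNReal.ofReal (min (f n x) (g x)) with hCdef
  have hDfin : D ≠ ⊤ :=
    (lt_of_le_of_lt ((setLIntegral_le_lintegral _ _).trans_eq hg1) ENNReal.one_lt_top).ne
  -- dominated convergence in measure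
  have hC : Tendsto C atTop (𝓝 D) := by
    refine tendsto_of_subseq_tendsto fun ns hns => ?_
    have hsub : TendstoInMeasure volume (fun i => f (ns i)) atTop g := fun δ hδ =>
      (hconv δ hδ).comp hns
    obtain ⟨ms, _hms, hae⟩ := hsub.exists_seq_tendsto_ae
    refine ⟨ms, ?_⟩
    refine tendsto_lintegral_of_dominated_convergence (fun x => ENNReal.ofReal (g x))
      (fun k => ENNReal.measurable_ofReal.comp ((hfm _).min hgm)) (fun k => ?_) ?_ ?_
    · filter_upwards with x
      exact ENNReal.ofReal_le_ofReal (min_le_right _ _)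
    · exact ne_top_of_le_ne_top (by rw [hg1]; exact ENNReal.one_ne_top) (setLIntegral_le_lintegral _ _)
    · refine ae_restrict_of_ae (hae.mono fun x hx => ?_)
      have h1 : Tendsto (fun k => min (f (ns (ms k)) x) (g x)) atTop (𝓝 (min (g x) (g x))) :=
        hx.min tendsto_const_nhds
      rw [min_self] at h1
      exact (ENNReal.continuous_ofReal.tendsto _).comp h1
  -- key inequality: 1 < ofReal(ε/4) + D
  have hsplit : (∫⁻ x in {x | R₀ < ‖x‖}, ENNReal.ofReal (g x)) + D = 1 := by
    rw [hD, hs₀, lintegral_add_compl _ (hmeas R₀), hg1]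
  have hkey : (1:ℝ≥0∞) < ENNReal.ofReal (ε/4) + D := by
    calc (1:ℝ≥0∞) = (∫⁻ x in {x | R₀ < ‖x‖}, ENNReal.ofReal (g x)) + D := hsplit.symm
    _ < ENNReal.ofReal (ε/4) + D := ENNReal.add_lt_add_right hDfin hR₀
  have hhalf : ENNReal.ofReal (ε/4) + ENNReal.ofReal (ε/4) = ENNReal.ofReal (ε/2) := by
    rw [← ENNReal.ofReal_add (by linarith) (by linarith)]
    congr 1
    ring
  -- eventually 1 < ofReal(ε/2) + C n
  have hev : ∀ᶠ n in atTop, (1:ℝ≥0∞) < ENNReal.ofReal (ε/2) + C n := by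
    by_cases hDle : D ≤ ENNReal.ofReal (ε/4)
    · filter_upwards with n
      calc (1:ℝ≥0∞) < ENNReal.ofReal (ε/4) + D := hkey
      _ ≤ ENNReal.ofReal (ε/4) + ENNReal.ofReal (ε/4) := add_le_add le_rfl hDle
      _ = ENNReal.ofReal (ε/2) := hhalf
      _ ≤ ENNReal.ofReal (ε/2) + C n := le_self_add
    · push_neg at hDle
      have hDpos : D ≠ 0 := fun h => by simp [h] at hDle
      have hlt : D - ENNReal.ofReal (ε/4) < D :=
        ENNReal.sub_lt_self hDfin hDpos hε4.ne'
      filter_upwards [hC.eventually_const_lt hlt] with n hn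
      have hDdec : ENNReal.ofReal (ε/4) + (D - ENNReal.ofReal (ε/4)) = D := by
        rw [add_comm]; exact tsub_add_cancel_of_le hDle.le
      calc (1:ℝ≥0∞) < ENNReal.ofReal (ε/4) + D := hkey
      _ = ENNReal.ofReal (ε/4) + (ENNReal.ofReal (ε/4) + (D - ENNReal.ofReal (ε/4))) := by
        rw [hDdec]
      _ = ENNReal.ofReal (ε/2) + (D - ENNReal.ofReal (ε/4)) := by rw [← add_assoc, hhalf]
      _ ≤ ENNReal.ofReal (ε/2) + C n := add_le_add le_rfl hn.le
  obtain ⟨N, hN⟩ := eventually_atTop.mp hev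
  -- handle finitely many small indices
  have hεpos : (0:ℝ≥0∞) < ENNReal.ofReal ε := ENNReal.ofReal_pos.mpr hε
  have hr : ∀ n : ℕ, ∃ r > (0:ℝ),
      ∫⁻ x in {x | r < ‖x‖}, ENNReal.ofReal (f n x) < ENNReal.ofReal ε := fun n =>
    tail_small volume (f n) (hfm n) (by rw [hf1 n]; exact ENNReal.one_ne_top) hεpos
  choose r hrpos hrtail using hr
  obtain ⟨M, hM⟩ := Finset.exists_le ((Finset.range N).image r)
  refine ⟨max (max R₀ M) 1, lt_of_lt_of_le one_pos (le_max_right _ _), fun n => ?_⟩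
  set R := max (max R₀ M) 1 with hR
  have hsubset : ∀ r' : ℝ, r' ≤ R → {x : EuclideanSpace ℝ (Fin d) | R < ‖x‖} ⊆ {x | r' < ‖x‖} :=
    fun r' hr' x hx => lt_of_le_of_lt hr' hx
  rcases lt_or_ge n N with hnN | hnN
  · calc ∫⁻ x in {x | R < ‖x‖}, ENNReal.ofReal (f n x)
        ≤ ∫⁻ x in {x | r n < ‖x‖}, ENNReal.ofReal (f n x) := by
          refine lintegral_mono_set (hsubset _ ?_)
          exact le_trans (hM _ (Finset.mem_image_of_mem r (Finset.mem_range.mpr hnN)))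
            (le_max_of_le_left (le_max_right _ _))
    _ < ENNReal.ofReal ε := hrtail n
  · -- large indices
    have hBfin : (∫⁻ x in {x | R < ‖x‖}ᶜ, ENNReal.ofReal (f n x)) ≠ ⊤ :=
      ne_top_of_le_ne_top (by rw [hf1 n]; exact ENNReal.one_ne_top) (setLIntegral_le_lintegral _ _)
    have hsum : (∫⁻ x in {x | R < ‖x‖}, ENNReal.ofReal (f n x)) +
        (∫⁻ x in {x | R < ‖x‖}ᶜ, ENNReal.ofReal (f n x)) = 1 := by
      rw [lintegral_add_compl _ (hmeas R), hf1 n]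
    have hCB : C n ≤ ∫⁻ x in {x | R < ‖x‖}ᶜ, ENNReal.ofReal (f n x) := by
      calc C n ≤ ∫⁻ x in s₀, ENNReal.ofReal (f n x) :=
            lintegral_mono fun x => ENNReal.ofReal_le_ofReal (min_le_left _ _)
      _ ≤ ∫⁻ x in {x | R < ‖x‖}ᶜ, ENNReal.ofReal (f n x) := by
          refine lintegral_mono_set ?_
          rw [hs₀]
          exact Set.compl_subset_compl.mpr
            (hsubset R₀ (le_max_of_le_left (le_max_left _ _)))
    have h1 : (∫⁻ x in {x | R < ‖x‖}, ENNReal.ofReal (f n x)) +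
        (∫⁻ x in {x | R < ‖x‖}ᶜ, ENNReal.ofReal (f n x)) <
        ENNReal.ofReal (ε/2) + (∫⁻ x in {x | R < ‖x‖}ᶜ, ENNReal.ofReal (f n x)) := by
      rw [hsum]
      exact lt_of_lt_of_le (hN n hnN) (add_le_add le_rfl hCB)
    have h2 := (ENNReal.add_lt_add_iff_right hBfin).mp h1
    exact lt_of_lt_of_le h2 (ENNReal.ofReal_le_ofReal (by linarith))
end

section
/- Let f_n, f be pdfs on ℝ^d with f_n → f in Lebesgue measure and with f·log f integrable. If the family g_n = f_n·|log f_n| is uniformly integrable (for every ε > 0 there is M with sup_n ∫_{g_n > M} g_n < ε), has uniformly bounded L¹ norms, and is tight (for every ε > 0 there is R with sup_n ∫_{|x|>R} g_n < ε), then the differential entropies converge: H(f_n) → H(f), where H(f) = −∫ f log f dλ. -/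
/-!
`t ↦ t log t` is continuous, so along a subsequence on which `f n → f` almost everywhere we also
have `f n log f n → f log f` almost everywhere. The hypotheses on `f n |log f n|` say precisely
that the family `f n log f n` is uniformly integrable and uniformly tight, so Vitali's convergence
theorem upgrades this to convergence in `L¹`, and hence of the integrals. Since every subsequence
has such a further subsequence, the whole sequence of entropies converges.
-/

open MeasureTheory Filter Topology

namespace MeasureTheory

variable {ι α β : Type*} [MeasurableSpace α] {μ : Measure α} [NormedAddCommGroup β]

theorem UnifIntegrable.comp_right {p : ENNReal} {F : ι → α → β} (hF : UnifIntegrable F p μ)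
    {κ : Type*} (ns : κ → ι) : UnifIntegrable (F ∘ ns) p μ := fun _ hε =>
  let ⟨δ, hδ, hδ'⟩ := hF hε
  ⟨δ, hδ, fun i => hδ' (ns i)⟩

theorem UnifTight.comp_right {p : ENNReal} {F : ι → α → β} (hF : UnifTight F p μ)
    {κ : Type*} (ns : κ → ι) : UnifTight (F ∘ ns) p μ := fun _ hε =>
  let ⟨s, hμs, hs⟩ := hF hε
  ⟨s, hμs, fun i => hs (ns i)⟩

theorem unifIntegrable_one_of_setLIntegral_norm_gt_le {F : ι → α → β}
    (hF : ∀ i, AEStronglyMeasurable (F i) μ)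
    (h : ∀ ε > (0 : ℝ), ∃ M : ℝ, ∀ i,
      ∫⁻ x in {x | M < ‖F i x‖}, ‖F i x‖ₑ ∂μ ≤ ENNReal.ofReal ε) :
    UnifIntegrable F 1 μ := by
  refine unifIntegrable_of le_rfl ENNReal.one_ne_top hF fun ε hε => ?_
  obtain ⟨M, hM⟩ := h ε hε
  refine ⟨(M + 1).toNNReal, fun i => ?_⟩
  have hsub : {x | (M + 1).toNNReal ≤ ‖F i x‖₊} ⊆ {x | M < ‖F i x‖} := fun x hx =>
    (lt_add_one M).trans_le (Real.toNNReal_le_iff_le_coe.1 hx)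
  rw [eLpNorm_one_eq_lintegral_enorm]
  simp_rw [enorm_indicator_eq_indicator_enorm]
  calc _ ≤ _ := lintegral_indicator_le _ _
    _ ≤ _ := lintegral_mono_set hsub
    _ ≤ _ := hM i

theorem unifTight_one_of_setLIntegral_norm_gt_le {E : Type*} [SeminormedAddCommGroup E]
    [ProperSpace E] [MeasurableSpace E] {μ : Measure E} [IsFiniteMeasureOnCompacts μ]
    {F : ι → E → β}
    (h : ∀ ε > (0 : ℝ), ∃ R : ℝ, ∀ i,
      ∫⁻ x in {x | R < ‖x‖}, ‖F i x‖ₑ ∂μ ≤ ENNReal.ofReal ε) :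
    UnifTight F 1 μ := by
  intro ε hε
  obtain ⟨R, hR⟩ := h ε hε
  refine ⟨Metric.closedBall 0 R, measure_closedBall_lt_top.ne, fun i => ?_⟩
  have hcompl : (Metric.closedBall (0 : E) R)ᶜ = {x | R < ‖x‖} := by
    ext x
    simp
  rw [eLpNorm_one_eq_lintegral_enorm]
  simp_rw [enorm_indicator_eq_indicator_enorm]
  calc _ ≤ _ := lintegral_indicator_le _ _
    _ ≤ _ := by rw [hcompl]; exact hR i
    _ = _ := ENNReal.ofReal_coe_nnreal

theorem tendsto_integral_of_tendsto_eLpNorm_sub [NormedSpace ℝ β] {F : ℕ → α → β} {G : α → β}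
    (hF : ∀ n, AEStronglyMeasurable (F n) μ) (hG : Integrable G μ)
    (hFG : Tendsto (fun n => eLpNorm (F n - G) 1 μ) atTop (𝓝 0)) :
    Tendsto (fun n => ∫ x, F n x ∂μ) atTop (𝓝 (∫ x, G x ∂μ)) := by
  refine tendsto_integral_of_L1' G hG.aestronglyMeasurable ?_ hFG
  filter_upwards [hFG.eventually (gt_mem_nhds ENNReal.zero_lt_top)] with n hn
  have hsub : Integrable (F n - G) μ :=
    memLp_one_iff_integrable.1 ⟨(hF n).sub hG.aestronglyMeasurable, hn⟩
  simpa using hsub.add hG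

theorem tendsto_eLpNorm_comp_sub_of_tendstoInMeasure {X : Type*} [PseudoEMetricSpace X]
    {p : ENNReal} (hp : 1 ≤ p) (hp' : p ≠ ⊤) {φ : X → β} (hφ : Continuous φ)
    {f : ℕ → α → X} {g : α → X} (hfg : TendstoInMeasure μ f atTop g)
    (hf : ∀ n, AEStronglyMeasurable (fun x => φ (f n x)) μ) (hg : MemLp (fun x => φ (g x)) p μ)
    (hui : UnifIntegrable (fun n x => φ (f n x)) p μ)
    (hut : UnifTight (fun n x => φ (f n x)) p μ) :
    Tendsto (fun n => eLpNorm ((fun x => φ (f n x)) - fun x => φ (g x)) p μ) atTop (𝓝 0) := by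
  refine tendsto_of_subseq_tendsto fun ns hns => ?_
  obtain ⟨ms, -, hae⟩ :=
    TendstoInMeasure.exists_seq_tendsto_ae fun ε hε => (hfg ε hε).comp hns
  refine ⟨ms, tendsto_Lp_of_tendsto_ae hp hp' (fun _ => hf _) hg
    (hui.comp_right (ns ∘ ms)) (hut.comp_right (ns ∘ ms)) ?_⟩
  filter_upwards [hae] with x hx
  exact (hφ.tendsto (g x)).comp hx

end MeasureTheory

theorem entropy_stmt3_general (d : ℕ) (f : ℕ → EuclideanSpace ℝ (Fin d) → ℝ)
    (g : EuclideanSpace ℝ (Fin d) → ℝ)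
    (hfm : ∀ n, Measurable (f n)) (hf0 : ∀ n x, 0 ≤ f n x)
    (hconv : TendstoInMeasure volume f atTop g)
    (hglog : Integrable (fun x => g x * Real.log (g x)))
    (hUI : ∀ ε > (0:ℝ), ∃ M > (0:ℝ), ∀ n,
      ∫⁻ x in {x | M < f n x * |Real.log (f n x)|},
        ENNReal.ofReal (f n x * |Real.log (f n x)|) < ENNReal.ofReal ε)
    (hTight : ∀ ε > (0:ℝ), ∃ R > (0:ℝ), ∀ n,
      ∫⁻ x in {x | R < ‖x‖},
        ENNReal.ofReal (f n x * |Real.log (f n x)|) < ENNReal.ofReal ε) :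
    Tendsto (fun n => -∫ x, f n x * Real.log (f n x)) atTop
      (nhds (-∫ x, g x * Real.log (g x))) := by
  have hnorm n x : ‖f n x * Real.log (f n x)‖ = f n x * |Real.log (f n x)| := by
    rw [norm_mul, Real.norm_of_nonneg (hf0 n x), Real.norm_eq_abs]
  simp_rw [← hnorm, ofReal_norm] at hUI hTight
  have hmeas n : AEStronglyMeasurable (fun x => f n x * Real.log (f n x)) :=
    ((hfm n).mul (hfm n).log).aestronglyMeasurable
  have hui : UnifIntegrable (fun n x => f n x * Real.log (f n x)) 1 volume :=
    unifIntegrable_one_of_setLIntegral_norm_gt_le hmeas fun ε hε =>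
      let ⟨M, _, hM⟩ := hUI ε hε
      ⟨M, fun n => (hM n).le⟩
  have hut : UnifTight (fun n x => f n x * Real.log (f n x)) 1 volume :=
    unifTight_one_of_setLIntegral_norm_gt_le fun ε hε =>
      let ⟨R, _, hR⟩ := hTight ε hε
      ⟨R, fun n => (hR n).le⟩
  exact (tendsto_integral_of_tendsto_eLpNorm_sub hmeas hglog
    (tendsto_eLpNorm_comp_sub_of_tendstoInMeasure le_rfl ENNReal.one_ne_top
      Real.continuous_mul_log hconv hmeas (memLp_one_iff_integrable.2 hglog) hui hut)).neg

theorem entropy_stmt3 (d : ℕ) (f : ℕ → EuclideanSpace ℝ (Fin d) → ℝ)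
    (g : EuclideanSpace ℝ (Fin d) → ℝ)
    (hfm : ∀ n, Measurable (f n)) (hf0 : ∀ n x, 0 ≤ f n x)
    (hf1 : ∀ n, ∫⁻ x, ENNReal.ofReal (f n x) = 1)
    (hgm : Measurable g) (hg0 : ∀ x, 0 ≤ g x)
    (hg1 : ∫⁻ x, ENNReal.ofReal (g x) = 1)
    (hconv : TendstoInMeasure volume f atTop g)
    (hglog : Integrable (fun x => g x * Real.log (g x)))
    (hUI : ∀ ε > (0:ℝ), ∃ M > (0:ℝ), ∀ n,
      ∫⁻ x in {x | M < f n x * |Real.log (f n x)|},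
        ENNReal.ofReal (f n x * |Real.log (f n x)|) < ENNReal.ofReal ε)
    (hL1 : ∃ B : ℝ, ∀ n,
      ∫⁻ x, ENNReal.ofReal (f n x * |Real.log (f n x)|) ≤ ENNReal.ofReal B)
    (hTight : ∀ ε > (0:ℝ), ∃ R > (0:ℝ), ∀ n,
      ∫⁻ x in {x | R < ‖x‖},
        ENNReal.ofReal (f n x * |Real.log (f n x)|) < ENNReal.ofReal ε) :
    Tendsto (fun n => -∫ x, f n x * Real.log (f n x)) atTop
      (nhds (-∫ x, g x * Real.log (g x))) :=
  entropy_stmt3_general d f g hfm hf0 hconv hglog hUI hTight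
end

section
/- Let Ω ⊂ ℝ^d be a bounded measurable set and f_n, f pdfs supported on Ω with f_n → f in Lebesgue measure and f·log f integrable. Then H(f_n) → H(f) if and only if the family {f_n·|log f_n|} is uniformly integrable. -/
open MeasureTheory Filter Topology

lemma my_mul_log_lower (t : ℝ) (ht : 0 ≤ t) : -Real.exp (-1) ≤ t * Real.log t := by
  rcases eq_or_lt_of_le ht with h | h
  · rw [← h]
    simpa using (Real.exp_pos (-1)).le
  rcases le_or_gt 1 t with h1 | h1
  · nlinarith [Real.mul_log_nonneg h1, Real.exp_pos (-1)]
  · have hl : Real.log t < 0 := Real.log_neg h h1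
    have hu0 : 0 < -Real.log t := by linarith
    have ht' : t = Real.exp (-(-Real.log t)) := by
      rw [neg_neg]; exact (Real.exp_log h).symm
    have key : (-Real.log t) * Real.exp (-(-Real.log t)) ≤ Real.exp (-1) := by
      have h2 : Real.log (-Real.log t) ≤ (-Real.log t) - 1 :=
        Real.log_le_sub_one_of_pos hu0
      calc (-Real.log t) * Real.exp (-(-Real.log t))
          = Real.exp (Real.log (-Real.log t) + -(-Real.log t)) := by
            rw [Real.exp_add, Real.exp_log hu0]
        _ ≤ Real.exp (-1) := Real.exp_le_exp.2 (by linarith)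
    have hrw : t * Real.log t = -((-Real.log t) * Real.exp (-(-Real.log t))) := by
      rw [← ht']; ring
    rw [hrw]
    linarith

lemma my_tendstoInMeasure_comp {α : Type*} [MeasurableSpace α] {μ : Measure α}
    [IsFiniteMeasure μ] {f : ℕ → α → ℝ} {g : α → ℝ}
    (hf : ∀ n, Measurable (f n)) (h : TendstoInMeasure μ f atTop g)
    {φ : ℝ → ℝ} (hφ : Continuous φ) :
    TendstoInMeasure μ (fun n x => φ (f n x)) atTop (fun x => φ (g x)) := by
  intro ε hε
  refine tendsto_of_subseq_tendsto fun ns hns => ?_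
  have h' : TendstoInMeasure μ (fun k => f (ns k)) atTop g := fun δ hδ => (h δ hδ).comp hns
  obtain ⟨ms, _, hae⟩ := h'.exists_seq_tendsto_ae
  have hae' : ∀ᵐ x ∂μ, Tendsto (fun k => φ (f (ns (ms k)) x)) atTop (𝓝 (φ (g x))) :=
    hae.mono fun x hx => (hφ.tendsto _).comp hx
  have := tendstoInMeasure_of_tendsto_ae
    (fun k => (hφ.measurable.comp (hf (ns (ms k)))).aestronglyMeasurable) hae'
  exact ⟨ms, this ε hε⟩

lemma my_scheffe_ae {α : Type*} [MeasurableSpace α] {μ : Measure α} [IsFiniteMeasure μ]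
    {F : ℕ → α → ℝ} {G : α → ℝ}
    (hFi : ∀ n, Integrable (F n) μ) (hGi : Integrable G μ)
    (hF0 : ∀ n x, 0 ≤ F n x) (hG0 : ∀ x, 0 ≤ G x)
    (hae : ∀ᵐ x ∂μ, Tendsto (fun n => F n x) atTop (𝓝 (G x)))
    (hint : Tendsto (fun n => ∫ x, F n x ∂μ) atTop (𝓝 (∫ x, G x ∂μ))) :
    Tendsto (fun n => ∫ x, |F n x - G x| ∂μ) atTop (𝓝 0) := by
  have hmin : ∀ n, Integrable (fun x => min (F n x) (G x)) μ := fun n => by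
    have := (hFi n).inf hGi
    exact this
  have hmin_t : Tendsto (fun n => ∫ x, min (F n x) (G x) ∂μ) atTop (𝓝 (∫ x, G x ∂μ)) := by
    refine tendsto_integral_of_dominated_convergence G (fun n => (hmin n).1) hGi ?_ ?_
    · intro n
      refine Eventually.of_forall fun x => ?_
      rw [Real.norm_eq_abs, abs_of_nonneg (le_min (hF0 n x) (hG0 x))]
      exact min_le_right _ _
    · refine hae.mono fun x hx => ?_
      have := hx.min (tendsto_const_nhds : Tendsto (fun _ : ℕ => G x) atTop (𝓝 (G x)))
      simpa [min_self] using this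
  have key : ∀ n, ∫ x, |F n x - G x| ∂μ =
      (∫ x, F n x ∂μ) + (∫ x, G x ∂μ) - 2 * ∫ x, min (F n x) (G x) ∂μ := by
    intro n
    have h1 : ∀ x, |F n x - G x| = F n x + G x - 2 * min (F n x) (G x) := by
      intro x; rcases le_total (F n x) (G x) with h | h
      · rw [abs_of_nonpos (by linarith), min_eq_left h]; ring
      · rw [abs_of_nonneg (by linarith), min_eq_right h]; ring
    have h2 : ∫ x, |F n x - G x| ∂μ
        = ∫ x, (F n x + G x - 2 * min (F n x) (G x)) ∂μ :=
      integral_congr_ae (Eventually.of_forall fun x => h1 x)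
    have ha : Integrable (fun x => F n x + G x) μ := (hFi n).add hGi
    have hb : Integrable (fun x => 2 * min (F n x) (G x)) μ := (hmin n).const_mul 2
    rw [h2, integral_sub ha hb, integral_add (hFi n) hGi, integral_const_mul]
  have hfin : Tendsto (fun n => (∫ x, F n x ∂μ) + (∫ x, G x ∂μ)
      - 2 * ∫ x, min (F n x) (G x) ∂μ) atTop (𝓝 0) := by
    have := (hint.add (tendsto_const_nhds : Tendsto (fun _ : ℕ => ∫ x, G x ∂μ) atTop _)).sub
      (hmin_t.const_mul 2)
    simpa [two_mul] using this
  exact hfin.congr fun n => (key n).symm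

lemma my_scheffe {α : Type*} [MeasurableSpace α] {μ : Measure α} [IsFiniteMeasure μ]
    {F : ℕ → α → ℝ} {G : α → ℝ}
    (hFi : ∀ n, Integrable (F n) μ) (hGi : Integrable G μ)
    (hF0 : ∀ n x, 0 ≤ F n x) (hG0 : ∀ x, 0 ≤ G x)
    (hm : TendstoInMeasure μ F atTop G)
    (hint : Tendsto (fun n => ∫ x, F n x ∂μ) atTop (𝓝 (∫ x, G x ∂μ))) :
    Tendsto (fun n => ∫ x, |F n x - G x| ∂μ) atTop (𝓝 0) := by
  refine tendsto_of_subseq_tendsto fun ns hns => ?_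
  have h' : TendstoInMeasure μ (fun k => F (ns k)) atTop G := fun δ hδ => (hm δ hδ).comp hns
  obtain ⟨ms, hms, hae⟩ := h'.exists_seq_tendsto_ae
  exact ⟨ms, my_scheffe_ae (fun k => hFi _) hGi (fun k x => hF0 _ x) hG0 hae
    (hint.comp (hns.comp hms.tendsto_atTop))⟩
set_option maxHeartbeats 1000000 in
theorem entropy_stmt5 (d : ℕ) (Ω : Set (EuclideanSpace ℝ (Fin d)))
    (hΩb : Bornology.IsBounded Ω) (hΩm : MeasurableSet Ω)
    (f : ℕ → EuclideanSpace ℝ (Fin d) → ℝ)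
    (g : EuclideanSpace ℝ (Fin d) → ℝ)
    (hfm : ∀ n, Measurable (f n)) (hf0 : ∀ n x, 0 ≤ f n x)
    (hfsupp : ∀ n, ∀ x ∉ Ω, f n x = 0)
    (hf1 : ∀ n, ∫⁻ x in Ω, ENNReal.ofReal (f n x) = 1)
    (hgm : Measurable g) (hg0 : ∀ x, 0 ≤ g x)
    (hgsupp : ∀ x ∉ Ω, g x = 0)
    (hg1 : ∫⁻ x in Ω, ENNReal.ofReal (g x) = 1)
    (hconv : TendstoInMeasure (volume.restrict Ω) f atTop g)
    (hglog : Integrable (fun x => g x * Real.log (g x)) (volume.restrict Ω))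
    (hflog : ∀ n, Integrable (fun x => f n x * Real.log (f n x)) (volume.restrict Ω)) :
    Tendsto (fun n => -∫ x in Ω, f n x * Real.log (f n x)) atTop
        (nhds (-∫ x in Ω, g x * Real.log (g x))) ↔
      ((∃ B : ℝ, ∀ n,
          ∫⁻ x in Ω, ENNReal.ofReal (f n x * |Real.log (f n x)|) ≤ ENNReal.ofReal B) ∧
       (∀ ε > (0:ℝ), ∃ M > (0:ℝ), ∀ n,
          ∫⁻ x in Ω ∩ {x | M < f n x * |Real.log (f n x)|},
            ENNReal.ofReal (f n x * |Real.log (f n x)|) < ENNReal.ofReal ε)) := by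
  haveI : IsFiniteMeasure (volume.restrict Ω) :=
    ⟨by rw [Measure.restrict_apply_univ]; exact hΩb.measure_lt_top⟩
  -- abbreviations
  have hhm : ∀ n, Measurable (fun x => f n x * Real.log (f n x)) := fun n =>
    (hfm n).mul (Real.measurable_log.comp (hfm n))
  have hHm : Measurable (fun x => g x * Real.log (g x)) :=
    hgm.mul (Real.measurable_log.comp hgm)
  have hconv_h : TendstoInMeasure (volume.restrict Ω)
      (fun n x => f n x * Real.log (f n x)) atTop (fun x => g x * Real.log (g x)) :=
    my_tendstoInMeasure_comp (φ := fun t => t * Real.log t) hfm hconv Real.continuous_mul_log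
  have habs : ∀ n (x : EuclideanSpace ℝ (Fin d)),
      ENNReal.ofReal (f n x * |Real.log (f n x)|)
        = (‖f n x * Real.log (f n x)‖₊ : ENNReal) := by
    intro n x
    rw [← enorm_eq_nnnorm, Real.enorm_eq_ofReal_abs, abs_mul, abs_of_nonneg (hf0 n x)]
  have hlint : ∀ n, (∫⁻ x in Ω, ENNReal.ofReal (f n x * |Real.log (f n x)|))
      = eLpNorm (fun x => f n x * Real.log (f n x)) 1 (volume.restrict Ω) := fun n => by
    rw [eLpNorm_one_eq_lintegral_enorm]
    exact lintegral_congr fun x => habs n x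
  have hSmeas : ∀ n (M : ℝ), MeasurableSet {x | M < f n x * |Real.log (f n x)|} :=
    fun n M => measurableSet_lt measurable_const
      ((hfm n).mul ((Real.measurable_log.comp (hfm n)).abs))
  have hsetint : ∀ n (M : ℝ),
      (∫⁻ x in Ω ∩ {x | M < f n x * |Real.log (f n x)|},
          ENNReal.ofReal (f n x * |Real.log (f n x)|))
        = ∫⁻ x in {x | M < f n x * |Real.log (f n x)|},
            (‖f n x * Real.log (f n x)‖₊ : ENNReal) ∂(volume.restrict Ω) := by
    intro n M
    rw [Set.inter_comm, ← Measure.restrict_restrict (hSmeas n M)]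
    exact lintegral_congr fun x => habs n x
  have hTmeas : ∀ n (C : NNReal),
      MeasurableSet {x | C ≤ ‖f n x * Real.log (f n x)‖₊} :=
    fun n C => measurableSet_le measurable_const ((hhm n).nnnorm)
  have hindic : ∀ n (C : NNReal),
      eLpNorm ({x | C ≤ ‖f n x * Real.log (f n x)‖₊}.indicator
          (fun x => f n x * Real.log (f n x))) 1 (volume.restrict Ω)
        = ∫⁻ x in {x | C ≤ ‖f n x * Real.log (f n x)‖₊},
            (‖f n x * Real.log (f n x)‖₊ : ENNReal) ∂(volume.restrict Ω) := by
    intro n C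
    rw [eLpNorm_indicator_eq_eLpNorm_restrict (hTmeas n C),
      eLpNorm_one_eq_lintegral_enorm]
    rfl
  constructor
  · intro hL
    have hI : Tendsto (fun n => ∫ x in Ω, f n x * Real.log (f n x)) atTop
        (𝓝 (∫ x in Ω, g x * Real.log (g x))) := by
      have := hL.neg
      simpa using this
    -- Scheffé
    have hF0 : ∀ n x, 0 ≤ f n x * Real.log (f n x) + Real.exp (-1) := fun n x => by
      have := my_mul_log_lower (f n x) (hf0 n x); linarith
    have hG0 : ∀ x, 0 ≤ g x * Real.log (g x) + Real.exp (-1) := fun x => by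
      have := my_mul_log_lower (g x) (hg0 x); linarith
    have hFi : ∀ n, Integrable (fun x => f n x * Real.log (f n x) + Real.exp (-1))
        (volume.restrict Ω) := fun n => (hflog n).add (integrable_const _)
    have hGi : Integrable (fun x => g x * Real.log (g x) + Real.exp (-1))
        (volume.restrict Ω) := hglog.add (integrable_const _)
    have hm : TendstoInMeasure (volume.restrict Ω)
        (fun n x => f n x * Real.log (f n x) + Real.exp (-1)) atTop
        (fun x => g x * Real.log (g x) + Real.exp (-1)) := by
      intro ε hε
      have := hconv_h ε hε
      simpa only [edist_dist, dist_add_right] using this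
    have hint : Tendsto (fun n => ∫ x in Ω, (f n x * Real.log (f n x) + Real.exp (-1)))
        atTop (𝓝 (∫ x in Ω, (g x * Real.log (g x) + Real.exp (-1)))) := by
      have h2 := hI.add (tendsto_const_nhds :
        Tendsto (fun _ : ℕ => ∫ _x in Ω, (Real.exp (-1) : ℝ)) atTop _)
      rw [← integral_add hglog (integrable_const _)] at h2
      exact h2.congr fun n => (integral_add (hflog n) (integrable_const _)).symm
    have hSch := my_scheffe hFi hGi hF0 hG0 hm hint
    have hL1 : Tendsto (fun n => ∫ x in Ω,
        |f n x * Real.log (f n x) - g x * Real.log (g x)|) atTop (𝓝 0) := by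
      simpa only [add_sub_add_right_eq_sub] using hSch
    have hT : Tendsto (fun n => eLpNorm
        (fun x => f n x * Real.log (f n x) - g x * Real.log (g x)) 1 (volume.restrict Ω))
        atTop (𝓝 0) := by
      have h3 := ENNReal.tendsto_ofReal hL1
      rw [ENNReal.ofReal_zero] at h3
      refine Tendsto.congr (fun n => ?_) h3
      have hsubint : Integrable (fun x => f n x * Real.log (f n x) - g x * Real.log (g x))
          (volume.restrict Ω) := (hflog n).sub hglog
      rw [eLpNorm_one_eq_lintegral_enorm,
        ← ofReal_integral_norm_eq_lintegral_enorm hsubint]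
      simp only [Real.norm_eq_abs]
    have hmem : ∀ n, MemLp (fun x => f n x * Real.log (f n x)) 1 (volume.restrict Ω) :=
      fun n => memLp_one_iff_integrable.2 (hflog n)
    have hmemG : MemLp (fun x => g x * Real.log (g x)) 1 (volume.restrict Ω) :=
      memLp_one_iff_integrable.2 hglog
    have hunif : UnifIntegrable (fun n x => f n x * Real.log (f n x)) 1 (volume.restrict Ω) :=
      unifIntegrable_of_tendsto_Lp le_rfl ENNReal.one_ne_top hmem hmemG hT
    -- uniform bound
    obtain ⟨N, hN⟩ := ENNReal.tendsto_atTop_zero.1 hT 1 zero_lt_one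
    set K := ((Finset.range (N+1)).sup
        (fun n => eLpNorm (fun x => f n x * Real.log (f n x)) 1 (volume.restrict Ω)))
        ⊔ (1 + eLpNorm (fun x => g x * Real.log (g x)) 1 (volume.restrict Ω)) with hKdef
    have hKfin : K ≠ ⊤ := by
      rw [hKdef]
      have h1 : ((Finset.range (N+1)).sup
          (fun n => eLpNorm (fun x => f n x * Real.log (f n x)) 1 (volume.restrict Ω))) < ⊤ :=
        (Finset.sup_lt_iff (by simp : (⊥ : ENNReal) < ⊤)).2 fun n _ => (hmem n).2
      have h2 : 1 + eLpNorm (fun x => g x * Real.log (g x)) 1 (volume.restrict Ω) < ⊤ :=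
        ENNReal.add_lt_top.2 ⟨ENNReal.one_lt_top, hmemG.2⟩
      exact (sup_lt_iff.2 ⟨h1, h2⟩).ne
    have hKb : ∀ n, eLpNorm (fun x => f n x * Real.log (f n x)) 1 (volume.restrict Ω) ≤ K := by
      intro n
      rcases le_or_gt n N with hn | hn
      · exact le_sup_of_le_left (Finset.le_sup (f := fun n => eLpNorm (fun x => f n x * Real.log (f n x)) 1 (volume.restrict Ω)) (Finset.mem_range.2 (Nat.lt_succ_of_le hn)))
      · refine le_sup_of_le_right ?_
        have htri : eLpNorm (fun x => f n x * Real.log (f n x)) 1 (volume.restrict Ω)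
            ≤ eLpNorm (fun x => f n x * Real.log (f n x) - g x * Real.log (g x)) 1
                (volume.restrict Ω)
              + eLpNorm (fun x => g x * Real.log (g x)) 1 (volume.restrict Ω) := by
          have := eLpNorm_add_le (((hflog n).sub hglog).aestronglyMeasurable)
            hglog.aestronglyMeasurable (le_refl (1 : ENNReal))
          simpa [Pi.sub_def, Pi.add_def] using this
        exact htri.trans (add_le_add_left (hN n hn.le) _)
    have hUI : UniformIntegrable (fun n x => f n x * Real.log (f n x)) 1
        (volume.restrict Ω) := by
      refine ⟨fun n => (hhm n).aestronglyMeasurable, hunif, K.toNNReal, fun n => ?_⟩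
      rw [ENNReal.coe_toNNReal hKfin]
      exact hKb n
    refine ⟨⟨K.toReal, fun n => ?_⟩, ?_⟩
    · rw [hlint n, ENNReal.ofReal_toReal hKfin]
      exact hKb n
    · intro ε hε
      obtain ⟨C, hC⟩ := ((uniformIntegrable_iff le_rfl ENNReal.one_ne_top).1 hUI).2
        (ε/2) (half_pos hε)
      refine ⟨(C : ℝ) + 1, by positivity, fun n => ?_⟩
      have hsub : {x | (C : ℝ) + 1 < f n x * |Real.log (f n x)|}
          ⊆ {x | C ≤ ‖f n x * Real.log (f n x)‖₊} := by
        intro x hx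
        rw [Set.mem_setOf_eq] at hx ⊢
        rw [← NNReal.coe_le_coe, coe_nnnorm, Real.norm_eq_abs, abs_mul,
          abs_of_nonneg (hf0 n x)]
        linarith
      calc ∫⁻ x in Ω ∩ {x | (C : ℝ) + 1 < f n x * |Real.log (f n x)|},
            ENNReal.ofReal (f n x * |Real.log (f n x)|)
          = ∫⁻ x in {x | (C : ℝ) + 1 < f n x * |Real.log (f n x)|},
              (‖f n x * Real.log (f n x)‖₊ : ENNReal) ∂(volume.restrict Ω) :=
            hsetint n _
        _ ≤ ∫⁻ x in {x | C ≤ ‖f n x * Real.log (f n x)‖₊},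
              (‖f n x * Real.log (f n x)‖₊ : ENNReal) ∂(volume.restrict Ω) :=
            lintegral_mono_set hsub
        _ = eLpNorm ({x | C ≤ ‖f n x * Real.log (f n x)‖₊}.indicator
              (fun x => f n x * Real.log (f n x))) 1 (volume.restrict Ω) :=
            (hindic n C).symm
        _ ≤ ENNReal.ofReal (ε/2) := hC n
        _ < ENNReal.ofReal ε :=
            (ENNReal.ofReal_lt_ofReal_iff hε).2 (half_lt_self hε)
  · rintro ⟨-, hUIc⟩
    have hUI : UniformIntegrable (fun n x => f n x * Real.log (f n x)) 1
        (volume.restrict Ω) := by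
      refine uniformIntegrable_of le_rfl ENNReal.one_ne_top
        (fun n => (hhm n).aestronglyMeasurable) ?_
      intro ε hε
      obtain ⟨M, hM0, hM⟩ := hUIc ε hε
      refine ⟨⟨M, hM0.le⟩ + 1, fun n => ?_⟩
      have hsub : {x | (⟨M, hM0.le⟩ + 1 : NNReal) ≤ ‖f n x * Real.log (f n x)‖₊}
          ⊆ {x | M < f n x * |Real.log (f n x)|} := by
        intro x hx
        rw [Set.mem_setOf_eq, ← NNReal.coe_le_coe, coe_nnnorm, Real.norm_eq_abs,
          abs_mul, abs_of_nonneg (hf0 n x)] at hx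
        rw [Set.mem_setOf_eq]
        have hx' : M + 1 ≤ f n x * |Real.log (f n x)| := hx
        linarith
      calc eLpNorm ({x | (⟨M, hM0.le⟩ + 1 : NNReal) ≤ ‖f n x * Real.log (f n x)‖₊}.indicator
            (fun x => f n x * Real.log (f n x))) 1 (volume.restrict Ω)
          = ∫⁻ x in {x | (⟨M, hM0.le⟩ + 1 : NNReal) ≤ ‖f n x * Real.log (f n x)‖₊},
              (‖f n x * Real.log (f n x)‖₊ : ENNReal) ∂(volume.restrict Ω) :=
            hindic n _
        _ ≤ ∫⁻ x in {x | M < f n x * |Real.log (f n x)|},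
              (‖f n x * Real.log (f n x)‖₊ : ENNReal) ∂(volume.restrict Ω) :=
            lintegral_mono_set hsub
        _ = ∫⁻ x in Ω ∩ {x | M < f n x * |Real.log (f n x)|},
              ENNReal.ofReal (f n x * |Real.log (f n x)|) := (hsetint n M).symm
        _ ≤ ENNReal.ofReal ε := (hM n).le
    have hT := tendsto_Lp_finite_of_tendstoInMeasure le_rfl ENNReal.one_ne_top
      (fun n => (hhm n).aestronglyMeasurable) (memLp_one_iff_integrable.2 hglog)
      hUI.2.1 hconv_h
    have hI := tendsto_integral_of_L1' (fun x => g x * Real.log (g x)) hglog.aestronglyMeasurable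
      (Eventually.of_forall hflog) hT
    exact hI.neg
end

section
/- Let f_n, f be pdfs on ℝ^d with f_n → f in Lebesgue measure and H(f) finite. Suppose there exists a convex nondecreasing Ψ : [0,∞) → [0,∞) with Ψ(0) = 0 and Ψ(t)/t → ∞ as t → ∞, such that sup_n ∫ f_n(x)·Ψ(|log f_n(x)|) dx < ∞. Then each H(f_n) is finite and H(f_n) → H(f). -/
open MeasureTheory Filter Topology

/-- Pointwise identity: `|a - b| = (a - b) + 2 * max (b - a) 0`. -/
lemma abs_sub_eq_add_two_max (a b : ℝ) : |a - b| = (a - b) + 2 * max (b - a) 0 := by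
  rcases le_total b a with h | h
  · rw [abs_of_nonneg (by linarith), max_eq_right (by linarith)]; ring
  · rw [abs_of_nonpos (by linarith), max_eq_left (by linarith)]; ring

/-- Scheffé's lemma, a.e. version. -/
lemma scheffe_ae {α : Type*} [MeasurableSpace α] {μ : Measure α} {F : ℕ → α → ℝ} {G : α → ℝ}
    (hFi : ∀ n, Integrable (F n) μ) (hGi : Integrable G μ)
    (hF0 : ∀ n x, 0 ≤ F n x) (hG0 : ∀ x, 0 ≤ G x)
    (heq : ∀ n, ∫ x, F n x ∂μ = ∫ x, G x ∂μ)
    (hae : ∀ᵐ x ∂μ, Tendsto (fun n => F n x) atTop (𝓝 (G x))) :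
    Tendsto (fun n => ∫ x, |F n x - G x| ∂μ) atTop (𝓝 0) := by
  have hpos : ∀ n, Integrable (fun x => max (G x - F n x) 0) μ :=
    fun n => (hGi.sub (hFi n)).pos_part
  have key : ∀ n, ∫ x, |F n x - G x| ∂μ = 2 * ∫ x, max (G x - F n x) 0 ∂μ := by
    intro n
    have : ∫ x, |F n x - G x| ∂μ
        = ∫ x, (F n x - G x) + 2 * max (G x - F n x) 0 ∂μ := by
      exact integral_congr_ae (Filter.Eventually.of_forall fun x => abs_sub_eq_add_two_max _ _)
    have hadd := integral_add (μ := μ) (f := fun x => F n x - G x)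
      (g := fun x => 2 * max (G x - F n x) 0) ((hFi n).sub hGi) ((hpos n).const_mul 2)
    rw [this, hadd, integral_sub (hFi n) hGi, heq n, sub_self, zero_add, integral_const_mul]
  have htail : Tendsto (fun n => ∫ x, max (G x - F n x) 0 ∂μ) atTop (𝓝 0) := by
    have ht := tendsto_integral_of_dominated_convergence (μ := μ)
      (F := fun n x => max (G x - F n x) 0) (f := fun _ => (0 : ℝ)) (bound := fun x => |G x|)
      (fun n => (hpos n).aestronglyMeasurable) hGi.abs ?_ ?_
    · simpa using ht
    · intro n
      refine Filter.Eventually.of_forall fun x => ?_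
      have h1 : max (G x - F n x) 0 ≤ |G x| := by
        have : G x - F n x ≤ |G x| := by
          have := hF0 n x; have := abs_nonneg (G x); have := le_abs_self (G x); linarith
        exact max_le this (abs_nonneg _)
      rw [Real.norm_eq_abs, abs_of_nonneg (le_max_right _ _)]
      exact h1
    · filter_upwards [hae] with x hx
      have : Tendsto (fun n => max (G x - F n x) 0) atTop (𝓝 (max (G x - G x) 0)) :=
        ((tendsto_const_nhds.sub hx).max tendsto_const_nhds)
      simpa using this
  have := htail.const_mul 2
  simp only [mul_zero] at this
  exact this.congr fun n => (key n).symm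

/-- The clamp function is bounded by `M`. -/
lemma abs_clamp_le (M s : ℝ) (hM : 0 ≤ M) : |max (-M) (min M s)| ≤ M := by
  rw [abs_le]
  constructor
  · exact le_max_left _ _
  · exact max_le (by linarith) (min_le_left _ _)

/-- The clamp function is 1-Lipschitz. -/
lemma abs_clamp_sub_clamp_le (M s t : ℝ) :
    |max (-M) (min M s) - max (-M) (min M t)| ≤ |s - t| := by
  have h1 : |max (min M s) (-M) - max (min M t) (-M)| ≤ |min M s - min M t| :=
    abs_max_sub_max_le_abs _ _ _
  have h2 : |min M s - min M t| ≤ max |M - M| |s - t| := abs_min_sub_min_le_max _ _ _ _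
  rw [max_comm (-M) (min M s), max_comm (-M) (min M t)]
  simp only [sub_self, abs_zero] at h2
  calc |max (min M s) (-M) - max (min M t) (-M)| ≤ |min M s - min M t| := h1
    _ ≤ max 0 |s - t| := h2
    _ = |s - t| := max_eq_right (abs_nonneg _)

/-- Lipschitz bound for the clamped-log map `t ↦ t * clamp(log t)`, ordered version. -/
lemma trunc_lip_le (M a b : ℝ) (hM : 0 ≤ M) (ha : 0 ≤ a) (hab : a ≤ b) :
    |b * max (-M) (min M (Real.log b)) - a * max (-M) (min M (Real.log a))|
      ≤ (M + 1) * (b - a) := by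
  set cb := max (-M) (min M (Real.log b)) with hcb_def
  set ca := max (-M) (min M (Real.log a)) with hca_def
  have hcb : |cb| ≤ M := abs_clamp_le M _ hM
  have hca : |ca| ≤ M := abs_clamp_le M _ hM
  rcases eq_or_lt_of_le ha with h0 | hapos
  · have hb0 : (0:ℝ) ≤ b := h0 ▸ hab
    rw [← h0, zero_mul, sub_zero, abs_mul]
    have h1 : |b| * |cb| ≤ b * M := by
      rw [abs_of_nonneg hb0]
      exact mul_le_mul_of_nonneg_left hcb hb0
    refine h1.trans ?_
    nlinarith
  · have hbpos : 0 < b := lt_of_lt_of_le hapos hab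
    have key : b * cb - a * ca = (b - a) * cb + a * (cb - ca) := by ring
    have hlip : |cb - ca| ≤ Real.log b - Real.log a := by
      have h1 : |cb - ca| ≤ |Real.log b - Real.log a| := abs_clamp_sub_clamp_le _ _ _
      rwa [abs_of_nonneg (sub_nonneg.2 (Real.log_le_log hapos hab))] at h1
    have hlog : Real.log b - Real.log a ≤ b / a - 1 := by
      rw [← Real.log_div (ne_of_gt hbpos) (ne_of_gt hapos)]
      exact Real.log_le_sub_one_of_pos (div_pos hbpos hapos)
    have h2 : a * |cb - ca| ≤ b - a := by
      have := mul_le_mul_of_nonneg_left (hlip.trans hlog) hapos.le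
      calc a * |cb - ca| ≤ a * (b / a - 1) := this
        _ = b - a := by field_simp
    calc |b * cb - a * ca| = |(b - a) * cb + a * (cb - ca)| := by rw [key]
      _ ≤ |(b - a) * cb| + |a * (cb - ca)| := abs_add_le _ _
      _ = (b - a) * |cb| + a * |cb - ca| := by
          rw [abs_mul, abs_mul, abs_of_nonneg (sub_nonneg.2 hab), abs_of_nonneg hapos.le]
      _ ≤ (b - a) * M + (b - a) :=
          add_le_add (mul_le_mul_of_nonneg_left hcb (sub_nonneg.2 hab)) h2
      _ = (M + 1) * (b - a) := by ring

/-- Lipschitz bound for the clamped-log map, general version. -/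
lemma trunc_lip (M a b : ℝ) (hM : 0 ≤ M) (ha : 0 ≤ a) (hb : 0 ≤ b) :
    |b * max (-M) (min M (Real.log b)) - a * max (-M) (min M (Real.log a))|
      ≤ (M + 1) * |b - a| := by
  rcases le_total a b with hab | hab
  · rw [abs_of_nonneg (sub_nonneg.2 hab)]; exact trunc_lip_le M a b hM ha hab
  · rw [abs_sub_comm,
      show |b - a| = a - b from by rw [abs_sub_comm]; exact abs_of_nonneg (sub_nonneg.2 hab)]
    exact trunc_lip_le M b a hM hb hab

/-- Convexity slope bound. -/
lemma convex_slope {Ψ : ℝ → ℝ} (hconv : ConvexOn ℝ (Set.Ici 0) Ψ) (hΨ0 : Ψ 0 = 0)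
    {M s : ℝ} (hM : 0 < M) (hs : M ≤ s) : Ψ M / M * s ≤ Ψ s := by
  have hs0 : 0 < s := hM.trans_le hs
  have hmem0 : (0 : ℝ) ∈ Set.Ici (0:ℝ) := Set.mem_Ici.2 le_rfl
  have hmems : s ∈ Set.Ici (0:ℝ) := Set.mem_Ici.2 hs0.le
  have ha : (0:ℝ) ≤ 1 - M / s := by
    have : M / s ≤ 1 := (div_le_one hs0).2 hs
    linarith
  have hb : (0:ℝ) ≤ M / s := div_nonneg hM.le hs0.le
  have hab : (1 - M / s) + M / s = 1 := by ring
  have := hconv.2 hmem0 hmems ha hb hab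
  simp only [smul_eq_mul, mul_zero, zero_add, hΨ0] at this
  rw [div_mul_cancel₀ _ (ne_of_gt hs0)] at this
  rw [div_mul_eq_mul_div, div_le_iff₀ hM]
  rw [div_mul_eq_mul_div, le_div_iff₀ hs0] at this
  nlinarith

/-- Truncation error bound. -/
lemma trunc_err {Ψ' : ℝ → ℝ} {M : ℝ} (hM : 0 < M) (hΨM : 0 < Ψ' M)
    (hΨ'nn : ∀ t, 0 ≤ Ψ' t)
    (hsl : ∀ s, M ≤ s → Ψ' M / M * s ≤ Ψ' s)
    (t : ℝ) (ht : 0 ≤ t) :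
    |t * Real.log t - t * max (-M) (min M (Real.log t))|
      ≤ M / Ψ' M * (t * Ψ' |Real.log t|) := by
  set s := Real.log t with hs_def
  rcases le_or_gt |s| M with hsM | hsM
  · have : max (-M) (min M s) = s := by
      rw [abs_le] at hsM
      rw [min_eq_right hsM.2, max_eq_right hsM.1]
    rw [this, sub_self, abs_zero]
    have := hΨ'nn |s|
    positivity
  · have hdiff : |s - max (-M) (min M s)| ≤ |s| := by
      rcases le_or_gt s 0 with hneg | hpos
      · have hsM' : s < -M := by
          rw [abs_of_nonpos hneg] at hsM; linarith
        rw [min_eq_right (by linarith : s ≤ M), max_eq_left (by linarith : s ≤ -M)]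
        rw [abs_of_nonpos (by linarith), abs_of_nonpos hneg]
        linarith
      · have hsM' : M < s := by
          rw [abs_of_pos hpos] at hsM; linarith
        rw [min_eq_left hsM'.le, max_eq_right (by linarith : -M ≤ M)]
        rw [abs_of_nonneg (by linarith), abs_of_pos hpos]
        linarith
    have hslope : |s| ≤ M / Ψ' M * Ψ' |s| := by
      have := hsl |s| hsM.le
      rw [div_mul_eq_mul_div, div_le_iff₀ hM] at this
      rw [div_mul_eq_mul_div, le_div_iff₀ hΨM]
      nlinarith
    calc |t * s - t * max (-M) (min M s)| = t * |s - max (-M) (min M s)| := by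
          rw [← mul_sub, abs_mul, abs_of_nonneg ht]
      _ ≤ t * |s| := mul_le_mul_of_nonneg_left hdiff ht
      _ ≤ t * (M / Ψ' M * Ψ' |s|) := mul_le_mul_of_nonneg_left hslope ht
      _ = M / Ψ' M * (t * Ψ' |s|) := by ring

theorem entropy_stmt6 (d : ℕ) (f : ℕ → EuclideanSpace ℝ (Fin d) → ℝ)
    (g : EuclideanSpace ℝ (Fin d) → ℝ)
    (hfm : ∀ n, Measurable (f n)) (hf0 : ∀ n x, 0 ≤ f n x)
    (hf1 : ∀ n, ∫⁻ x, ENNReal.ofReal (f n x) = 1)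
    (hgm : Measurable g) (hg0 : ∀ x, 0 ≤ g x)
    (hg1 : ∫⁻ x, ENNReal.ofReal (g x) = 1)
    (hconv : TendstoInMeasure volume f atTop g)
    (hglog : Integrable (fun x => g x * Real.log (g x)))
    (Ψ : ℝ → ℝ)
    (hΨconv : ConvexOn ℝ (Set.Ici 0) Ψ)
    (hΨmono : MonotoneOn Ψ (Set.Ici 0))
    (hΨ0 : Ψ 0 = 0)
    (hΨnn : ∀ t ≥ (0:ℝ), 0 ≤ Ψ t)
    (hΨsup : Tendsto (fun t => Ψ t / t) atTop atTop)
    (hmom : ∃ C : ℝ, ∀ n,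
      ∫⁻ x, ENNReal.ofReal (f n x * Ψ |Real.log (f n x)|) ≤ ENNReal.ofReal C) :
    (∀ n, Integrable (fun x => f n x * Real.log (f n x))) ∧
    Tendsto (fun n => -∫ x, f n x * Real.log (f n x)) atTop
      (nhds (-∫ x, g x * Real.log (g x))) := by
  obtain ⟨C₀, hmomC⟩ := hmom
  set C := max C₀ 0 with hC_def
  have hC0 : (0:ℝ) ≤ C := le_max_right _ _
  set Ψ' : ℝ → ℝ := fun t => Ψ (max t 0) with hΨ'_def
  have hΨ'mono : Monotone Ψ' := fun a b hab =>
    hΨmono (Set.mem_Ici.2 (le_max_right a 0)) (Set.mem_Ici.2 (le_max_right b 0))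
      (max_le_max hab le_rfl)
  have hΨ'meas : Measurable Ψ' := hΨ'mono.measurable
  have hΨ'nn : ∀ t, 0 ≤ Ψ' t := fun t => hΨnn _ (le_max_right _ _)
  have hΨ'eq : ∀ s : ℝ, 0 ≤ s → Ψ' s = Ψ s := fun s hs => by
    simp only [hΨ'_def, max_eq_left hs]
  have hmom' : ∀ n, ∫⁻ x, ENNReal.ofReal (f n x * Ψ' |Real.log (f n x)|)
      ≤ ENNReal.ofReal C := by
    intro n
    have heq : ∀ x : EuclideanSpace ℝ (Fin d),
        ENNReal.ofReal (f n x * Ψ' |Real.log (f n x)|)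
        = ENNReal.ofReal (f n x * Ψ |Real.log (f n x)|) :=
      fun x => by rw [hΨ'eq _ (abs_nonneg _)]
    rw [lintegral_congr heq]
    exact (hmomC n).trans (ENNReal.ofReal_le_ofReal (le_max_left _ _))
  have hmomMeas : ∀ n, Measurable (fun x => f n x * Ψ' |Real.log (f n x)|) :=
    fun n => (hfm n).mul (hΨ'meas.comp ((Real.measurable_log.comp (hfm n)).abs))
  have hgmomMeas : Measurable (fun x => g x * Ψ' |Real.log (g x)|) :=
    hgm.mul (hΨ'meas.comp ((Real.measurable_log.comp hgm).abs))
  have hfInt : ∀ n, Integrable (f n) := by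
    intro n
    refine ⟨(hfm n).aestronglyMeasurable, ?_⟩
    rw [hasFiniteIntegral_iff_ofReal (Filter.Eventually.of_forall (hf0 n)), hf1 n]
    exact ENNReal.one_lt_top
  have hgInt : Integrable g := by
    refine ⟨hgm.aestronglyMeasurable, ?_⟩
    rw [hasFiniteIntegral_iff_ofReal (Filter.Eventually.of_forall hg0), hg1]
    exact ENNReal.one_lt_top
  have hmomInt : ∀ n, Integrable (fun x => f n x * Ψ' |Real.log (f n x)|) := by
    intro n
    refine ⟨(hmomMeas n).aestronglyMeasurable, ?_⟩
    rw [hasFiniteIntegral_iff_ofReal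
      (Filter.Eventually.of_forall fun x => mul_nonneg (hf0 n x) (hΨ'nn _))]
    exact lt_of_le_of_lt (hmom' n) ENNReal.ofReal_lt_top
  obtain ⟨T₀, hT₀⟩ := eventually_atTop.1 (hΨsup.eventually_ge_atTop 1)
  set T := max T₀ 1 with hT_def
  have hT1 : (1:ℝ) ≤ T := le_max_right _ _
  have hTbound : ∀ s : ℝ, 0 ≤ s → s ≤ T + Ψ' s := by
    intro s hs
    rcases le_or_gt s T with h | h
    · linarith [hΨ'nn s]
    · have h1 : 1 ≤ Ψ s / s := hT₀ s (le_trans (le_max_left _ _) h.le)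
      have hspos : 0 < s := lt_of_lt_of_le (lt_of_lt_of_le zero_lt_one hT1) h.le
      have h2 : s ≤ Ψ s := by rw [le_div_iff₀ hspos] at h1; linarith
      rw [hΨ'eq s hs]
      linarith
  have hInt : ∀ n, Integrable (fun x => f n x * Real.log (f n x)) := by
    intro n
    have hdom : Integrable (fun x => T * f n x + f n x * Ψ' |Real.log (f n x)|) :=
      ((hfInt n).const_mul T).add (hmomInt n)
    refine hdom.mono' ((hfm n).mul (Real.measurable_log.comp (hfm n))).aestronglyMeasurable ?_
    refine Filter.Eventually.of_forall fun x => ?_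
    rw [Real.norm_eq_abs, abs_mul, abs_of_nonneg (hf0 n x)]
    have hb := mul_le_mul_of_nonneg_left (hTbound |Real.log (f n x)| (abs_nonneg _)) (hf0 n x)
    nlinarith [hf0 n x, hΨ'nn |Real.log (f n x)|]
  refine ⟨hInt, ?_⟩
  have hfint1 : ∀ n, ∫ x, f n x = 1 := by
    intro n
    rw [integral_eq_lintegral_of_nonneg_ae (Filter.Eventually.of_forall (hf0 n))
      (hfm n).aestronglyMeasurable, hf1 n, ENNReal.toReal_one]
  have hgint1 : ∫ x, g x = 1 := by
    rw [integral_eq_lintegral_of_nonneg_ae (Filter.Eventually.of_forall hg0)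
      hgm.aestronglyMeasurable, hg1, ENNReal.toReal_one]
  have hL1 : Tendsto (fun n => ∫ x, |f n x - g x|) atTop (𝓝 0) := by
    refine tendsto_of_subseq_tendsto fun ns hns => ?_
    have hsub : TendstoInMeasure volume (fun i => f (ns i)) atTop g :=
      fun ε hε => (hconv ε hε).comp hns
    obtain ⟨ms, _hms, hae⟩ := hsub.exists_seq_tendsto_ae
    exact ⟨ms, scheffe_ae (fun k => hfInt _) hgInt (fun k x => hf0 _ x) hg0
      (fun k => by rw [hfint1, hgint1]) hae⟩
  have hΨ'contAt : ∀ s : ℝ, 0 < s → ContinuousAt Ψ' s := by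
    intro s hs
    have hconvIoi : ConvexOn ℝ (Set.Ioi 0) Ψ :=
      hΨconv.subset Set.Ioi_subset_Ici_self (convex_Ioi 0)
    have hcont : ContinuousOn Ψ (Set.Ioi 0) := hconvIoi.continuousOn isOpen_Ioi
    have hci : ContinuousAt Ψ s := hcont.continuousAt (Ioi_mem_nhds hs)
    refine hci.congr ?_
    filter_upwards [eventually_gt_nhds hs] with t ht
    simp only [hΨ'_def, max_eq_left ht.le]
  have hgmom : ∫⁻ x, ENNReal.ofReal (g x * Ψ' |Real.log (g x)|) ≤ ENNReal.ofReal C := by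
    obtain ⟨ns, _hnsmono, hae⟩ := hconv.exists_seq_tendsto_ae
    have step1 : ∫⁻ x, ENNReal.ofReal (g x * Ψ' |Real.log (g x)|)
        ≤ ∫⁻ x, Filter.liminf
            (fun k => ENNReal.ofReal (f (ns k) x * Ψ' |Real.log (f (ns k) x)|)) atTop := by
      refine lintegral_mono_ae ?_
      filter_upwards [hae] with x hx
      by_cases hzero : g x * Ψ' |Real.log (g x)| ≤ 0
      · rw [ENNReal.ofReal_eq_zero.2 hzero]
        exact zero_le
      · push_neg at hzero
        have hgx : 0 < g x := by
          rcases (hg0 x).lt_or_eq with h | h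
          · exact h
          · exfalso; rw [← h, zero_mul] at hzero; exact lt_irrefl _ hzero
        have hΨpos : 0 < Ψ' |Real.log (g x)| := by
          by_contra hcon
          push_neg at hcon
          nlinarith [hΨ'nn |Real.log (g x)|]
        have habspos : 0 < |Real.log (g x)| := by
          rcases (abs_nonneg (Real.log (g x))).lt_or_eq with h | h
          · exact h
          · exfalso
            rw [← h] at hΨpos
            have : Ψ' 0 = 0 := by simp [hΨ'_def, hΨ0]
            rw [this] at hΨpos
            exact lt_irrefl _ hΨpos
        have hreal : Tendsto (fun k => f (ns k) x * Ψ' |Real.log (f (ns k) x)|) atTop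
            (𝓝 (g x * Ψ' |Real.log (g x)|)) := by
          refine hx.mul ?_
          have hlog : Tendsto (fun k => Real.log (f (ns k) x)) atTop
              (𝓝 (Real.log (g x))) :=
            ((Real.continuousAt_log (ne_of_gt hgx)).tendsto).comp hx
          exact ((hΨ'contAt _ habspos).tendsto).comp hlog.abs
        have htend := ENNReal.tendsto_ofReal hreal
        rw [htend.liminf_eq]
    refine step1.trans ?_
    refine (lintegral_liminf_le fun k => (hmomMeas (ns k)).ennreal_ofReal).trans ?_
    calc Filter.liminf (fun k => ∫⁻ x,
          ENNReal.ofReal (f (ns k) x * Ψ' |Real.log (f (ns k) x)|)) atTop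
        ≤ Filter.liminf (fun _ => ENNReal.ofReal C) atTop :=
          Filter.liminf_le_liminf (Filter.Eventually.of_forall fun k => hmom' (ns k))
      _ = ENNReal.ofReal C := Filter.liminf_const _
  have hgmomInt : Integrable (fun x => g x * Ψ' |Real.log (g x)|) := by
    refine ⟨hgmomMeas.aestronglyMeasurable, ?_⟩
    rw [hasFiniteIntegral_iff_ofReal
      (Filter.Eventually.of_forall fun x => mul_nonneg (hg0 x) (hΨ'nn _))]
    exact lt_of_le_of_lt hgmom ENNReal.ofReal_lt_top
  have hgmomReal : ∫ x, g x * Ψ' |Real.log (g x)| ≤ C := by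
    rw [integral_eq_lintegral_of_nonneg_ae
      (Filter.Eventually.of_forall fun x => mul_nonneg (hg0 x) (hΨ'nn _))
      hgmomMeas.aestronglyMeasurable]
    calc (∫⁻ x, ENNReal.ofReal (g x * Ψ' |Real.log (g x)|)).toReal
        ≤ (ENNReal.ofReal C).toReal := ENNReal.toReal_mono ENNReal.ofReal_ne_top hgmom
      _ = C := ENNReal.toReal_ofReal hC0
  have hfmomReal : ∀ n, ∫ x, f n x * Ψ' |Real.log (f n x)| ≤ C := by
    intro n
    rw [integral_eq_lintegral_of_nonneg_ae
      (Filter.Eventually.of_forall fun x => mul_nonneg (hf0 n x) (hΨ'nn _))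
      (hmomMeas n).aestronglyMeasurable]
    calc (∫⁻ x, ENNReal.ofReal (f n x * Ψ' |Real.log (f n x)|)).toReal
        ≤ (ENNReal.ofReal C).toReal := ENNReal.toReal_mono ENNReal.ofReal_ne_top (hmom' n)
      _ = C := ENNReal.toReal_ofReal hC0
  suffices h : Tendsto (fun n => ∫ x, f n x * Real.log (f n x)) atTop
      (𝓝 (∫ x, g x * Real.log (g x))) from h.neg
  rw [Metric.tendsto_atTop]
  intro ε hε
  set K := 3 * (C + 1) / ε with hK_def
  have hKpos : 0 < K := by positivity
  obtain ⟨M₀, hM₀⟩ := eventually_atTop.1 (hΨsup.eventually_ge_atTop K)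
  set M := max M₀ 1 with hM_def
  have hM1 : (1:ℝ) ≤ M := le_max_right _ _
  have hMpos : 0 < M := lt_of_lt_of_le zero_lt_one hM1
  have hKM : K ≤ Ψ M / M := hM₀ M (le_max_left _ _)
  have hKM' : K * M ≤ Ψ M := by rw [le_div_iff₀ hMpos] at hKM; linarith
  have hΨMpos : 0 < Ψ M := by nlinarith
  have hΨ'M : Ψ' M = Ψ M := hΨ'eq M hMpos.le
  have hMerr : M / Ψ M * C < ε / 3 := by
    have h1 : M / Ψ M ≤ 1 / K := by
      rw [div_le_div_iff₀ hΨMpos hKpos]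
      nlinarith
    have h2 : M / Ψ M * C ≤ 1 / K * C :=
      mul_le_mul_of_nonneg_right h1 hC0
    have h3 : 1 / K * C < ε / 3 := by
      have heqK : 1 / K * C = ε * C / (3 * (C + 1)) := by
        rw [hK_def]; field_simp
      rw [heqK, div_lt_iff₀ (by positivity : (0:ℝ) < 3 * (C + 1))]
      nlinarith
    linarith
  -- truncated integrals
  have hTrInt : ∀ (u : EuclideanSpace ℝ (Fin d) → ℝ), Measurable u → (∀ x, 0 ≤ u x) →
      Integrable u → Integrable (fun x => u x * max (-M) (min M (Real.log (u x)))) := by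
    intro u hum hu0 huInt
    refine (huInt.const_mul M).mono'
      ((hum.mul ((measurable_const.max (measurable_const.min
        (Real.measurable_log.comp hum)))))).aestronglyMeasurable ?_
    refine Filter.Eventually.of_forall fun x => ?_
    rw [Real.norm_eq_abs, abs_mul]
    calc |u x| * |max (-M) (min M (Real.log (u x)))| ≤ |u x| * M :=
          mul_le_mul_of_nonneg_left (abs_clamp_le M _ hMpos.le) (abs_nonneg _)
      _ = M * u x := by rw [abs_of_nonneg (hu0 x)]; ring
  have herr : ∀ (u : EuclideanSpace ℝ (Fin d) → ℝ), Measurable u → (∀ x, 0 ≤ u x) →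
      Integrable u → Integrable (fun x => u x * Real.log (u x)) →
      Integrable (fun x => u x * Ψ' |Real.log (u x)|) →
      (∫ x, u x * Ψ' |Real.log (u x)| ≤ C) →
      |(∫ x, u x * Real.log (u x)) - ∫ x, u x * max (-M) (min M (Real.log (u x)))|
        ≤ M / Ψ M * C := by
    intro u hum hu0 huInt hulogInt humomInt humomC
    have hTr := hTrInt u hum hu0 huInt
    rw [← integral_sub hulogInt hTr]
    have habs : |∫ x, (u x * Real.log (u x) - u x * max (-M) (min M (Real.log (u x))))|
        ≤ ∫ x, |u x * Real.log (u x) - u x * max (-M) (min M (Real.log (u x)))| := by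
      simpa [Real.norm_eq_abs] using
        norm_integral_le_integral_norm (μ := volume)
          (fun x => u x * Real.log (u x) - u x * max (-M) (min M (Real.log (u x))))
    refine habs.trans ?_
    have hsl : ∀ s, M ≤ s → Ψ' M / M * s ≤ Ψ' s := by
      intro s hs
      rw [hΨ'M, hΨ'eq s (hMpos.le.trans hs)]
      exact convex_slope hΨconv hΨ0 hMpos hs
    have hmono : (∫ x, |u x * Real.log (u x) - u x * max (-M) (min M (Real.log (u x)))|)
        ≤ ∫ x, M / Ψ' M * (u x * Ψ' |Real.log (u x)|) := by
      refine integral_mono (hulogInt.sub hTr).abs (humomInt.const_mul _) ?_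
      intro x
      exact trunc_err hMpos (hΨ'M ▸ hΨMpos) hΨ'nn hsl (u x) (hu0 x)
    refine hmono.trans ?_
    rw [integral_const_mul, hΨ'M]
    exact mul_le_mul_of_nonneg_left humomC (div_nonneg hMpos.le hΨMpos.le)
  have herrf : ∀ n, |(∫ x, f n x * Real.log (f n x))
      - ∫ x, f n x * max (-M) (min M (Real.log (f n x)))| ≤ M / Ψ M * C :=
    fun n => herr (f n) (hfm n) (hf0 n) (hfInt n) (hInt n) (hmomInt n) (hfmomReal n)
  have herrg : |(∫ x, g x * Real.log (g x))
      - ∫ x, g x * max (-M) (min M (Real.log (g x)))| ≤ M / Ψ M * C :=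
    herr g hgm hg0 hgInt hglog hgmomInt hgmomReal
  have hmid : ∀ n, |(∫ x, f n x * max (-M) (min M (Real.log (f n x))))
      - ∫ x, g x * max (-M) (min M (Real.log (g x)))|
      ≤ (M + 1) * ∫ x, |f n x - g x| := by
    intro n
    rw [← integral_sub (hTrInt (f n) (hfm n) (hf0 n) (hfInt n)) (hTrInt g hgm hg0 hgInt)]
    have habs : |∫ x, (f n x * max (-M) (min M (Real.log (f n x)))
        - g x * max (-M) (min M (Real.log (g x))))|
        ≤ ∫ x, |f n x * max (-M) (min M (Real.log (f n x)))
            - g x * max (-M) (min M (Real.log (g x)))| := by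
      simpa [Real.norm_eq_abs] using
        norm_integral_le_integral_norm (μ := volume)
          (fun x => f n x * max (-M) (min M (Real.log (f n x)))
            - g x * max (-M) (min M (Real.log (g x))))
    refine habs.trans ?_
    have hmono : (∫ x, |f n x * max (-M) (min M (Real.log (f n x)))
        - g x * max (-M) (min M (Real.log (g x)))|)
        ≤ ∫ x, (M + 1) * |f n x - g x| := by
      refine integral_mono
        (((hTrInt (f n) (hfm n) (hf0 n) (hfInt n)).sub (hTrInt g hgm hg0 hgInt)).abs)
        ((((hfInt n).sub hgInt).abs).const_mul _) ?_
      intro x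
      exact trunc_lip M (g x) (f n x) hMpos.le (hg0 x) (hf0 n x)
    refine hmono.trans ?_
    rw [integral_const_mul]
  have hMp1 : (0:ℝ) < M + 1 := by linarith
  obtain ⟨N, hN⟩ := (Metric.tendsto_atTop.1 hL1) (ε / 3 / (M + 1)) (by positivity)
  refine ⟨N, fun n hn => ?_⟩
  have hL1n : ∫ x, |f n x - g x| < ε / 3 / (M + 1) := by
    have := hN n hn
    rwa [Real.dist_eq, sub_zero, abs_of_nonneg
      (integral_nonneg fun x => abs_nonneg _)] at this
  have hmidn : |(∫ x, f n x * max (-M) (min M (Real.log (f n x))))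
      - ∫ x, g x * max (-M) (min M (Real.log (g x)))| < ε / 3 := by
    refine lt_of_le_of_lt (hmid n) ?_
    calc (M + 1) * ∫ x, |f n x - g x| < (M + 1) * (ε / 3 / (M + 1)) := by
          exact mul_lt_mul_of_pos_left hL1n hMp1
      _ = ε / 3 := by field_simp
  rw [Real.dist_eq]
  have htri : |(∫ x, f n x * Real.log (f n x)) - ∫ x, g x * Real.log (g x)|
      ≤ |(∫ x, f n x * Real.log (f n x)) - ∫ x, f n x * max (-M) (min M (Real.log (f n x)))|
      + |(∫ x, f n x * max (-M) (min M (Real.log (f n x))))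
          - ∫ x, g x * max (-M) (min M (Real.log (g x)))|
      + |(∫ x, g x * max (-M) (min M (Real.log (g x)))) - ∫ x, g x * Real.log (g x)| := by
    have h1 := abs_sub_le (∫ x, f n x * Real.log (f n x))
      (∫ x, f n x * max (-M) (min M (Real.log (f n x)))) (∫ x, g x * Real.log (g x))
    have h2 := abs_sub_le (∫ x, f n x * max (-M) (min M (Real.log (f n x))))
      (∫ x, g x * max (-M) (min M (Real.log (g x)))) (∫ x, g x * Real.log (g x))
    linarith
  have herrg' : |(∫ x, g x * max (-M) (min M (Real.log (g x)))) - ∫ x, g x * Real.log (g x)|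
      ≤ M / Ψ M * C := by rw [abs_sub_comm]; exact herrg
  calc |(∫ x, f n x * Real.log (f n x)) - ∫ x, g x * Real.log (g x)|
      ≤ _ + _ + _ := htri
    _ < ε / 3 + ε / 3 + ε / 3 :=
        add_lt_add (add_lt_add (lt_of_le_of_lt (herrf n) hMerr) hmidn)
          (lt_of_le_of_lt herrg' hMerr)
    _ = ε := by ring
end

section
/- Let f_n, f be pdfs on ℝ^d with f_n → f in Lebesgue measure and H(f) finite. If sup_n ∫ f_n·(|log f_n|)^α dλ < ∞ for some fixed α > 1, then H(f_n) → H(f). -/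
open MeasureTheory Filter


noncomputable def phiT (T x : ℝ) : ℝ := max (-(T*x)) (min (x * Real.log x) (T*x))

lemma phiT_eq {T x : ℝ} (hx : 0 ≤ x) :
    phiT T x = x * max (-T) (min (Real.log x) T) := by
  rw [phiT, mul_max_of_nonneg _ _ hx, mul_min_of_nonneg _ _ hx]
  ring_nf

lemma clamp_abs_le {T L : ℝ} (hT : 0 ≤ T) : |max (-T) (min L T)| ≤ T := by
  rw [abs_le]
  exact ⟨le_max_left _ _, max_le (by linarith) (min_le_right _ _)⟩

lemma abs_phiT_le {T x : ℝ} (hT : 0 ≤ T) (hx : 0 ≤ x) : |phiT T x| ≤ T * x := by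
  rw [phiT_eq hx, abs_mul, abs_of_nonneg hx]
  calc x * |max (-T) (min (Real.log x) T)| ≤ x * T :=
        mul_le_mul_of_nonneg_left (clamp_abs_le hT) hx
    _ = T * x := mul_comm _ _

lemma continuous_phiT (T : ℝ) : Continuous (phiT T) :=
  Continuous.max (by fun_prop) (Real.continuous_mul_log.min (by fun_prop))

lemma measurable_phiT (T : ℝ) : Measurable (phiT T) := (continuous_phiT T).measurable

lemma phiT_lipschitz_aux {T a b : ℝ} (hT : 1 ≤ T) (ha : 0 ≤ a) (hb : 0 ≤ b) (hab : a ≤ b) :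
    |phiT T b - phiT T a| ≤ (T + 1) * (b - a) := by
  rcases eq_or_lt_of_le ha with rfl | ha'
  · have h0 : phiT T 0 = 0 := by simp [phiT]
    rw [h0, sub_zero, sub_zero]
    calc |phiT T b| ≤ T * b := abs_phiT_le (by linarith) hb
      _ ≤ (T + 1) * b := by nlinarith
  · set La := Real.log a with hLa
    set Lb := Real.log b with hLb
    set u := max (-T) (min La T) with hu
    set v := max (-T) (min Lb T) with hv
    have hb' : 0 < b := lt_of_lt_of_le ha' hab
    have hvT : |v| ≤ T := clamp_abs_le (by linarith)
    have hLab : La ≤ Lb := Real.log_le_log ha' hab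
    have huv : u ≤ v := max_le_max le_rfl (min_le_min (by exact hLab) le_rfl)
    have h1 : v - u ≤ Lb - La := by
      have e1 : |v - u| ≤ |min Lb T - min La T| := by
        rw [hu, hv, max_comm (-T) (min La T), max_comm (-T) (min Lb T)]
        exact abs_max_sub_max_le_abs _ _ _
      have e2 : |min Lb T - min La T| ≤ max |Lb - La| |T - T| :=
        abs_min_sub_min_le_max _ _ _ _
      have e3 : max |Lb - La| |T - T| = Lb - La := by
        rw [sub_self, abs_zero, abs_of_nonneg (by linarith : (0:ℝ) ≤ Lb - La),
          max_eq_left (by linarith)]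
      calc v - u ≤ |v - u| := le_abs_self _
        _ ≤ Lb - La := by linarith [e1.trans (e2.trans_eq e3)]
    have h2 : Lb - La ≤ b / a - 1 := by
      have := Real.log_le_sub_one_of_pos (div_pos hb' ha')
      rwa [Real.log_div (ne_of_gt hb') (ne_of_gt ha')] at this
    have h3 : a * (v - u) ≤ b - a := by
      have : a * (v - u) ≤ a * (b / a - 1) :=
        mul_le_mul_of_nonneg_left (h1.trans h2) ha
      have ha0 : a ≠ 0 := ne_of_gt ha'
      calc a * (v - u) ≤ a * (b / a - 1) := this
        _ = b - a := by field_simp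
    have hpb : phiT T b = b * v := phiT_eq hb
    have hpa : phiT T a = a * u := phiT_eq ha
    rw [hpa, hpb, abs_sub_le_iff]
    have hvle : v ≤ T := le_of_abs_le hvT
    have hvge : -T ≤ v := neg_le_of_abs_le hvT
    constructor
    · -- b*v - a*u = (b-a)*v + a*(v-u)
      nlinarith [mul_le_mul_of_nonneg_left hvle (sub_nonneg.mpr hab)]
    · -- a*u - b*v ≤ (a-b)*v ≤ (b-a)*T
      have h5 : a * u ≤ a * v := mul_le_mul_of_nonneg_left huv ha
      nlinarith [mul_le_mul_of_nonneg_left hvge (sub_nonneg.mpr hab)]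

lemma phiT_lipschitz {T a b : ℝ} (hT : 1 ≤ T) (ha : 0 ≤ a) (hb : 0 ≤ b) :
    |phiT T a - phiT T b| ≤ (T + 1) * |a - b| := by
  rcases le_total a b with hab | hab
  · have h := phiT_lipschitz_aux hT ha hb hab
    rw [abs_sub_comm] at h
    rwa [abs_of_nonpos (sub_nonpos.mpr hab), neg_sub]
  · have h := phiT_lipschitz_aux hT hb ha hab
    rwa [abs_of_nonneg (sub_nonneg.mpr hab)]

lemma phi_sub_phiT {T α x : ℝ} (hT : 1 ≤ T) (hα : 1 < α) (hx : 0 ≤ x) :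
    |x * Real.log x - phiT T x| ≤ x * |Real.log x| ^ α / T ^ (α - 1) := by
  set L := Real.log x with hL
  have hTpos : (0:ℝ) < T ^ (α - 1) := Real.rpow_pos_of_pos (by linarith) _
  rcases le_or_gt |L| T with hcase | hcase
  · have : phiT T x = x * L := by
      rw [phiT_eq hx]
      congr 1
      rw [min_eq_left (le_of_abs_le hcase), max_eq_right (neg_le_of_abs_le hcase)]
    rw [this, sub_self, abs_zero]
    positivity
  · have hL1 : 1 < |L| := lt_of_le_of_lt hT hcase
    have hmain : x * |L| ≤ x * |L| ^ α / T ^ (α - 1) := by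
      rw [le_div_iff₀ hTpos]
      have e1 : |L| ^ α = |L| * |L| ^ (α - 1) := by
        rw [← Real.rpow_one_add' (by positivity) (by intro h; linarith)]
        ring_nf
      have e2 : T ^ (α - 1) ≤ |L| ^ (α - 1) :=
        Real.rpow_le_rpow (by linarith) (le_of_lt hcase) (by linarith)
      calc x * |L| * T ^ (α - 1) ≤ x * |L| * |L| ^ (α - 1) := by
            apply mul_le_mul_of_nonneg_left e2 (by positivity)
        _ = x * |L| ^ α := by rw [e1]; ring
    refine le_trans ?_ hmain
    rcases le_or_gt T L with hTL | hTL
    · have : phiT T x = x * T := by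
        rw [phiT_eq hx]
        congr 1
        rw [min_eq_right hTL, max_eq_right (by linarith)]
      rw [this, ← mul_sub, abs_mul, abs_of_nonneg hx]
      apply mul_le_mul_of_nonneg_left _ hx
      rw [abs_of_nonneg (by linarith : (0:ℝ) ≤ L - T)]
      have : 0 ≤ L := by linarith
      rw [abs_of_nonneg this]; linarith
    · have hLneg : L < -T := by
        rcases abs_cases L with ⟨h1, h2⟩ | ⟨h1, h2⟩
        · linarith
        · linarith
      have : phiT T x = x * (-T) := by
        rw [phiT_eq hx]
        congr 1
        rw [min_eq_left (by linarith), max_eq_left (by linarith)]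
      rw [this, ← mul_sub, abs_mul, abs_of_nonneg hx]
      apply mul_le_mul_of_nonneg_left _ hx
      rw [abs_of_nonpos (by linarith : L - -T ≤ 0), abs_of_nonpos (by linarith : L ≤ 0)]
      linarith

lemma abs_phi_le {α x : ℝ} (hα : 1 < α) (hx : 0 ≤ x) :
    |x * Real.log x| ≤ x + x * |Real.log x| ^ α := by
  set L := Real.log x
  rw [abs_mul, abs_of_nonneg hx]
  rcases le_or_gt |L| 1 with hc | hc
  · have h1 : x * |L| ≤ x * 1 := mul_le_mul_of_nonneg_left hc hx
    have h2 : 0 ≤ x * |L| ^ α := by positivity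
    linarith
  · have h1 : |L| ≤ |L| ^ α := by
      calc |L| = |L| ^ (1:ℝ) := (Real.rpow_one _).symm
        _ ≤ |L| ^ α := Real.rpow_le_rpow_of_exponent_le (le_of_lt hc) (le_of_lt hα)
    have h2 : x * |L| ≤ x * |L| ^ α := mul_le_mul_of_nonneg_left h1 hx
    linarith


section key
variable {X : Type*} [MeasurableSpace X] {μ : Measure X}

lemma integrable_of_nonneg_lintegral {h : X → ℝ} (hm : Measurable h) (h0 : ∀ x, 0 ≤ h x)
    (hfin : ∫⁻ x, ENNReal.ofReal (h x) ∂μ ≠ ⊤) : Integrable h μ := by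
  refine ⟨hm.aestronglyMeasurable, ?_⟩
  rw [hasFiniteIntegral_iff_norm]
  simpa only [Real.norm_eq_abs, fun x => abs_of_nonneg (h0 x)] using hfin.lt_top

lemma integral_eq_toReal {h : X → ℝ} (hm : Measurable h) (h0 : ∀ x, 0 ≤ h x) :
    ∫ x, h x ∂μ = (∫⁻ x, ENNReal.ofReal (h x) ∂μ).toReal :=
  integral_eq_lintegral_of_nonneg_ae (Filter.Eventually.of_forall h0) hm.aestronglyMeasurable

-- Scheffé-type lemma
lemma scheffe_s7 (f : ℕ → X → ℝ) (g : X → ℝ)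
    (hfm : ∀ n, Measurable (f n)) (hf0 : ∀ n x, 0 ≤ f n x)
    (hf1 : ∀ n, ∫⁻ x, ENNReal.ofReal (f n x) ∂μ = 1)
    (hgm : Measurable g) (hg0 : ∀ x, 0 ≤ g x)
    (hg1 : ∫⁻ x, ENNReal.ofReal (g x) ∂μ = 1)
    (hae : ∀ᵐ x ∂μ, Tendsto (fun n => f n x) atTop (nhds (g x))) :
    Tendsto (fun n => ∫ x, |f n x - g x| ∂μ) atTop (nhds 0) := by
  have hfi : ∀ n, Integrable (f n) μ :=
    fun n => integrable_of_nonneg_lintegral (hfm n) (hf0 n) (by rw [hf1 n]; simp)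
  have hgi : Integrable g μ :=
    integrable_of_nonneg_lintegral hgm hg0 (by rw [hg1]; simp)
  set h : ℕ → X → ℝ := fun n x => max (g x - f n x) 0 with hh
  have hhm : ∀ n, AEStronglyMeasurable (h n) μ :=
    fun n => ((hgm.sub (hfm n)).max measurable_const).aestronglyMeasurable
  have hhb : ∀ n, ∀ᵐ x ∂μ, ‖h n x‖ ≤ g x := by
    intro n
    refine Filter.Eventually.of_forall fun x => ?_
    rw [Real.norm_eq_abs, abs_of_nonneg (le_max_right _ _)]
    exact max_le (by linarith [hf0 n x]) (hg0 x)
  have hhlim : ∀ᵐ x ∂μ, Tendsto (fun n => h n x) atTop (nhds 0) := by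
    filter_upwards [hae] with x hx
    have : Tendsto (fun n => max (g x - f n x) 0) atTop (nhds (max (g x - g x) 0)) :=
      (((tendsto_const_nhds).sub hx).max tendsto_const_nhds)
    simpa using this
  have hDCT : Tendsto (fun n => ∫ x, h n x ∂μ) atTop (nhds (∫ x, (0:ℝ) ∂μ)) := by
    refine tendsto_integral_of_dominated_convergence g hhm hgi hhb ?_
    simpa using hhlim
  rw [integral_zero] at hDCT
  have hint1 : ∀ n, ∫ x, f n x ∂μ = 1 := by
    intro n; rw [integral_eq_toReal (hfm n) (hf0 n), hf1 n]; simp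
  have hintg : ∫ x, g x ∂μ = 1 := by
    rw [integral_eq_toReal hgm hg0, hg1]; simp
  have heq : ∀ n, ∫ x, |f n x - g x| ∂μ = 2 * ∫ x, h n x ∂μ := by
    intro n
    have hptwise : ∀ x, |f n x - g x| = (f n x - g x) + 2 * h n x := by
      intro x
      rcases le_total (f n x) (g x) with hc | hc
      · rw [abs_of_nonpos (by linarith), hh]
        simp only
        rw [max_eq_left (by linarith)]
        ring
      · rw [abs_of_nonneg (by linarith), hh]
        simp only
        rw [max_eq_right (by linarith)]
        ring
    have hhint : Integrable (h n) μ :=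
      Integrable.mono' hgi (hhm n) (hhb n)
    calc ∫ x, |f n x - g x| ∂μ = ∫ x, ((f n x - g x) + 2 * h n x) ∂μ := by
          congr 1; funext x; exact hptwise x
      _ = (∫ x, (f n x - g x) ∂μ) + ∫ x, 2 * h n x ∂μ :=
          integral_add ((hfi n).sub hgi) (hhint.const_mul 2)
      _ = ((∫ x, f n x ∂μ) - ∫ x, g x ∂μ) + 2 * ∫ x, h n x ∂μ := by
          rw [integral_sub (hfi n) hgi, integral_const_mul]
      _ = 2 * ∫ x, h n x ∂μ := by rw [hint1 n, hintg]; ring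
  have : Tendsto (fun n => 2 * ∫ x, h n x ∂μ) atTop (nhds (2 * 0)) :=
    hDCT.const_mul 2
  rw [mul_zero] at this
  exact this.congr (fun n => (heq n).symm)

lemma lint_diff_le {p : X → ℝ} (hm : Measurable p) (h0 : ∀ x, 0 ≤ p x)
    {T α C : ℝ} (hT : 1 ≤ T) (hα : 1 < α) (hC : 0 ≤ C)
    (hmom : ∫⁻ x, ENNReal.ofReal (p x * |Real.log (p x)| ^ α) ∂μ ≤ ENNReal.ofReal C) :
    ∫⁻ x, ENNReal.ofReal |p x * Real.log (p x) - phiT T (p x)| ∂μ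
      ≤ ENNReal.ofReal (C / T ^ (α - 1)) := by
  set r := (T ^ (α - 1))⁻¹ with hrdef
  have hTpos : (0:ℝ) < T ^ (α - 1) := Real.rpow_pos_of_pos (by linarith) _
  have hr : 0 ≤ r := inv_nonneg.mpr hTpos.le
  have hpt : ∀ x, ENNReal.ofReal |p x * Real.log (p x) - phiT T (p x)|
      ≤ ENNReal.ofReal (p x * |Real.log (p x)| ^ α * r) := by
    intro x
    apply ENNReal.ofReal_le_ofReal
    rw [hrdef, ← div_eq_mul_inv]
    exact phi_sub_phiT hT hα (h0 x)
  calc ∫⁻ x, ENNReal.ofReal |p x * Real.log (p x) - phiT T (p x)| ∂μ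
      ≤ ∫⁻ x, ENNReal.ofReal (p x * |Real.log (p x)| ^ α * r) ∂μ :=
        lintegral_mono hpt
    _ = ∫⁻ x, ENNReal.ofReal (p x * |Real.log (p x)| ^ α) * ENNReal.ofReal r ∂μ := by
        congr 1; funext x
        rw [ENNReal.ofReal_mul (mul_nonneg (h0 x) (Real.rpow_nonneg (abs_nonneg _) _))]
    _ = (∫⁻ x, ENNReal.ofReal (p x * |Real.log (p x)| ^ α) ∂μ) * ENNReal.ofReal r := by
        apply lintegral_mul_const
        exact (hm.mul ((Real.measurable_log.comp hm).abs.pow_const α)).ennreal_ofReal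
    _ ≤ ENNReal.ofReal C * ENNReal.ofReal r := mul_le_mul_left hmom _
    _ = ENNReal.ofReal (C / T ^ (α - 1)) := by
        rw [← ENNReal.ofReal_mul hC, div_eq_mul_inv]

lemma lint_diff_g_le {f : ℕ → X → ℝ} {g : X → ℝ}
    (hfm : ∀ n, Measurable (f n)) (hf0 : ∀ n x, 0 ≤ f n x) (hgm : Measurable g)
    (hae : ∀ᵐ x ∂μ, Tendsto (fun n => f n x) atTop (nhds (g x)))
    {T α C : ℝ} (hT : 1 ≤ T) (hα : 1 < α) (hC : 0 ≤ C)
    (hmom : ∀ n, ∫⁻ x, ENNReal.ofReal (f n x * |Real.log (f n x)| ^ α) ∂μ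
      ≤ ENNReal.ofReal C) :
    ∫⁻ x, ENNReal.ofReal |g x * Real.log (g x) - phiT T (g x)| ∂μ
      ≤ ENNReal.ofReal (C / T ^ (α - 1)) := by
  have hcont : Continuous (fun t : ℝ => ENNReal.ofReal |t * Real.log t - phiT T t|) :=
    ENNReal.continuous_ofReal.comp
      ((Real.continuous_mul_log.sub (continuous_phiT T)).abs)
  have hlim : ∀ᵐ x ∂μ, Tendsto
      (fun n => ENNReal.ofReal |f n x * Real.log (f n x) - phiT T (f n x)|) atTop
      (nhds (ENNReal.ofReal |g x * Real.log (g x) - phiT T (g x)|)) := by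
    filter_upwards [hae] with x hx
    exact (hcont.tendsto (g x)).comp hx
  have hmeas : ∀ n, Measurable
      (fun x => ENNReal.ofReal |f n x * Real.log (f n x) - phiT T (f n x)|) :=
    fun n => (hcont.measurable).comp (hfm n)
  calc ∫⁻ x, ENNReal.ofReal |g x * Real.log (g x) - phiT T (g x)| ∂μ
      = ∫⁻ x, liminf (fun n => ENNReal.ofReal
          |f n x * Real.log (f n x) - phiT T (f n x)|) atTop ∂μ := by
        apply lintegral_congr_ae
        filter_upwards [hlim] with x hx
        exact hx.liminf_eq.symm
    _ ≤ liminf (fun n => ∫⁻ x, ENNReal.ofReal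
          |f n x * Real.log (f n x) - phiT T (f n x)| ∂μ) atTop :=
        lintegral_liminf_le hmeas
    _ ≤ ENNReal.ofReal (C / T ^ (α - 1)) := by
        apply liminf_le_of_le
        · isBoundedDefault
        · intro b hb
          obtain ⟨n, hn⟩ := (hb.and (Filter.Eventually.of_forall
            (fun n => lint_diff_le (hfm n) (hf0 n) hT hα hC (hmom n)))).exists
          exact hn.1.trans hn.2

lemma key_tendsto {f : ℕ → X → ℝ} {g : X → ℝ}
    (hfm : ∀ n, Measurable (f n)) (hf0 : ∀ n x, 0 ≤ f n x)
    (hf1 : ∀ n, ∫⁻ x, ENNReal.ofReal (f n x) ∂μ = 1)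
    (hgm : Measurable g) (hg0 : ∀ x, 0 ≤ g x)
    (hg1 : ∫⁻ x, ENNReal.ofReal (g x) ∂μ = 1)
    (hae : ∀ᵐ x ∂μ, Tendsto (fun n => f n x) atTop (nhds (g x)))
    (hglog : Integrable (fun x => g x * Real.log (g x)) μ)
    {α C : ℝ} (hα : 1 < α) (hC : 0 ≤ C)
    (hmom : ∀ n, ∫⁻ x, ENNReal.ofReal (f n x * |Real.log (f n x)| ^ α) ∂μ
      ≤ ENNReal.ofReal C) :
    Tendsto (fun n => ∫ x, f n x * Real.log (f n x) ∂μ) atTop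
      (nhds (∫ x, g x * Real.log (g x) ∂μ)) := by
  -- basic integrabilities
  have hfi : ∀ n, Integrable (f n) μ :=
    fun n => integrable_of_nonneg_lintegral (hfm n) (hf0 n) (by rw [hf1 n]; simp)
  have hgi : Integrable g μ :=
    integrable_of_nonneg_lintegral hgm hg0 (by rw [hg1]; simp)
  have hmommeas : ∀ n, Measurable (fun x => f n x * |Real.log (f n x)| ^ α) :=
    fun n => (hfm n).mul ((Real.measurable_log.comp (hfm n)).abs.pow_const α)
  have hmomi : ∀ n, Integrable (fun x => f n x * |Real.log (f n x)| ^ α) μ := by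
    intro n
    refine integrable_of_nonneg_lintegral (hmommeas n)
      (fun x => mul_nonneg (hf0 n x) (Real.rpow_nonneg (abs_nonneg _) _)) ?_
    exact ((hmom n).trans_lt ENNReal.ofReal_lt_top).ne
  have hphim : ∀ n, Measurable (fun x => f n x * Real.log (f n x)) :=
    fun n => (hfm n).mul (Real.measurable_log.comp (hfm n))
  have hphifi : ∀ n, Integrable (fun x => f n x * Real.log (f n x)) μ := by
    intro n
    refine Integrable.mono' ((hfi n).add (hmomi n))
      (hphim n).aestronglyMeasurable
      (Filter.Eventually.of_forall fun x => ?_)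
    rw [Real.norm_eq_abs]
    exact abs_phi_le hα (hf0 n x)
  rw [Metric.tendsto_atTop]
  intro ε hε
  -- choose T
  obtain ⟨T, hTgt, hT1⟩ :=
    ((tendsto_rpow_atTop (show (0:ℝ) < α - 1 by linarith)).eventually_gt_atTop
      (8 * C / ε)).and (eventually_ge_atTop (1:ℝ)) |>.exists
  have hTpos : (0:ℝ) < T ^ (α - 1) := Real.rpow_pos_of_pos (by linarith) _
  have hT2 : C / T ^ (α - 1) < ε / 8 := by
    rw [div_lt_iff₀ hTpos]
    have h8 : 8 * C < T ^ (α - 1) * ε := (div_lt_iff₀ hε).mp hTgt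
    linarith
  -- phiT integrabilities
  have hphiTfi : ∀ n, Integrable (fun x => phiT T (f n x)) μ := by
    intro n
    refine Integrable.mono' ((hfi n).const_mul T)
      ((measurable_phiT T).comp (hfm n)).aestronglyMeasurable
      (Filter.Eventually.of_forall fun x => ?_)
    rw [Real.norm_eq_abs]
    exact abs_phiT_le (by linarith) (hf0 n x)
  have hphiTgi : Integrable (fun x => phiT T (g x)) μ := by
    refine Integrable.mono' (hgi.const_mul T)
      ((measurable_phiT T).comp hgm).aestronglyMeasurable
      (Filter.Eventually.of_forall fun x => ?_)
    rw [Real.norm_eq_abs]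
    exact abs_phiT_le (by linarith) (hg0 x)
  -- diff bounds
  have hb1 : ∀ n, ∫ x, |f n x * Real.log (f n x) - phiT T (f n x)| ∂μ
      ≤ C / T ^ (α - 1) := by
    intro n
    rw [integral_eq_toReal (h := fun x => |f n x * Real.log (f n x) - phiT T (f n x)|)
      (((hphim n).sub ((measurable_phiT T).comp (hfm n))).abs)
      (fun x => abs_nonneg _)]
    exact ENNReal.toReal_le_of_le_ofReal (by positivity)
      (lint_diff_le (hfm n) (hf0 n) hT1 hα hC (hmom n))
  have hb3 : ∫ x, |g x * Real.log (g x) - phiT T (g x)| ∂μ ≤ C / T ^ (α - 1) := by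
    rw [integral_eq_toReal (h := fun x => |g x * Real.log (g x) - phiT T (g x)|)
      ((hgm.mul (Real.measurable_log.comp hgm)).sub ((measurable_phiT T).comp hgm)).abs
      (fun x => abs_nonneg _)]
    exact ENNReal.toReal_le_of_le_ofReal (by positivity)
      (lint_diff_g_le hfm hf0 hgm hae hT1 hα hC hmom)
  -- Scheffé
  have hsch := scheffe_s7 f g hfm hf0 hf1 hgm hg0 hg1 hae
  have hev : ∀ᶠ n in atTop, (T + 1) * ∫ x, |f n x - g x| ∂μ < ε / 2 := by
    have h := hsch.const_mul (T + 1)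
    rw [mul_zero] at h
    exact h.eventually_lt_const (by linarith)
  obtain ⟨N, hN⟩ := eventually_atTop.mp hev
  refine ⟨N, fun n hn => ?_⟩
  rw [Real.dist_eq]
  -- triangle
  set A := ∫ x, f n x * Real.log (f n x) ∂μ
  set B := ∫ x, phiT T (f n x) ∂μ
  set B' := ∫ x, phiT T (g x) ∂μ
  set D := ∫ x, g x * Real.log (g x) ∂μ
  have t1 : |A - B| ≤ C / T ^ (α - 1) := by
    rw [← integral_sub (hphifi n) (hphiTfi n)]
    refine le_trans ?_ (hb1 n)
    simpa [Real.norm_eq_abs] using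
      norm_integral_le_integral_norm (fun x => f n x * Real.log (f n x) - phiT T (f n x))
  have t3 : |B' - D| ≤ C / T ^ (α - 1) := by
    rw [abs_sub_comm, ← integral_sub hglog hphiTgi]
    refine le_trans ?_ hb3
    simpa [Real.norm_eq_abs] using
      norm_integral_le_integral_norm (fun x => g x * Real.log (g x) - phiT T (g x))
  have t2 : |B - B'| ≤ (T + 1) * ∫ x, |f n x - g x| ∂μ := by
    rw [← integral_sub (hphiTfi n) hphiTgi]
    calc |∫ x, (phiT T (f n x) - phiT T (g x)) ∂μ|
        ≤ ∫ x, |phiT T (f n x) - phiT T (g x)| ∂μ := by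
          simpa [Real.norm_eq_abs] using
            norm_integral_le_integral_norm (fun x => phiT T (f n x) - phiT T (g x))
      _ ≤ ∫ x, (T + 1) * |f n x - g x| ∂μ := by
          refine integral_mono ((hphiTfi n).sub hphiTgi).abs
            ((((hfi n).sub hgi).abs).const_mul (T + 1)) ?_
          intro x
          exact phiT_lipschitz hT1 (hf0 n x) (hg0 x)
      _ = (T + 1) * ∫ x, |f n x - g x| ∂μ := integral_const_mul _ _
  have tri : |A - D| ≤ |A - B| + |B - B'| + |B' - D| := by
    calc |A - D| ≤ |A - B'| + |B' - D| := abs_sub_le _ _ _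
      _ ≤ (|A - B| + |B - B'|) + |B' - D| := by
          gcongr
          exact abs_sub_le _ _ _
  have := hN n hn
  linarith
end key

theorem entropy_stmt7 (d : ℕ) (f : ℕ → EuclideanSpace ℝ (Fin d) → ℝ)
    (g : EuclideanSpace ℝ (Fin d) → ℝ)
    (hfm : ∀ n, Measurable (f n)) (hf0 : ∀ n x, 0 ≤ f n x)
    (hf1 : ∀ n, ∫⁻ x, ENNReal.ofReal (f n x) = 1)
    (hgm : Measurable g) (hg0 : ∀ x, 0 ≤ g x)
    (hg1 : ∫⁻ x, ENNReal.ofReal (g x) = 1)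
    (hconv : TendstoInMeasure volume f atTop g)
    (hglog : Integrable (fun x => g x * Real.log (g x)))
    (α : ℝ) (hα : 1 < α)
    (hmom : ∃ C : ℝ, ∀ n,
      ∫⁻ x, ENNReal.ofReal (f n x * |Real.log (f n x)| ^ α) ≤ ENNReal.ofReal C) :
    Tendsto (fun n => -∫ x, f n x * Real.log (f n x)) atTop
      (nhds (-∫ x, g x * Real.log (g x))) := by
  obtain ⟨C, hmomC⟩ := hmom
  have hC' : (0:ℝ) ≤ max C 0 := le_max_right _ _
  have hmom' : ∀ n, ∫⁻ x, ENNReal.ofReal (f n x * |Real.log (f n x)| ^ α)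
      ≤ ENNReal.ofReal (max C 0) :=
    fun n => (hmomC n).trans (ENNReal.ofReal_le_ofReal (le_max_left _ _))
  apply Filter.tendsto_of_subseq_tendsto
  intro ns hns
  have hconv' : TendstoInMeasure volume (fun i => f (ns i)) atTop g :=
    fun ε hε => (hconv ε hε).comp hns
  obtain ⟨ms, _hms, haei⟩ := hconv'.exists_seq_tendsto_ae
  refine ⟨ms, ?_⟩
  have hkey := key_tendsto (μ := (volume : Measure (EuclideanSpace ℝ (Fin d))))
    (f := fun i => f (ns (ms i))) (g := g)
    (fun i => hfm _) (fun i x => hf0 _ _) (fun i => hf1 _) hgm hg0 hg1 haei hglog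
    hα hC' (fun i => hmom' _)
  exact hkey.neg
end

section
/- Let f_n, f be pdfs on ℝ^d with f_n → f in Lebesgue measure and H(f) finite. If there exist constants C₁, C₂, β > 0 with f_n(x) ≤ C₁ for all n and x, and ∫ |x|^β f_n(x) dx ≤ C₂ for all n, then H(f_n) → H(f). -/
open MeasureTheory Filter Metric Topology

section EntropyAux
open Real

lemma neg_mul_log_le_inv_e {t : ℝ} (ht : 0 < t) : -(t * Real.log t) ≤ 1 / Real.exp 1 := by
  have he : (0:ℝ) < Real.exp 1 := Real.exp_pos 1
  have h := Real.log_le_sub_one_of_pos (x := 1 / (t * Real.exp 1)) (by positivity)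
  rw [Real.log_div one_ne_zero (by positivity), Real.log_one, Real.log_mul (ne_of_gt ht) (ne_of_gt he), Real.log_exp] at h
  have h2 : -Real.log t ≤ 1 / (t * Real.exp 1) := by linarith
  calc -(t * Real.log t) = t * (-Real.log t) := by ring
    _ ≤ t * (1 / (t * Real.exp 1)) := mul_le_mul_of_nonneg_left h2 ht.le
    _ = 1 / Real.exp 1 := by field_simp

lemma neg_mul_log_le_sqrt {t : ℝ} (ht : 0 ≤ t) :
    -(t * Real.log t) ≤ (2 / Real.exp 1) * Real.sqrt t := by
  rcases eq_or_lt_of_le ht with h | h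
  · simp [← h]
  · have hs : 0 < Real.sqrt t := Real.sqrt_pos.2 h
    have hts : t = Real.sqrt t * Real.sqrt t := (Real.mul_self_sqrt ht).symm
    have hlog : Real.log t = 2 * Real.log (Real.sqrt t) := by
      have := Real.log_sqrt ht; linarith
    have key := neg_mul_log_le_inv_e hs
    calc -(t * Real.log t) = 2 * Real.sqrt t * (-(Real.sqrt t * Real.log (Real.sqrt t))) := by
          rw [hlog]; linear_combination (-2 * Real.log (Real.sqrt t)) * hts
      _ ≤ 2 * Real.sqrt t * (1 / Real.exp 1) := mul_le_mul_of_nonneg_left key (by positivity)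
      _ = (2 / Real.exp 1) * Real.sqrt t := by ring

lemma log_one_add_le {p u : ℝ} (hp : 0 < p) (hu : 0 ≤ u) :
    Real.log (1 + u) ≤ 1 + (1 / p) * u ^ p := by
  rcases le_or_gt u 1 with h | h
  · have h1 : Real.log (1 + u) ≤ u := by
      have := Real.log_le_sub_one_of_pos (x := 1 + u) (by linarith)
      linarith
    have : (0:ℝ) ≤ (1/p) * u ^ p := by positivity
    linarith
  · have hu0 : 0 < u := by linarith
    have h1 : Real.log (1 + u) ≤ Real.log (2 * u) :=
      Real.log_le_log (by linarith) (by linarith)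
    have h2 : Real.log (2 * u) = Real.log 2 + Real.log u := Real.log_mul two_ne_zero (ne_of_gt hu0)
    have h3 : Real.log 2 ≤ 1 := by
      have := Real.log_le_sub_one_of_pos (x := (2:ℝ)) (by norm_num)
      linarith
    have h4 : Real.log u = (1/p) * Real.log (u ^ p) := by
      rw [Real.log_rpow hu0]; field_simp
    have h5 : Real.log (u ^ p) ≤ u ^ p - 1 := Real.log_le_sub_one_of_pos (Real.rpow_pos_of_pos hu0 p)
    have h6 : (1/p) * Real.log (u^p) ≤ (1/p) * (u^p) := by
      have h7 : (1/p) * Real.log (u^p) ≤ (1/p) * (u^p - 1) :=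
        mul_le_mul_of_nonneg_left h5 (by positivity)
      have hp' : (0:ℝ) < 1/p := by positivity
      nlinarith
    calc Real.log (1+u) ≤ Real.log 2 + Real.log u := by rw [← h2]; exact h1
      _ ≤ 1 + (1/p) * u ^ p := by rw [h4]; linarith

/-- main pointwise bound -/
lemma phi_abs_le {C₁ s p : ℝ} (hC₁ : 0 < C₁) (hs : 0 < s) (hp : 0 < p) {t u : ℝ}
    (ht0 : 0 ≤ t) (ht1 : t ≤ C₁) (hu : 0 ≤ u) :
    |t * Real.log t| ≤ (max (Real.log C₁) 0 + s + (s/p) * u^p) * t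
      + (2 / Real.exp 1) * (1+u) ^ (-(s/2)) := by
  have hA : 0 ≤ max (Real.log C₁) 0 := le_max_right _ _
  have hup : 0 ≤ (s/p) * u^p := by positivity
  have hpsi : 0 ≤ (2 / Real.exp 1) * (1+u) ^ (-(s/2)) := by positivity
  have hKt : 0 ≤ (max (Real.log C₁) 0 + s + (s/p) * u^p) * t := by positivity
  rcases le_or_gt t 1 with htle | htgt
  · -- t ≤ 1, log t ≤ 0
    rcases eq_or_lt_of_le ht0 with h0 | h0
    · simp [← h0]; positivity
    have hlt : Real.log t ≤ 0 := Real.log_nonpos ht0 htle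
    have habs : |t * Real.log t| = -(t * Real.log t) := by
      rw [abs_of_nonpos]; exact mul_nonpos_of_nonneg_of_nonpos ht0 hlt
    rw [habs]
    rcases le_or_gt ((1+u) ^ (-s)) t with hcase | hcase
    · -- middle case
      have hlog2 : -Real.log t ≤ s * Real.log (1+u) := by
        have := Real.log_le_log (Real.rpow_pos_of_pos (by linarith) _) hcase
        rw [Real.log_rpow (by linarith : (0:ℝ) < 1+u)] at this
        linarith
      have hl3 : s * Real.log (1+u) ≤ s * (1 + (1/p) * u^p) :=
        mul_le_mul_of_nonneg_left (log_one_add_le hp hu) hs.le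
      have : -(t * Real.log t) ≤ (s + (s/p) * u^p) * t := by
        have := mul_le_mul_of_nonneg_left (le_trans hlog2 hl3) ht0
        calc -(t * Real.log t) = t * (-Real.log t) := by ring
          _ ≤ t * (s * (1 + (1/p) * u^p)) := by
              exact mul_le_mul_of_nonneg_left (le_trans hlog2 hl3) ht0
          _ = (s + (s/p) * u^p) * t := by field_simp
      have h9 : (s + (s/p) * u^p) * t ≤ (max (Real.log C₁) 0 + s + (s/p) * u^p) * t := by
        apply mul_le_mul_of_nonneg_right _ ht0; linarith
      linarith
    · -- small case
      have h1 : -(t * Real.log t) ≤ (2 / Real.exp 1) * Real.sqrt t := neg_mul_log_le_sqrt ht0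
      have h2 : Real.sqrt t ≤ (1+u) ^ (-(s/2)) := by
        have h3 : Real.sqrt t ≤ Real.sqrt ((1+u) ^ (-s)) := Real.sqrt_le_sqrt hcase.le
        have h4 : Real.sqrt ((1+u) ^ (-s)) = (1+u) ^ (-(s/2)) := by
          rw [Real.sqrt_eq_rpow, ← Real.rpow_mul (by linarith : (0:ℝ) ≤ 1+u)]
          ring_nf
        rw [h4] at h3; exact h3
      have h5 : (2 / Real.exp 1) * Real.sqrt t ≤ (2 / Real.exp 1) * (1+u) ^ (-(s/2)) :=
        mul_le_mul_of_nonneg_left h2 (by positivity)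
      linarith
  · -- t > 1
    have hlt : 0 ≤ Real.log t := Real.log_nonneg htgt.le
    have habs : |t * Real.log t| = t * Real.log t := abs_of_nonneg (by positivity)
    have h1 : Real.log t ≤ max (Real.log C₁) 0 :=
      le_trans (Real.log_le_log (by linarith) ht1) (le_max_left _ _)
    have h2 : t * Real.log t ≤ (max (Real.log C₁) 0) * t := by
      calc t * Real.log t ≤ t * max (Real.log C₁) 0 := mul_le_mul_of_nonneg_left h1 ht0
        _ = (max (Real.log C₁) 0) * t := by ring
    have h3 : (max (Real.log C₁) 0) * t ≤ (max (Real.log C₁) 0 + s + (s/p) * u^p) * t := by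
      apply mul_le_mul_of_nonneg_right _ ht0; linarith
    rw [habs]; linarith

lemma phi_abs_le_const {C₁ : ℝ} (hC₁ : 0 < C₁) {t : ℝ} (ht0 : 0 ≤ t) (ht1 : t ≤ C₁) :
    |t * Real.log t| ≤ C₁ * max (Real.log C₁) 0 + 1 / Real.exp 1 := by
  have hA : 0 ≤ max (Real.log C₁) 0 := le_max_right _ _
  rcases le_or_gt t 1 with h | h
  · have hlt : Real.log t ≤ 0 := Real.log_nonpos ht0 h
    rw [abs_of_nonpos (mul_nonpos_of_nonneg_of_nonpos ht0 hlt)]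
    rcases eq_or_lt_of_le ht0 with h0 | h0
    · simp [← h0]; positivity
    · have := neg_mul_log_le_inv_e h0
      nlinarith
  · have hlt : 0 ≤ Real.log t := Real.log_nonneg h.le
    rw [abs_of_nonneg (by positivity)]
    have h1 : Real.log t ≤ max (Real.log C₁) 0 :=
      le_trans (Real.log_le_log (by linarith) ht1) (le_max_left _ _)
    have he : 0 < 1 / Real.exp 1 := by positivity
    nlinarith

lemma coeff_tail {A s β R u t : ℝ} (hA : 0 ≤ A) (hs : 0 < s) (hβ : 0 < β)
    (hR : 1 ≤ R) (hu : R < u) (ht : 0 ≤ t) :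
    (A + s + (s/(β/2)) * u^(β/2)) * t ≤ (A + s + s/(β/2)) * R^(-(β/2)) * (u^β * t) := by
  have hu1 : (1:ℝ) ≤ u := le_trans hR hu.le
  have hu0 : (0:ℝ) < u := by linarith
  have hR0 : (0:ℝ) < R := by linarith
  have hRb : (0:ℝ) < R^(β/2) := Real.rpow_pos_of_pos hR0 _
  have hc : (0:ℝ) < s/(β/2) := by positivity
  have k1 : R^(β/2) ≤ u^(β/2) := Real.rpow_le_rpow hR0.le hu.le (by positivity)
  have k2 : u^(β/2) ≤ u^β := Real.rpow_le_rpow_of_exponent_le hu1 (by linarith)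
  have k3 : u^(β/2) * u^(β/2) = u^β := by
    rw [← Real.rpow_add hu0]; ring_nf
  have hneg : R^(-(β/2)) = (R^(β/2))⁻¹ := Real.rpow_neg hR0.le _
  suffices h : A + s + (s/(β/2)) * u^(β/2) ≤ (A + s + s/(β/2)) * R^(-(β/2)) * u^β by
    calc (A + s + (s/(β/2)) * u^(β/2)) * t ≤ ((A + s + s/(β/2)) * R^(-(β/2)) * u^β) * t :=
          mul_le_mul_of_nonneg_right h ht
      _ = (A + s + s/(β/2)) * R^(-(β/2)) * (u^β * t) := by ring
  rw [hneg]
  have hx : (0:ℝ) < (R^(β/2))⁻¹ := by positivity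
  have e1 : (1:ℝ) ≤ (R^(β/2))⁻¹ * u^β := by
    rw [← inv_mul_cancel₀ (ne_of_gt hRb)]
    exact mul_le_mul_of_nonneg_left (le_trans k1 k2) hx.le
  have e2 : u^(β/2) ≤ (R^(β/2))⁻¹ * u^β := by
    rw [← k3]
    have : R^(β/2) * u^(β/2) ≤ u^(β/2) * u^(β/2) :=
      mul_le_mul_of_nonneg_right k1 (by positivity)
    calc u^(β/2) = (R^(β/2))⁻¹ * (R^(β/2) * u^(β/2)) := by field_simp
      _ ≤ (R^(β/2))⁻¹ * (u^(β/2) * u^(β/2)) := mul_le_mul_of_nonneg_left this hx.le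
  nlinarith [mul_le_mul_of_nonneg_left e2 hc.le, mul_le_mul_of_nonneg_left e1 (by positivity : (0:ℝ) ≤ A + s)]

lemma tri_aux {a b c e ε : ℝ} (h1 : |a - c| < ε/4) (h2 : |b| ≤ ε/4 + ε/4) (h3 : |e| < ε/4)
    (hε : 0 < ε) : |a + b - (c + e)| < ε := by
  have k1 : a + b - (c + e) = ((a - c) + b) + (-e) := by ring
  have k2 := abs_add_le ((a - c) + b) (-e)
  have k3 := abs_add_le (a - c) b
  rw [abs_neg] at k2
  calc |a + b - (c + e)| = |((a - c) + b) + (-e)| := by rw [k1]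
    _ ≤ |(a - c) + b| + |e| := k2
    _ ≤ (|a - c| + |b|) + |e| := by linarith
    _ < ε := by linarith


lemma rpow_half_le_one_add {β u : ℝ} (hβ : 0 < β) (hu : 0 ≤ u) : u^(β/2) ≤ 1 + u^β := by
  rcases le_or_gt u 1 with h | h
  · have := Real.rpow_le_one hu h (by positivity : (0:ℝ) ≤ β/2)
    have : (0:ℝ) ≤ u^β := Real.rpow_nonneg hu β
    nlinarith [Real.rpow_le_one hu h (by positivity : (0:ℝ) ≤ β/2)]
  · have h1 : u^(β/2) ≤ u^β := Real.rpow_le_rpow_of_exponent_le h.le (by linarith)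
    linarith

end EntropyAux

theorem entropy_stmt8 (d : ℕ) (f : ℕ → EuclideanSpace ℝ (Fin d) → ℝ)
    (g : EuclideanSpace ℝ (Fin d) → ℝ)
    (hfm : ∀ n, Measurable (f n)) (hf0 : ∀ n x, 0 ≤ f n x)
    (hf1 : ∀ n, ∫⁻ x, ENNReal.ofReal (f n x) = 1)
    (hgm : Measurable g) (hg0 : ∀ x, 0 ≤ g x)
    (hg1 : ∫⁻ x, ENNReal.ofReal (g x) = 1)
    (hconv : TendstoInMeasure volume f atTop g)
    (hglog : Integrable (fun x => g x * Real.log (g x)))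
    (C₁ C₂ β : ℝ) (hC₁ : 0 < C₁) (hC₂ : 0 < C₂) (hβ : 0 < β)
    (hbd : ∀ n x, f n x ≤ C₁)
    (hmom : ∀ n, ∫⁻ x, ENNReal.ofReal (‖x‖ ^ β * f n x) ≤ ENNReal.ofReal C₂) :
    Tendsto (fun n => -∫ x, f n x * Real.log (f n x)) atTop
      (nhds (-∫ x, g x * Real.log (g x))) := by

  set s : ℝ := 2*((d:ℝ)+1) with hs_def
  have hs : 0 < s := by positivity
  set A : ℝ := max (Real.log C₁) 0 with hA_def
  have hA : 0 ≤ A := le_max_right _ _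
  set p : ℝ := β/2 with hp_def
  have hp : 0 < p := by positivity
  set ψ : EuclideanSpace ℝ (Fin d) → ℝ := fun x => (1+‖x‖) ^ (-(s/2)) with hψ_def
  have hψ0 : ∀ x, 0 ≤ ψ x := fun x => Real.rpow_nonneg (by positivity) _
  have hψInt : Integrable ψ := by
    apply integrable_one_add_norm
    have : Module.finrank ℝ (EuclideanSpace ℝ (Fin d)) = d := finrank_euclideanSpace_fin
    rw [this, hs_def]; push_cast; linarith
  -- integrability of f n
  have hIntf : ∀ n, Integrable (f n) := by
    intro n
    refine ⟨(hfm n).aestronglyMeasurable, ?_⟩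
    rw [hasFiniteIntegral_iff_ofReal (Filter.Eventually.of_forall (hf0 n))]
    rw [hf1 n]; exact ENNReal.one_lt_top
  -- measurability of moment integrand
  have hmomMeas : ∀ n, Measurable (fun x : EuclideanSpace ℝ (Fin d) => ‖x‖^β * f n x) := by
    intro n
    fun_prop
  have hmomInt : ∀ n, Integrable (fun x : EuclideanSpace ℝ (Fin d) => ‖x‖^β * f n x) := by
    intro n
    refine ⟨(hmomMeas n).aestronglyMeasurable, ?_⟩
    rw [hasFiniteIntegral_iff_ofReal (Filter.Eventually.of_forall (fun x =>
      mul_nonneg (Real.rpow_nonneg (norm_nonneg x) β) (hf0 n x)))]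
    exact lt_of_le_of_lt (hmom n) ENNReal.ofReal_lt_top
  have hmomR : ∀ n, ∫ x, ‖x‖^β * f n x ≤ C₂ := by
    intro n
    rw [MeasureTheory.integral_eq_lintegral_of_nonneg_ae (Filter.Eventually.of_forall (fun x =>
      mul_nonneg (Real.rpow_nonneg (norm_nonneg x) β) (hf0 n x)))
      (hmomMeas n).aestronglyMeasurable]
    exact ENNReal.toReal_le_of_le_ofReal hC₂.le (hmom n)
  -- integrability of half-moment
  have hWMeas : ∀ n, Measurable (fun x : EuclideanSpace ℝ (Fin d) => ‖x‖^p * f n x) := by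
    intro n
    fun_prop
  have hWInt : ∀ n, Integrable (fun x : EuclideanSpace ℝ (Fin d) => ‖x‖^p * f n x) := by
    intro n
    refine Integrable.mono ((hIntf n).add (hmomInt n)) (hWMeas n).aestronglyMeasurable
      (Filter.Eventually.of_forall fun x => ?_)
    have h1 : 0 ≤ ‖x‖^p * f n x := mul_nonneg (Real.rpow_nonneg (norm_nonneg x) p) (hf0 n x)
    have h2 : ‖x‖^p * f n x ≤ f n x + ‖x‖^β * f n x := by
      have := rpow_half_le_one_add hβ (norm_nonneg x)
      rw [hp_def]
      nlinarith [hf0 n x, Real.rpow_nonneg (norm_nonneg x) β]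
    have h3 : 0 ≤ f n x + ‖x‖^β * f n x :=
      add_nonneg (hf0 n x) (mul_nonneg (Real.rpow_nonneg (norm_nonneg x) β) (hf0 n x))
    simp only [Pi.add_apply, Real.norm_eq_abs]
    rw [abs_of_nonneg h1, abs_of_nonneg h3]
    exact h2
  -- dominating function
  have hDInt : ∀ n, Integrable (fun x : EuclideanSpace ℝ (Fin d) =>
      (A + s + (s/p)*‖x‖^p) * f n x + (2/Real.exp 1) * ψ x) := by
    intro n
    have h1 := (((hIntf n).const_mul (A+s)).add ((hWInt n).const_mul (s/p))).add
      (hψInt.const_mul (2/Real.exp 1))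
    exact h1.congr (Filter.Eventually.of_forall fun x => by simp only [Pi.add_apply]; ring)
  -- pointwise domination
  have hdom : ∀ n x, |f n x * Real.log (f n x)| ≤
      (A + s + (s/p)*‖x‖^p) * f n x + (2/Real.exp 1) * ψ x := by
    intro n x
    exact phi_abs_le hC₁ hs hp (hf0 n x) (hbd n x) (norm_nonneg x)
  have hphiMeas : ∀ n, AEStronglyMeasurable (fun x : EuclideanSpace ℝ (Fin d) => f n x * Real.log (f n x)) volume := by
    intro n
    exact (Real.continuous_mul_log.measurable.comp (hfm n)).aestronglyMeasurable
  have hphiInt : ∀ n, Integrable (fun x : EuclideanSpace ℝ (Fin d) => f n x * Real.log (f n x)) := by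
    intro n
    refine Integrable.mono (hDInt n) (hphiMeas n) (Filter.Eventually.of_forall fun x => ?_)
    rw [Real.norm_eq_abs, Real.norm_eq_abs]
    exact le_trans (hdom n x) (le_abs_self _)
  -- tails of g and ψ
  have hBmeas : ∀ R : ℝ, MeasurableSet (closedBall (0:EuclideanSpace ℝ (Fin d)) R) := fun R => measurableSet_closedBall
  have htail_univ : (⋃ R : ℕ, closedBall (0:EuclideanSpace ℝ (Fin d)) R) = Set.univ := by
    apply Set.eq_univ_of_forall
    intro x
    obtain ⟨n, hn⟩ := exists_nat_ge ‖x‖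
    exact Set.mem_iUnion.2 ⟨n, by simpa [mem_closedBall, dist_zero_right] using hn⟩
  have htail : ∀ (h : EuclideanSpace ℝ (Fin d) → ℝ), Integrable h →
      Tendsto (fun R : ℕ => ∫ x in (closedBall (0:EuclideanSpace ℝ (Fin d)) R)ᶜ, h x) atTop (𝓝 0) := by
    intro h hh
    have hmono : Monotone (fun R : ℕ => closedBall (0:EuclideanSpace ℝ (Fin d)) R) := fun a b hab =>
      closedBall_subset_closedBall (by exact_mod_cast hab)
    have h1 : Tendsto (fun R : ℕ => ∫ x in closedBall (0:EuclideanSpace ℝ (Fin d)) R, h x) atTop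
        (𝓝 (∫ x in (⋃ R : ℕ, closedBall (0:EuclideanSpace ℝ (Fin d)) R), h x)) :=
      tendsto_setIntegral_of_monotone (fun R => hBmeas R) hmono (by
        rw [htail_univ]; exact hh.integrableOn)
    rw [htail_univ, MeasureTheory.setIntegral_univ] at h1
    have h2 : ∀ R : ℕ, ∫ x in (closedBall (0:EuclideanSpace ℝ (Fin d)) R)ᶜ, h x
        = (∫ x, h x) - ∫ x in closedBall (0:EuclideanSpace ℝ (Fin d)) R, h x := by
      intro R
      have h3 := MeasureTheory.integral_add_compl (hBmeas (R:ℝ)) hh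
      exact eq_sub_of_add_eq' h3
    simp_rw [h2]
    have := h1.const_sub (∫ x, h x)
    simpa using this
  -- uniform tail bound for f n
  have htailf : ∀ (R : ℝ), 1 ≤ R → ∀ n,
      |∫ x in (closedBall (0:EuclideanSpace ℝ (Fin d)) R)ᶜ, f n x * Real.log (f n x)| ≤
      (A + s + s/p) * R^(-p) * C₂ + (2/Real.exp 1) * ∫ x in (closedBall (0:EuclideanSpace ℝ (Fin d)) R)ᶜ, ψ x := by
    intro R hR n
    have hBc : MeasurableSet ((closedBall (0:EuclideanSpace ℝ (Fin d)) R)ᶜ) := (hBmeas R).compl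
    have hmem : ∀ x : EuclideanSpace ℝ (Fin d), x ∈ (closedBall (0:EuclideanSpace ℝ (Fin d)) R)ᶜ → R < ‖x‖ := by
      intro x hx
      simp only [Set.mem_compl_iff, mem_closedBall, dist_zero_right, not_le] at hx
      exact hx
    have hRHSInt : Integrable (fun x : EuclideanSpace ℝ (Fin d) =>
        (A + s + s/p) * R^(-p) * (‖x‖^β * f n x) + (2/Real.exp 1) * ψ x) := by
      exact ((hmomInt n).const_mul _).add (hψInt.const_mul _)
    calc |∫ x in (closedBall (0:EuclideanSpace ℝ (Fin d)) R)ᶜ, f n x * Real.log (f n x)|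
        ≤ ∫ x in (closedBall (0:EuclideanSpace ℝ (Fin d)) R)ᶜ, |f n x * Real.log (f n x)| := by
          have hni := norm_integral_le_integral_norm
            (μ := volume.restrict (closedBall (0:EuclideanSpace ℝ (Fin d)) R)ᶜ)
            (fun x => f n x * Real.log (f n x))
          simp only [Real.norm_eq_abs] at hni
          exact hni
      _ ≤ ∫ x in (closedBall (0:EuclideanSpace ℝ (Fin d)) R)ᶜ,
            ((A + s + s/p) * R^(-p) * (‖x‖^β * f n x) + (2/Real.exp 1) * ψ x) := by
          apply setIntegral_mono_on ((hphiInt n).abs.integrableOn) hRHSInt.integrableOn hBc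
          intro x hx
          have hRx := hmem x hx
          have h1 := hdom n x
          have h2 : (A + s + (s/p)*‖x‖^p) * f n x ≤
              (A + s + s/p) * R^(-p) * (‖x‖^β * f n x) := by
            have := coeff_tail (A := A) hA hs hβ hR hRx (hf0 n x)
            rw [hp_def]
            convert this using 3 <;> rw [hp_def]
          linarith
      _ = (A + s + s/p) * R^(-p) * (∫ x in (closedBall (0:EuclideanSpace ℝ (Fin d)) R)ᶜ, ‖x‖^β * f n x)
            + (2/Real.exp 1) * ∫ x in (closedBall (0:EuclideanSpace ℝ (Fin d)) R)ᶜ, ψ x := by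
          rw [MeasureTheory.integral_add (((hmomInt n).const_mul _).integrableOn)
            ((hψInt.const_mul _).integrableOn), integral_const_mul,
            integral_const_mul]
      _ ≤ (A + s + s/p) * R^(-p) * C₂ + (2/Real.exp 1) * ∫ x in (closedBall (0:EuclideanSpace ℝ (Fin d)) R)ᶜ, ψ x := by
          have h1 : ∫ x in (closedBall (0:EuclideanSpace ℝ (Fin d)) R)ᶜ, ‖x‖^β * f n x ≤ ∫ x, ‖x‖^β * f n x :=
            setIntegral_le_integral (hmomInt n) (Filter.Eventually.of_forall fun x =>
              mul_nonneg (Real.rpow_nonneg (norm_nonneg x) β) (hf0 n x))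
          have h2 : (0:ℝ) ≤ (A + s + s/p) * R^(-p) := by positivity
          nlinarith [hmomR n]
  -- ball convergence
  have hball : ∀ R : ℝ, Tendsto (fun n => ∫ x in closedBall (0:EuclideanSpace ℝ (Fin d)) R, f n x * Real.log (f n x))
      atTop (𝓝 (∫ x in closedBall (0:EuclideanSpace ℝ (Fin d)) R, g x * Real.log (g x))) := by
    intro R
    apply tendsto_of_subseq_tendsto
    intro ns hns
    have h' : TendstoInMeasure volume (fun i => f (ns i)) atTop g := fun ε hε =>
      (hconv ε hε).comp hns
    obtain ⟨ms, hms, hae⟩ := h'.exists_seq_tendsto_ae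
    refine ⟨ms, ?_⟩
    have hfin : IsFiniteMeasure (volume.restrict (closedBall (0:EuclideanSpace ℝ (Fin d)) R)) :=
      ⟨by rw [Measure.restrict_apply_univ]; exact measure_closedBall_lt_top⟩
    apply tendsto_integral_of_dominated_convergence
      (bound := fun _ => C₁ * A + 1/Real.exp 1)
    · intro k
      exact ((Real.continuous_mul_log.measurable.comp (hfm _)).aestronglyMeasurable).restrict
    · exact integrable_const _
    · intro k
      apply Filter.Eventually.of_forall
      intro x
      rw [Real.norm_eq_abs]
      exact phi_abs_le_const hC₁ (hf0 _ x) (hbd _ x)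
    · apply ae_restrict_of_ae
      filter_upwards [hae] with x hx
      exact (Real.continuous_mul_log.tendsto (g x)).comp hx
  -- assemble
  have main : Tendsto (fun n => ∫ x, f n x * Real.log (f n x)) atTop
      (𝓝 (∫ x, g x * Real.log (g x))) := by
    rw [Metric.tendsto_atTop]
    intro ε hε
    -- choose radius
    have hc3 : (0:ℝ) ≤ (A + s + s/p) * C₂ := by positivity
    have t1 : Tendsto (fun R : ℕ => (A + s + s/p) * ((R:ℝ))^(-p) * C₂) atTop (𝓝 0) := by
      have h0 : Tendsto (fun x : ℝ => x^(-p)) atTop (𝓝 0) := tendsto_rpow_neg_atTop hp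
      have h1 : Tendsto (fun R : ℕ => ((R:ℝ))^(-p)) atTop (𝓝 0) :=
        h0.comp tendsto_natCast_atTop_atTop
      have h2 := (h1.const_mul (A + s + s/p)).mul_const C₂
      simpa using h2
    have t2 : Tendsto (fun R : ℕ => (2/Real.exp 1) * ∫ x in (closedBall (0:EuclideanSpace ℝ (Fin d)) R)ᶜ, ψ x)
        atTop (𝓝 0) := by
      have := (htail ψ hψInt).const_mul (2/Real.exp 1)
      simpa using this
    have t3 : Tendsto (fun R : ℕ => ∫ x in (closedBall (0:EuclideanSpace ℝ (Fin d)) R)ᶜ, |g x * Real.log (g x)|)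
        atTop (𝓝 0) := htail _ hglog.abs
    have e1 : ∀ᶠ R : ℕ in atTop, (A + s + s/p) * ((R:ℝ))^(-p) * C₂ < ε/4 :=
      t1.eventually (eventually_lt_nhds (by linarith : (0:ℝ) < ε/4)) |>.mono (fun _ h => h)
    have e2 : ∀ᶠ R : ℕ in atTop, (2/Real.exp 1) * (∫ x in (closedBall (0:EuclideanSpace ℝ (Fin d)) R)ᶜ, ψ x) < ε/4 :=
      t2.eventually (eventually_lt_nhds (by linarith : (0:ℝ) < ε/4)) |>.mono (fun _ h => h)
    have e3 : ∀ᶠ R : ℕ in atTop, (∫ x in (closedBall (0:EuclideanSpace ℝ (Fin d)) R)ᶜ, |g x * Real.log (g x)|) < ε/4 :=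
      t3.eventually (eventually_lt_nhds (by linarith : (0:ℝ) < ε/4)) |>.mono (fun _ h => h)
    have e4 : ∀ᶠ R : ℕ in atTop, (1:ℝ) ≤ (R:ℝ) := by
      filter_upwards [Filter.eventually_ge_atTop 1] with R hR
      exact_mod_cast hR
    obtain ⟨R, hRall⟩ := (((e1.and e2).and e3).and e4).exists
    obtain ⟨⟨⟨hR1, hR2⟩, hR3⟩, hR4⟩ := hRall
    -- ball convergence at this R
    have hb := hball (R:ℝ)
    rw [Metric.tendsto_atTop] at hb
    obtain ⟨N, hN⟩ := hb (ε/4) (by linarith)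
    refine ⟨N, fun n hn => ?_⟩
    have hsplit_f : ∫ x, f n x * Real.log (f n x)
        = (∫ x in closedBall (0:EuclideanSpace ℝ (Fin d)) (R:ℝ), f n x * Real.log (f n x))
          + ∫ x in (closedBall (0:EuclideanSpace ℝ (Fin d)) (R:ℝ))ᶜ, f n x * Real.log (f n x) :=
      (MeasureTheory.integral_add_compl (hBmeas _) (hphiInt n)).symm
    have hsplit_g : ∫ x, g x * Real.log (g x)
        = (∫ x in closedBall (0:EuclideanSpace ℝ (Fin d)) (R:ℝ), g x * Real.log (g x))
          + ∫ x in (closedBall (0:EuclideanSpace ℝ (Fin d)) (R:ℝ))ᶜ, g x * Real.log (g x) :=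
      (MeasureTheory.integral_add_compl (hBmeas _) hglog).symm
    have hgtail : |∫ x in (closedBall (0:EuclideanSpace ℝ (Fin d)) (R:ℝ))ᶜ, g x * Real.log (g x)| ≤
        ∫ x in (closedBall (0:EuclideanSpace ℝ (Fin d)) (R:ℝ))ᶜ, |g x * Real.log (g x)| := by
      have hni := norm_integral_le_integral_norm
        (μ := volume.restrict (closedBall (0:EuclideanSpace ℝ (Fin d)) (R:ℝ))ᶜ)
        (fun x => g x * Real.log (g x))
      simp only [Real.norm_eq_abs] at hni
      exact hni
    have hftail := htailf (R:ℝ) hR4 n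
    have hballn := hN n hn
    rw [Real.dist_eq] at hballn ⊢
    rw [hsplit_f, hsplit_g]
    have habs2 : |∫ x in (closedBall (0:EuclideanSpace ℝ (Fin d)) (R:ℝ))ᶜ,
        f n x * Real.log (f n x)| ≤ ε/4 + ε/4 := by
      calc |∫ x in (closedBall (0:EuclideanSpace ℝ (Fin d)) (R:ℝ))ᶜ, f n x * Real.log (f n x)|
          ≤ (A + s + s/p) * (R:ℝ)^(-p) * C₂
            + (2/Real.exp 1) * ∫ x in (closedBall (0:EuclideanSpace ℝ (Fin d)) (R:ℝ))ᶜ, ψ x :=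
            hftail
        _ ≤ ε/4 + ε/4 := by
            linarith [hR1, hR2]
    exact tri_aux hballn habs2 (lt_of_le_of_lt hgtail hR3) (by linarith)
  exact main.neg
end

section
/- Suppose f_n ≤ C₁ everywhere and ∫ |x|^β f_n dx ≤ C₂ for all n, where f_n are pdfs on ℝ^d and C₁, C₂, β > 0. Then sup_n ∫ f_n·(log f_n)² dλ < ∞. -/
open MeasureTheory Filter

lemma sqrt_bound_aux {t : ℝ} (ht : 0 < t) (ht1 : t ≤ 1) :
    t * Real.log t ^ 2 ≤ 16 * Real.sqrt t := by
  set s : ℝ := -Real.log t with hs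
  have hs0 : 0 ≤ s := by
    have := Real.log_nonpos ht.le ht1
    simp [hs]; linarith
  have hts : t = Real.exp (-s) := by rw [hs, neg_neg, Real.exp_log ht]
  have hsq : Real.sqrt t = Real.exp (-s / 2) := by
    rw [hts, Real.exp_half]
  have h1 : s / 4 + 1 ≤ Real.exp (s / 4) := by
    have := Real.add_one_le_exp (s / 4); linarith
  have h2 : s ^ 2 ≤ 16 * Real.exp (s / 2) := by
    have hexp : Real.exp (s / 4) ^ 2 = Real.exp (s / 2) := by
      rw [sq, ← Real.exp_add]; ring_nf
    nlinarith [Real.exp_pos (s / 4)]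
  have hlt : Real.log t ^ 2 = s ^ 2 := by rw [hs]; ring
  rw [hlt, hsq, hts]
  have hkey : Real.exp (-s) * Real.exp (s / 2) = Real.exp (-s / 2) := by
    rw [← Real.exp_add]; ring_nf
  calc Real.exp (-s) * s ^ 2 ≤ Real.exp (-s) * (16 * Real.exp (s / 2)) := by
        exact mul_le_mul_of_nonneg_left h2 (Real.exp_pos _).le
    _ = 16 * Real.exp (-s / 2) := by rw [← hkey]; ring


set_option maxHeartbeats 1000000 in
lemma pointwise_bound (d : ℕ) {M t r β : ℝ} (hM : 1 ≤ M) (ht0 : 0 ≤ t) (htM : t ≤ M)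
    (hr : 0 ≤ r) (hβ : 0 < β) :
    t * Real.log t ^ 2 ≤
      Real.log M ^ 2 * t + ((2 * ((d : ℝ) + 1)) ^ 2 * (4 / β ^ 2) * 2 ^ β) * t
        + ((2 * ((d : ℝ) + 1)) ^ 2 * (4 / β ^ 2) * 2 ^ β) * (r ^ β * t)
        + 16 * (1 + r) ^ (-((d : ℝ) + 1)) := by
  obtain ⟨c, hcdef⟩ : ∃ c : ℝ, c = (2 * ((d : ℝ) + 1)) ^ 2 * (4 / β ^ 2) := ⟨_, rfl⟩
  obtain ⟨K, hKdef⟩ : ∃ K : ℝ, K = c * 2 ^ β := ⟨_, rfl⟩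
  have hgoal : (2 * ((d : ℝ) + 1)) ^ 2 * (4 / β ^ 2) * 2 ^ β = K := by rw [hKdef, hcdef]
  rw [hgoal]
  have h2β : (0:ℝ) < 2 ^ β := Real.rpow_pos_of_pos (by norm_num) β
  have hc : 0 < c := by rw [hcdef]; positivity
  have hK : 0 < K := by rw [hKdef]; positivity
  have hlogM : 0 ≤ Real.log M := Real.log_nonneg hM
  have hrβ : 0 ≤ r ^ β := Real.rpow_nonneg hr β
  have h1r : (0:ℝ) < 1 + r := by linarith
  have htail : 0 < (1 + r) ^ (-((d : ℝ) + 1)) := Real.rpow_pos_of_pos h1r _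
  rcases eq_or_lt_of_le ht0 with h0 | htpos
  · rw [← h0]
    nlinarith
  rcases le_or_gt 1 t with ht1 | ht1
  · -- t ≥ 1
    have hlt : 0 ≤ Real.log t := Real.log_nonneg ht1
    have hle : Real.log t ≤ Real.log M := Real.log_le_log htpos htM
    have hsqle : Real.log t ^ 2 ≤ Real.log M ^ 2 := by nlinarith
    nlinarith [mul_le_mul_of_nonneg_left hsqle ht0, mul_nonneg hK.le ht0,
      mul_nonneg hK.le (mul_nonneg hrβ ht0)]
  · -- t < 1
    obtain ⟨g, hgdef⟩ : ∃ g : ℝ, g = (1 + r) ^ (-(2 * ((d:ℝ) + 1))) := ⟨_, rfl⟩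
    have hg : 0 < g := by rw [hgdef]; exact Real.rpow_pos_of_pos h1r _
    rcases le_or_gt g t with hgt | hgt
    · -- g ≤ t : use log bound
      have hloggt : Real.log g ≤ Real.log t := Real.log_le_log hg hgt
      have hlogg : Real.log g = -(2 * ((d:ℝ) + 1)) * Real.log (1 + r) := by
        rw [hgdef]; exact Real.log_rpow h1r _
      have hlognn : -Real.log t ≤ 2 * ((d:ℝ) + 1) * Real.log (1 + r) := by
        rw [hlogg] at hloggt; linarith
      have hltneg : Real.log t ≤ 0 := Real.log_nonpos ht0 ht1.le
      have hlog1r : 0 ≤ Real.log (1 + r) := Real.log_nonneg (by linarith)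
      have hb2 : Real.log ((1 + r) ^ (β/2)) ≤ (1 + r) ^ (β/2) - 1 :=
        Real.log_le_sub_one_of_pos (Real.rpow_pos_of_pos h1r _)
      have hb3 : Real.log ((1 + r) ^ (β/2)) = (β/2) * Real.log (1 + r) := Real.log_rpow h1r _
      have hrp : (0:ℝ) < (1 + r) ^ (β/2) := Real.rpow_pos_of_pos h1r _
      have hb4 : Real.log (1 + r) ≤ (2/β) * (1 + r) ^ (β/2) := by
        rw [hb3] at hb2
        rw [div_mul_eq_mul_div, le_div_iff₀ hβ]
        nlinarith
      have hsq : ((1 + r) ^ (β/2)) ^ 2 = (1 + r) ^ β := by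
        rw [← Real.rpow_natCast ((1 + r) ^ (β/2)) 2, ← Real.rpow_mul h1r.le]
        norm_num
      have hpoly : (1 + r) ^ β ≤ 2 ^ β * (1 + r ^ β) := by
        rcases le_or_gt r 1 with hr1 | hr1
        · have h1 : (1 + r) ^ β ≤ (2:ℝ) ^ β :=
            Real.rpow_le_rpow h1r.le (by linarith) hβ.le
          nlinarith
        · have h1 : (1 + r) ^ β ≤ (2 * r) ^ β :=
            Real.rpow_le_rpow h1r.le (by linarith) hβ.le
          have h2 : ((2:ℝ) * r) ^ β = 2 ^ β * r ^ β :=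
            Real.mul_rpow (by norm_num) hr
          nlinarith
      have hsq2 : Real.log t ^ 2 ≤ c * (1 + r) ^ β := by
        have h5 : Real.log t ^ 2 ≤ (2 * ((d:ℝ)+1) * Real.log (1+r)) ^ 2 := by nlinarith
        have h6 : (Real.log (1+r)) ^ 2 ≤ (2/β) ^ 2 * ((1 + r) ^ (β/2)) ^ 2 := by nlinarith
        rw [hsq] at h6
        rw [hcdef]
        calc Real.log t ^ 2 ≤ (2*((d:ℝ)+1))^2 * (Real.log (1+r))^2 := by nlinarith
          _ ≤ (2*((d:ℝ)+1))^2 * ((2/β)^2 * (1+r)^β) :=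
              mul_le_mul_of_nonneg_left h6 (by positivity)
          _ = (2 * ((d:ℝ) + 1)) ^ 2 * (4 / β ^ 2) * (1+r)^β := by ring
      have hfin : Real.log t ^ 2 ≤ K * (1 + r ^ β) := by
        rw [hKdef]
        nlinarith [mul_le_mul_of_nonneg_left hpoly hc.le]
      nlinarith [mul_le_mul_of_nonneg_left hfin htpos.le]
    · -- t < g : use sqrt bound
      have h1 : t * Real.log t ^ 2 ≤ 16 * Real.sqrt t := sqrt_bound_aux htpos ht1.le
      have h2 : Real.sqrt t ≤ Real.sqrt g := Real.sqrt_le_sqrt hgt.le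
      have h3 : Real.sqrt g = (1 + r) ^ (-((d:ℝ)+1)) := by
        rw [hgdef, Real.sqrt_eq_rpow, ← Real.rpow_mul h1r.le]
        congr 1; ring
      rw [h3] at h2
      nlinarith [mul_nonneg hK.le ht0, mul_nonneg hK.le (mul_nonneg hrβ ht0),
        mul_nonneg (mul_nonneg hlogM hlogM) ht0]


set_option maxHeartbeats 1000000 in
theorem entropy_stmt9 (d : ℕ) (f : ℕ → EuclideanSpace ℝ (Fin d) → ℝ)
    (hfm : ∀ n, Measurable (f n)) (hf0 : ∀ n x, 0 ≤ f n x)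
    (hf1 : ∀ n, ∫⁻ x, ENNReal.ofReal (f n x) = 1)
    (C₁ C₂ β : ℝ) (hC₁ : 0 < C₁) (hC₂ : 0 < C₂) (hβ : 0 < β)
    (hbd : ∀ n x, f n x ≤ C₁)
    (hmom : ∀ n, ∫⁻ x, ENNReal.ofReal (‖x‖ ^ β * f n x) ≤ ENNReal.ofReal C₂) :
    ∃ B : ℝ, ∀ n,
      ∫⁻ x, ENNReal.ofReal (f n x * (Real.log (f n x)) ^ 2) ≤ ENNReal.ofReal B := by
  set M : ℝ := max C₁ 1 with hMdef
  have hM1 : (1:ℝ) ≤ M := le_max_right _ _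
  set K : ℝ := (2 * ((d : ℝ) + 1)) ^ 2 * (4 / β ^ 2) * 2 ^ β with hKdef
  have hK : 0 < K := by positivity
  have hlogM : 0 ≤ Real.log M := Real.log_nonneg hM1
  -- integrable tail
  have hint : Integrable (fun x : EuclideanSpace ℝ (Fin d) => (1 + ‖x‖) ^ (-((d:ℝ)+1))) := by
    apply integrable_one_add_norm
    simp only [finrank_euclideanSpace_fin]
    linarith
  have hint16 : Integrable (fun x : EuclideanSpace ℝ (Fin d) =>
      16 * (1 + ‖x‖) ^ (-((d:ℝ)+1))) := hint.const_mul 16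
  set J : ℝ := ∫ x : EuclideanSpace ℝ (Fin d), 16 * (1 + ‖x‖) ^ (-((d:ℝ)+1)) with hJdef
  have hJ : 0 ≤ J := by
    apply integral_nonneg
    intro x; positivity
  refine ⟨Real.log M ^ 2 + K + K * C₂ + J, fun n => ?_⟩
  -- measurability facts
  have m1 : Measurable fun x : EuclideanSpace ℝ (Fin d) =>
      ENNReal.ofReal (Real.log M ^ 2 * f n x) :=
    (measurable_const.mul (hfm n)).ennreal_ofReal
  have m2 : Measurable fun x : EuclideanSpace ℝ (Fin d) =>
      ENNReal.ofReal (K * f n x) := (measurable_const.mul (hfm n)).ennreal_ofReal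
  have mnorm : Measurable fun x : EuclideanSpace ℝ (Fin d) => ‖x‖ ^ β * f n x :=
    by
    have h := hfm n
    fun_prop
  have m3 : Measurable fun x : EuclideanSpace ℝ (Fin d) =>
      ENNReal.ofReal (K * (‖x‖ ^ β * f n x)) :=
    (measurable_const.mul mnorm).ennreal_ofReal
  have key : ∀ x, ENNReal.ofReal (f n x * Real.log (f n x) ^ 2) ≤
      ENNReal.ofReal (Real.log M ^ 2 * f n x) + ENNReal.ofReal (K * f n x)
      + ENNReal.ofReal (K * (‖x‖ ^ β * f n x))
      + ENNReal.ofReal (16 * (1 + ‖x‖) ^ (-((d:ℝ)+1))) := by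
    intro x
    have hb := pointwise_bound d hM1 (hf0 n x)
      (le_trans (hbd n x) (le_max_left _ _)) (norm_nonneg x) hβ
    refine le_trans (ENNReal.ofReal_le_ofReal hb) ?_
    refine le_trans ENNReal.ofReal_add_le (add_le_add ?_ le_rfl)
    refine le_trans ENNReal.ofReal_add_le (add_le_add ?_ le_rfl)
    exact ENNReal.ofReal_add_le
  calc ∫⁻ x, ENNReal.ofReal (f n x * Real.log (f n x) ^ 2)
      ≤ ∫⁻ x, (ENNReal.ofReal (Real.log M ^ 2 * f n x) + ENNReal.ofReal (K * f n x)
        + ENNReal.ofReal (K * (‖x‖ ^ β * f n x))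
        + ENNReal.ofReal (16 * (1 + ‖x‖) ^ (-((d:ℝ)+1)))) := lintegral_mono key
    _ = (∫⁻ x, ENNReal.ofReal (Real.log M ^ 2 * f n x))
        + (∫⁻ x, ENNReal.ofReal (K * f n x))
        + (∫⁻ x, ENNReal.ofReal (K * (‖x‖ ^ β * f n x)))
        + (∫⁻ x, ENNReal.ofReal (16 * (1 + ‖x‖) ^ (-((d:ℝ)+1)))) := by
        rw [lintegral_add_left ((m1.fun_add m2).fun_add m3), lintegral_add_left (m1.fun_add m2),
          lintegral_add_left m1]
    _ ≤ ENNReal.ofReal (Real.log M ^ 2) + ENNReal.ofReal K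
        + ENNReal.ofReal (K * C₂) + ENNReal.ofReal J := by
        gcongr
        · -- first term
          have : ∀ x : EuclideanSpace ℝ (Fin d), ENNReal.ofReal (Real.log M ^ 2 * f n x)
              = ENNReal.ofReal (Real.log M ^ 2) * ENNReal.ofReal (f n x) :=
            fun x => ENNReal.ofReal_mul (by positivity)
          simp_rw [this]
          rw [lintegral_const_mul _ (hfm n).ennreal_ofReal, hf1 n, mul_one]
        · have : ∀ x : EuclideanSpace ℝ (Fin d), ENNReal.ofReal (K * f n x)
              = ENNReal.ofReal K * ENNReal.ofReal (f n x) :=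
            fun x => ENNReal.ofReal_mul hK.le
          simp_rw [this]
          rw [lintegral_const_mul _ (hfm n).ennreal_ofReal, hf1 n, mul_one]
        · have : ∀ x : EuclideanSpace ℝ (Fin d), ENNReal.ofReal (K * (‖x‖ ^ β * f n x))
              = ENNReal.ofReal K * ENNReal.ofReal (‖x‖ ^ β * f n x) :=
            fun x => ENNReal.ofReal_mul hK.le
          simp_rw [this]
          rw [lintegral_const_mul _ mnorm.ennreal_ofReal]
          calc ENNReal.ofReal K * ∫⁻ x, ENNReal.ofReal (‖x‖ ^ β * f n x)
              ≤ ENNReal.ofReal K * ENNReal.ofReal C₂ := by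
                exact mul_le_mul_right (hmom n) _
            _ = ENNReal.ofReal (K * C₂) := (ENNReal.ofReal_mul hK.le).symm
        · rw [← ofReal_integral_eq_lintegral_ofReal hint16
            (Filter.Eventually.of_forall fun x => by positivity)]
    _ ≤ ENNReal.ofReal (Real.log M ^ 2 + K + K * C₂ + J) := by
        rw [ENNReal.ofReal_add (by positivity) hJ, ENNReal.ofReal_add (by positivity)
          (by positivity), ENNReal.ofReal_add (by positivity) hK.le]
end

section
/- Let f_n, f be pdfs on ℝ^d with f_n → f in Lebesgue measure, H(f) finite, f > 0 a.e., and ess sup f_n/f ≤ C for all n and some constant C. Then H(f_n) → H(f). -/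
open MeasureTheory Filter

lemma ulogu_bound {C u : ℝ} (hu : 0 ≤ u) (huc : u ≤ C) :
    |u * Real.log u| ≤ 1 + C * |Real.log C| := by
  have hC : 0 ≤ C := le_trans hu huc
  have hnn : 0 ≤ C * |Real.log C| := mul_nonneg hC (abs_nonneg _)
  rcases eq_or_lt_of_le hu with h0 | h0
  · simp [← h0]; linarith
  rcases le_or_gt u 1 with h1 | h1
  · have := Real.abs_log_mul_self_lt u h0 h1
    rw [mul_comm] at this
    linarith
  · have hC1 : 1 < C := lt_of_lt_of_le h1 huc
    have hlogu : 0 ≤ Real.log u := Real.log_nonneg h1.le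
    rw [abs_of_nonneg (mul_nonneg h0.le hlogu)]
    have hlogC : Real.log u ≤ Real.log C := Real.log_le_log h0 huc
    have h2 : u * Real.log u ≤ C * Real.log C := by nlinarith
    have h3 : C * Real.log C ≤ C * |Real.log C| :=
      mul_le_mul_of_nonneg_left (le_abs_self _) (by linarith)
    linarith

lemma tlogt_bound {C t s : ℝ} (ht : 0 ≤ t) (hs : 0 < s) (htc : t ≤ C * s) :
    |t * Real.log t| ≤ (1 + C * |Real.log C|) * s + C * (s * |Real.log s|) := by
  have hC : 0 ≤ C := by
    by_contra h
    push_neg at h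
    nlinarith
  have hRnn : 0 ≤ (1 + C * |Real.log C|) * s + C * (s * |Real.log s|) := by positivity
  rcases eq_or_lt_of_le ht with h0 | h0
  · simp [← h0]; linarith
  have hu0 : 0 ≤ t / s := div_nonneg ht hs.le
  have huc : t / s ≤ C := (div_le_iff₀ hs).2 (by linarith)
  have key := ulogu_bound hu0 huc
  have hdecomp : t * Real.log t = s * ((t / s) * Real.log (t / s)) + t * Real.log s := by
    rw [Real.log_div (ne_of_gt h0) (ne_of_gt hs)]
    field_simp
    ring
  calc |t * Real.log t| = |s * ((t / s) * Real.log (t / s)) + t * Real.log s| := by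
        rw [hdecomp]
    _ ≤ |s * ((t / s) * Real.log (t / s))| + |t * Real.log s| := abs_add_le _ _
    _ = s * |(t / s) * Real.log (t / s)| + t * |Real.log s| := by
        have e1 : |s * ((t / s) * Real.log (t / s))| = s * |(t / s) * Real.log (t / s)| := by
          rw [abs_mul, abs_of_nonneg hs.le]
        have e2 : |t * Real.log s| = t * |Real.log s| := by
          rw [abs_mul, abs_of_nonneg ht]
        rw [e1, e2]
    _ ≤ s * (1 + C * |Real.log C|) + (C * s) * |Real.log s| := by
        have h1 : s * |(t / s) * Real.log (t / s)| ≤ s * (1 + C * |Real.log C|) :=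
          mul_le_mul_of_nonneg_left key hs.le
        have h2 : t * |Real.log s| ≤ (C * s) * |Real.log s| :=
          mul_le_mul_of_nonneg_right htc (abs_nonneg _)
        linarith
    _ = (1 + C * |Real.log C|) * s + C * (s * |Real.log s|) := by ring

theorem entropy_stmt10 (d : ℕ) (f : ℕ → EuclideanSpace ℝ (Fin d) → ℝ)
    (g : EuclideanSpace ℝ (Fin d) → ℝ)
    (hfm : ∀ n, Measurable (f n)) (hf0 : ∀ n x, 0 ≤ f n x)
    (hf1 : ∀ n, ∫⁻ x, ENNReal.ofReal (f n x) = 1)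
    (hgm : Measurable g) (hg0 : ∀ x, 0 ≤ g x)
    (hg1 : ∫⁻ x, ENNReal.ofReal (g x) = 1)
    (hconv : TendstoInMeasure volume f atTop g)
    (hglog : Integrable (fun x => g x * Real.log (g x)))
    (hgpos : ∀ᵐ x ∂(volume : Measure (EuclideanSpace ℝ (Fin d))), 0 < g x)
    (C : ℝ)
    (hratio : ∀ n, ∀ᵐ x ∂(volume : Measure (EuclideanSpace ℝ (Fin d))),
      f n x ≤ C * g x) :
    Tendsto (fun n => -∫ x, f n x * Real.log (f n x)) atTop
      (nhds (-∫ x, g x * Real.log (g x))) := by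
  -- integrability of g
  have hgint : Integrable g := by
    refine ⟨hgm.aestronglyMeasurable, ?_⟩
    rw [hasFiniteIntegral_iff_ofReal (Eventually.of_forall hg0), hg1]
    exact ENNReal.one_lt_top
  -- integrability of the dominating function
  have habs : (fun x => g x * |Real.log (g x)|)
      = fun x => |g x * Real.log (g x)| := by
    funext x
    rw [abs_mul, abs_of_nonneg (hg0 x)]
  have hGabs : Integrable (fun x => g x * |Real.log (g x)|) := by
    rw [habs]; exact hglog.abs
  set h : EuclideanSpace ℝ (Fin d) → ℝ :=
    fun x => (1 + C * |Real.log C|) * g x + C * (g x * |Real.log (g x)|) with hh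
  have hint : Integrable h := (hgint.const_mul _).add (hGabs.const_mul C)
  have main : Tendsto (fun n => ∫ x, f n x * Real.log (f n x)) atTop
      (nhds (∫ x, g x * Real.log (g x))) := by
    refine tendsto_of_subseq_tendsto fun ns hns => ?_
    obtain ⟨ms, _, hae⟩ := TendstoInMeasure.exists_seq_tendsto_ae
      (fun ε hε => (hconv ε hε).comp hns)
    refine ⟨ms, ?_⟩
    refine tendsto_integral_of_dominated_convergence h
      (fun k => ((hfm _).mul (Real.measurable_log.comp (hfm _))).aestronglyMeasurable)
      hint ?_ ?_
    · intro k
      filter_upwards [hratio (ns (ms k)), hgpos] with x hx hgx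
      calc ‖f (ns (ms k)) x * Real.log (f (ns (ms k)) x)‖
          = |f (ns (ms k)) x * Real.log (f (ns (ms k)) x)| := rfl
        _ ≤ (1 + C * |Real.log C|) * g x + C * (g x * |Real.log (g x)|) :=
            tlogt_bound (hf0 _ x) hgx hx
    · filter_upwards [hae, hgpos] with x hx hgx
      have hcont : ContinuousAt (fun t => t * Real.log t) (g x) :=
        continuousAt_id.mul (Real.continuousAt_log (ne_of_gt hgx))
      exact hcont.tendsto.comp hx
  exact main.neg
end

section
/- Let g be an integrable nonnegative function on a finite measure space. Then there exists a convex function Φ : [0,∞) → [0,∞) with Φ(0) = 0, Φ(t)/t → ∞ as t → ∞, Φ(t) ≤ 4·e^{t/4} for all t ≥ 0, and ∫ Φ(g) dμ < ∞. -/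
open MeasureTheory Filter Topology

theorem entropy_stmt11 {Ω : Type*} [MeasurableSpace Ω] (μ : Measure Ω)
    [IsFiniteMeasure μ]
    (g : Ω → ℝ) (hg0 : ∀ x, 0 ≤ g x) (hgi : Integrable g μ) :
    ∃ Φ : ℝ → ℝ,
      ConvexOn ℝ (Set.Ici 0) Φ ∧
      Φ 0 = 0 ∧
      (∀ t ≥ (0:ℝ), 0 ≤ Φ t) ∧
      Tendsto (fun t => Φ t / t) atTop atTop ∧
      (∀ t ≥ (0:ℝ), Φ t ≤ 4 * Real.exp (t / 4)) ∧
      Integrable (fun x => Φ (g x)) μ := by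
  -- tail integrals tend to zero
  have htail : Tendsto (fun c : ℝ => ∫ x, max 0 (g x - c) ∂μ) atTop (𝓝 0) := by
    have h0 : Tendsto (fun c : ℝ => ∫ x, (0:ℝ) ∂μ) atTop (𝓝 (∫ x, (0:ℝ) ∂μ)) := by
      exact tendsto_const_nhds
    have := tendsto_integral_filter_of_dominated_convergence (μ := μ) (l := (atTop : Filter ℝ))
      (F := fun c : ℝ => fun x => max 0 (g x - c)) (f := fun _ => (0:ℝ)) (bound := g)
      ?_ ?_ hgi ?_
    · simpa using this
    · filter_upwards with c
      exact aestronglyMeasurable_const.sup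
        (hgi.aestronglyMeasurable.sub aestronglyMeasurable_const)
    · filter_upwards [eventually_ge_atTop (0:ℝ)] with c hc
      filter_upwards with x
      rw [Real.norm_eq_abs, abs_of_nonneg (le_max_left _ _)]
      exact max_le (hg0 x) (by linarith [hg0 x])
    · filter_upwards with x
      have : (fun c : ℝ => max 0 (g x - c)) =ᶠ[atTop] fun _ => 0 := by
        filter_upwards [eventually_ge_atTop (g x)] with c hc
        simp [max_eq_left, sub_nonpos.mpr hc]
      exact Tendsto.congr' this.symm tendsto_const_nhds
  -- choose thresholds b n
  have hchoice : ∀ n : ℕ, ∃ c : ℝ, (n:ℝ) ≤ c ∧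
      ∫ x, max 0 (g x - c) ∂μ ≤ (1/2)^n / (n+1) := by
    intro n
    have hε : (0:ℝ) < (1/2)^n / (n+1) := by positivity
    have h1 : ∀ᶠ c : ℝ in atTop, ∫ x, max 0 (g x - c) ∂μ < (1/2)^n / (n+1) :=
      htail.eventually (gt_mem_nhds hε)
    obtain ⟨c, hc1, hc2⟩ := (h1.and (eventually_ge_atTop (n:ℝ))).exists
    exact ⟨c, hc2, hc1.le⟩
  choose b hb1 hb2 using hchoice
  have hb0 : ∀ n, (0:ℝ) ≤ b n := fun n => le_trans (by positivity) (hb1 n)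
  -- the function
  set Φ : ℝ → ℝ := fun t => ⨆ n : ℕ, (n:ℝ) * (t - b n) with hΦ
  -- boundedness of the sup
  have hbdd : ∀ t : ℝ, BddAbove (Set.range fun n : ℕ => (n:ℝ) * (t - b n)) := by
    intro t
    refine ⟨t^2/4, ?_⟩
    rintro y ⟨n, rfl⟩
    have h1 : (n:ℝ) * (t - b n) ≤ (n:ℝ) * (t - n) := by
      have := hb1 n
      nlinarith [Nat.cast_nonneg (α := ℝ) n]
    nlinarith [sq_nonneg (t - 2*n)]
  have hle : ∀ (t : ℝ) (n : ℕ), (n:ℝ) * (t - b n) ≤ Φ t := fun t n => le_ciSup (hbdd t) n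
  have hsup_le : ∀ (t : ℝ) (M : ℝ), (∀ n : ℕ, (n:ℝ) * (t - b n) ≤ M) → Φ t ≤ M :=
    fun t M h => ciSup_le h
  have hΦ0 : ∀ t, 0 ≤ Φ t := fun t => by simpa using hle t 0
  have hΦzero : Φ 0 = 0 := by
    refine le_antisymm (hsup_le 0 0 fun n => ?_) (hΦ0 0)
    have := hb0 n
    nlinarith [Nat.cast_nonneg (α := ℝ) n]
  -- convexity
  have hconv : ConvexOn ℝ (Set.Ici (0:ℝ)) Φ := by
    refine ⟨convex_Ici 0, fun x _ y _ a c ha hc hac => ?_⟩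
    refine hsup_le _ _ fun n => ?_
    have h1 : (n:ℝ) * (a • x + c • y - b n)
        = a * ((n:ℝ) * (x - b n)) + c * ((n:ℝ) * (y - b n)) := by
      simp only [smul_eq_mul]; linear_combination ((n:ℝ) * b n) * hac
    rw [h1]
    exact add_le_add (mul_le_mul_of_nonneg_left (hle x n) ha)
      (mul_le_mul_of_nonneg_left (hle y n) hc)
  -- monotone, hence measurable
  have hmono : Monotone Φ := by
    intro s t hst
    refine hsup_le _ _ fun n => le_trans ?_ (hle t n)
    have : (0:ℝ) ≤ (n:ℝ) := Nat.cast_nonneg n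
    nlinarith
  -- growth
  have hgrow : Tendsto (fun t => Φ t / t) atTop atTop := by
    rw [tendsto_atTop]
    intro C
    obtain ⟨n, hn⟩ := exists_nat_ge (2 * |C|)
    filter_upwards [eventually_ge_atTop (max 1 (2 * b n))] with t ht
    have ht1 : (1:ℝ) ≤ t := le_trans (le_max_left _ _) ht
    have ht2 : 2 * b n ≤ t := le_trans (le_max_right _ _) ht
    have htpos : (0:ℝ) < t := by linarith
    rw [le_div_iff₀ htpos]
    have h1 : C * t ≤ ((n:ℝ)/2) * t := by
      have : C ≤ (n:ℝ)/2 := by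
        have : C ≤ |C| := le_abs_self C
        linarith
      nlinarith
    have h2 : ((n:ℝ)/2) * t ≤ (n:ℝ) * (t - b n) := by
      have : (0:ℝ) ≤ (n:ℝ) := Nat.cast_nonneg n
      nlinarith
    exact le_trans h1 (le_trans h2 (hle t n))
  -- cap
  have hcap : ∀ t ≥ (0:ℝ), Φ t ≤ 4 * Real.exp (t / 4) := by
    intro t ht
    have h1 : Φ t ≤ t^2/4 := by
      refine hsup_le _ _ fun n => ?_
      have : (n:ℝ) * (t - b n) ≤ (n:ℝ) * (t - n) := by
        have := hb1 n
        nlinarith [Nat.cast_nonneg (α := ℝ) n]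
      nlinarith [sq_nonneg (t - 2*n)]
    refine h1.trans ?_
    have hE : 1 + t/16 ≤ Real.exp (t/16) := by
      have := Real.add_one_le_exp (t/16); linarith
    have h4 : Real.exp (t/4) = (Real.exp (t/16))^4 := by
      rw [← Real.exp_nat_mul]; push_cast; ring_nf
    rw [h4]
    have hu : (0:ℝ) ≤ t/16 := by linarith
    set u := t/16 with hudef
    have ht16 : t = 16 * u := by rw [hudef]; ring
    have hE0 : (0:ℝ) < 1 + u := by linarith
    have key : 16 * u^2 ≤ (1+u)^4 := by nlinarith [sq_nonneg (1 - u), sq_nonneg u]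
    have hpow : (1+u)^4 ≤ (Real.exp u)^4 := by
      apply pow_le_pow_left₀ hE0.le hE
    rw [ht16]; nlinarith
  -- pointwise domination by the series
  have hterm0 : ∀ (y : ℝ) (n : ℕ), max 0 ((n:ℝ) * (y - b n)) ≤ 0 → True := fun _ _ _ => trivial
  have hsummable : ∀ x : Ω, Summable fun n : ℕ => max 0 ((n:ℝ) * (g x - b n)) := by
    intro x
    apply summable_of_ne_finset_zero (s := Finset.range ⌈g x⌉₊)
    intro n hn
    simp only [Finset.mem_range, not_lt] at hn
    have h1 : g x ≤ n := le_trans (Nat.le_ceil _) (by exact_mod_cast hn)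
    have h2 : (n:ℝ) * (g x - b n) ≤ 0 := by
      have := hb1 n
      nlinarith [Nat.cast_nonneg (α := ℝ) n]
    simp [max_eq_left h2]
  have hptwise : ∀ x : Ω, Φ (g x) ≤ ∑' n : ℕ, max 0 ((n:ℝ) * (g x - b n)) := by
    intro x
    refine hsup_le _ _ fun n => ?_
    exact le_trans (le_max_right _ _)
      (Summable.le_tsum (hsummable x) n fun m _ => le_max_left _ _)
  -- integrability of each term
  have hterm_int : ∀ n : ℕ, Integrable (fun x => max 0 ((n:ℝ) * (g x - b n))) μ := by
    intro n
    have h1 : Integrable (fun x => (n:ℝ) * (g x - b n)) μ :=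
      ((hgi.sub (integrable_const (b n))).const_mul _)
    exact h1.pos_part.congr (by filter_upwards with x; rw [max_comm])
  have hterm_bound : ∀ n : ℕ,
      ∫ x, max 0 ((n:ℝ) * (g x - b n)) ∂μ ≤ (1/2)^n := by
    intro n
    have heq : ∀ x, max 0 ((n:ℝ) * (g x - b n)) = (n:ℝ) * max 0 (g x - b n) := by
      intro x
      rcases le_total (g x - b n) 0 with h | h
      · rw [max_eq_left (by nlinarith [Nat.cast_nonneg (α := ℝ) n]), max_eq_left h, mul_zero]
      · rw [max_eq_right (by positivity), max_eq_right h]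
    calc ∫ x, max 0 ((n:ℝ) * (g x - b n)) ∂μ
        = (n:ℝ) * ∫ x, max 0 (g x - b n) ∂μ := by
          simp_rw [heq]; exact integral_const_mul _ _
      _ ≤ (n:ℝ) * ((1/2)^n / (n+1)) := by
          apply mul_le_mul_of_nonneg_left (hb2 n) (Nat.cast_nonneg n)
      _ ≤ (1/2)^n := by
          rw [div_eq_mul_inv, ← mul_assoc]
          have h1 : (n:ℝ) * (1/2)^n * ((n:ℝ)+1)⁻¹ ≤ 1 * (1/2)^n := by
            rw [mul_comm ((n:ℝ)) ((1/2:ℝ)^n), mul_assoc, one_mul]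
            apply mul_le_of_le_one_right (by positivity)
            rw [mul_inv_le_iff₀ (by positivity), one_mul]
            linarith
          linarith
  -- measurability of Φ ∘ g
  have hΦmeas : Measurable Φ := hmono.measurable
  have hcomp : AEStronglyMeasurable (fun x => Φ (g x)) μ :=
    (hΦmeas.comp_aemeasurable hgi.aemeasurable).aestronglyMeasurable
  -- integrability
  have hint : Integrable (fun x => Φ (g x)) μ := by
    refine ⟨hcomp, ?_⟩
    rw [hasFiniteIntegral_iff_ofReal (by filter_upwards with x; exact hΦ0 _)]
    have hle1 : ∫⁻ x, ENNReal.ofReal (Φ (g x)) ∂μ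
        ≤ ∫⁻ x, ∑' n : ℕ, ENNReal.ofReal (max 0 ((n:ℝ) * (g x - b n))) ∂μ := by
      apply lintegral_mono
      intro x
      exact le_trans (ENNReal.ofReal_le_ofReal (hptwise x))
        (le_of_eq (ENNReal.ofReal_tsum_of_nonneg (fun n => le_max_left _ _) (hsummable x)))
    have hmeas_n : ∀ n : ℕ, AEMeasurable
        (fun x => ENNReal.ofReal (max 0 ((n:ℝ) * (g x - b n)))) μ :=
      fun n => ENNReal.measurable_ofReal.comp_aemeasurable
        (aemeasurable_const.sup (((hgi.aemeasurable.sub aemeasurable_const).const_mul _)))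
    rw [lintegral_tsum hmeas_n] at hle1
    have hsum_bound : ∑' n : ℕ, ∫⁻ x, ENNReal.ofReal (max 0 ((n:ℝ) * (g x - b n))) ∂μ
        ≤ ∑' n : ℕ, (ENNReal.ofReal (1/2))^n := by
      apply ENNReal.tsum_le_tsum
      intro n
      rw [← ofReal_integral_eq_lintegral_ofReal (hterm_int n)
        (by filter_upwards with x; exact le_max_left _ _)]
      rw [← ENNReal.ofReal_pow (by norm_num)]
      exact ENNReal.ofReal_le_ofReal (hterm_bound n)
    have h12 : ENNReal.ofReal (1/2) = 2⁻¹ := by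
      rw [one_div, ENNReal.ofReal_inv_of_pos (by norm_num), ENNReal.ofReal_ofNat]
    have hgeo : ∑' n : ℕ, (ENNReal.ofReal (1/2))^n < ⊤ := by
      rw [h12, ENNReal.tsum_geometric, ENNReal.one_sub_inv_two]
      simp
    exact lt_of_le_of_lt (hle1.trans hsum_bound) hgeo
  exact ⟨Φ, hconv, hΦzero, fun t _ => hΦ0 t, hgrow, hcap, hint⟩
end

section
/- There exist pdfs f_n and f on [0,1] and a sequence α_n ↓ 1 such that f_n → f almost everywhere, sup_n ∫₀¹ f_n·(|log f_n|)^{α_n} dx < ∞, yet H(f_n) does not converge to H(f). -/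
/-!
Take `f = 1` and let `f_N` put the height `e^N` on `[0, e^{-N}/N]` (mass `1/N`) and a constant
`c_N → 1` elsewhere. Off the spike `f_N → 1`, so `f_N → f` a.e., but the spike always contributes
`e^N · N · e^{-N}/N = 1` to `∫ f_N log f_N`, so `H(f_N) → -1 ≠ 0 = H(f)`. With
`α_N = 1 + 1/log N` the factor `N^{α_N} = e N` keeps the spike's contribution to the moment equal to
`e`, while the rest contributes at most `1`.
-/

open MeasureTheory Filter Set Real Topology

noncomputable section StepFunction

variable {ε : ℝ}

def stepFun (ε a b : ℝ) (x : ℝ) : ℝ := if x ≤ ε then a else b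

lemma apply_stepFun (φ : ℝ → ℝ) (ε a b x : ℝ) :
    φ (stepFun ε a b x) = stepFun ε (φ a) (φ b) x :=
  apply_ite φ _ _ _

lemma measurable_stepFun (ε a b : ℝ) : Measurable (stepFun ε a b) :=
  Measurable.ite measurableSet_Iic measurable_const measurable_const

lemma stepFun_nonneg {a b : ℝ} (ha : 0 ≤ a) (hb : 0 ≤ b) (x : ℝ) : 0 ≤ stepFun ε a b x := by
  unfold stepFun; split_ifs <;> assumption

lemma integrableOn_stepFun (ε a b : ℝ) : IntegrableOn (stepFun ε a b) (Icc 0 1) :=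
  Integrable.of_bound (measurable_stepFun ε a b).aestronglyMeasurable (|a| + |b|)
    (ae_of_all _ fun x => by
      unfold stepFun; split_ifs <;> simp [abs_nonneg])

lemma integral_stepFun (h0 : 0 ≤ ε) (h1 : ε ≤ 1) (a b : ℝ) :
    ∫ x in Icc 0 1, stepFun ε a b x = a * ε + b * (1 - ε) := by
  have hdisj : Disjoint (Icc 0 ε) (Ioc ε 1) :=
    disjoint_left.2 fun x hx hx' => (not_le.2 hx'.1) hx.2
  have h_left : EqOn (stepFun ε a b) (fun _ => a) (Icc 0 ε) := fun x hx => if_pos hx.2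
  have h_right : EqOn (stepFun ε a b) (fun _ => b) (Ioc ε 1) :=
    fun x hx => if_neg (not_le.2 hx.1)
  have hint := integrableOn_stepFun ε a b
  rw [← Icc_union_Ioc_eq_Icc h0 h1] at hint ⊢
  rw [setIntegral_union hdisj measurableSet_Ioc hint.left_of_union hint.right_of_union,
    setIntegral_congr_fun measurableSet_Icc h_left, setIntegral_congr_fun measurableSet_Ioc h_right]
  simp [h0, h1, mul_comm]

lemma lintegral_ofReal_stepFun (h0 : 0 ≤ ε) (h1 : ε ≤ 1) {a b : ℝ} (ha : 0 ≤ a) (hb : 0 ≤ b) :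
    ∫⁻ x in Icc 0 1, ENNReal.ofReal (stepFun ε a b x) = ENNReal.ofReal (a * ε + b * (1 - ε)) := by
  rw [← integral_stepFun h0 h1, ofReal_integral_eq_lintegral_ofReal (integrableOn_stepFun ε a b)
    (ae_of_all _ (stepFun_nonneg ha hb))]

end StepFunction

noncomputable section SpikeDensity

variable {N : ℝ}

def spikeWidth (N : ℝ) : ℝ := exp (-N) / N

/-- Chosen so that `spikeDensity N` has total mass `1` on `[0, 1]`. -/
def baseLevel (N : ℝ) : ℝ := (1 - 1 / N) / (1 - spikeWidth N)

def spikeDensity (N : ℝ) : ℝ → ℝ := stepFun (spikeWidth N) (exp N) (baseLevel N)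

def momentExponent (N : ℝ) : ℝ := 1 + 1 / log N

lemma spikeWidth_pos (hN : 0 < N) : 0 < spikeWidth N := div_pos (exp_pos _) hN

lemma spikeWidth_le_half (hN : 2 ≤ N) : spikeWidth N ≤ 1 / 2 := by
  have hexp : exp (-N) ≤ 1 := exp_le_one_iff.2 (by linarith)
  rw [spikeWidth, div_le_div_iff₀ (by linarith) two_pos]
  linarith

lemma exp_mul_spikeWidth (hN : N ≠ 0) : exp N * spikeWidth N = 1 / N := by
  rw [spikeWidth, exp_neg]
  field_simp [exp_ne_zero N]

lemma baseLevel_mul_one_sub_spikeWidth (hN : 2 ≤ N) :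
    baseLevel N * (1 - spikeWidth N) = 1 - 1 / N :=
  div_mul_cancel₀ _ (by linarith [spikeWidth_le_half hN])

lemma baseLevel_mem_Icc (hN : 2 ≤ N) : baseLevel N ∈ Icc (1 / 2) 1 := by
  have hw0 := spikeWidth_pos (by linarith : 0 < N)
  have hw := spikeWidth_le_half hN
  have hden : 0 < 1 - spikeWidth N := by linarith
  have hinv : 1 / N ≤ 1 / 2 := one_div_le_one_div_of_le two_pos hN
  have hexp : exp (-N) ≤ 1 := exp_le_one_iff.2 (by linarith)
  have hwN : spikeWidth N ≤ 1 / N := div_le_div_of_nonneg_right hexp (by linarith)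
  constructor
  · rw [baseLevel, le_div_iff₀ hden]; nlinarith
  · rw [baseLevel, div_le_one hden]; linarith

lemma abs_log_baseLevel_le_one (hN : 2 ≤ N) : |log (baseLevel N)| ≤ 1 := by
  obtain ⟨hlow, hhigh⟩ := baseLevel_mem_Icc hN
  have hc : 0 < baseLevel N := by linarith
  have hexp : exp (-1) ≤ 1 / 2 := by
    rw [exp_neg, one_div, inv_le_inv₀ (exp_pos 1) two_pos]
    linarith [add_one_le_exp (1 : ℝ)]
  rw [abs_le]
  constructor
  · simpa using log_le_log (exp_pos _) (hexp.trans hlow)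
  · linarith [log_nonpos hc.le hhigh]

lemma measurable_spikeDensity (N : ℝ) : Measurable (spikeDensity N) := measurable_stepFun _ _ _

lemma spikeDensity_nonneg (hN : 2 ≤ N) (x : ℝ) : 0 ≤ spikeDensity N x :=
  stepFun_nonneg (exp_pos N).le (by linarith [(baseLevel_mem_Icc hN).1]) x

lemma lintegral_spikeDensity (hN : 2 ≤ N) :
    ∫⁻ x in Icc 0 1, ENNReal.ofReal (spikeDensity N x) = 1 := by
  rw [spikeDensity, lintegral_ofReal_stepFun (spikeWidth_pos (by linarith)).le
      (by linarith [spikeWidth_le_half hN]) (exp_pos N).le (by linarith [(baseLevel_mem_Icc hN).1]),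
    exp_mul_spikeWidth (by linarith), baseLevel_mul_one_sub_spikeWidth hN]
  simp

lemma integral_spikeDensity_mul_log (hN : 2 ≤ N) :
    ∫ x in Icc 0 1, spikeDensity N x * log (spikeDensity N x)
      = 1 + baseLevel N * log (baseLevel N) * (1 - spikeWidth N) := by
  have hstep (x : ℝ) : spikeDensity N x * log (spikeDensity N x)
      = stepFun (spikeWidth N) (exp N * log (exp N)) (baseLevel N * log (baseLevel N)) x :=
    apply_stepFun (fun y => y * log y) _ _ _ x
  simp only [hstep]
  rw [integral_stepFun (spikeWidth_pos (by linarith)).le (by linarith [spikeWidth_le_half hN])]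
  have hspike : exp N * log (exp N) * spikeWidth N = 1 := by
    rw [log_exp, mul_right_comm, exp_mul_spikeWidth (by linarith), one_div_mul_cancel (by linarith)]
  rw [hspike]

lemma one_lt_momentExponent (hN : 1 < N) : 1 < momentExponent N := by
  unfold momentExponent
  linarith [one_div_pos.2 (log_pos hN)]

lemma rpow_momentExponent (hN : 1 < N) : N ^ momentExponent N = N * exp 1 := by
  rw [momentExponent, rpow_add (by linarith), rpow_one, rpow_def_of_pos (by linarith),
    mul_one_div_cancel (log_pos hN).ne']

lemma antitoneOn_momentExponent : AntitoneOn momentExponent (Ioi 1) := by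
  intro M hM K _ hMK
  have hlog : log M ≤ log K := log_le_log (by linarith [mem_Ioi.1 hM]) hMK
  unfold momentExponent
  linarith [one_div_le_one_div_of_le (log_pos hM) hlog]

lemma tendsto_momentExponent : Tendsto momentExponent atTop (𝓝 1) := by
  have h : Tendsto (fun N => 1 / log N) atTop (𝓝 0) :=
    tendsto_log_atTop.inv_tendsto_atTop.congr fun N => inv_eq_one_div _
  have h' := (tendsto_const_nhds (x := (1 : ℝ))).add h
  rwa [add_zero] at h'

/-- On the spike the moment is exactly `e`; off it, the integrand is at most `1`. -/
lemma lintegral_spikeDensity_moment_le (hN : 2 ≤ N) :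
    ∫⁻ x in Icc 0 1, ENNReal.ofReal (spikeDensity N x * |log (spikeDensity N x)| ^ momentExponent N)
      ≤ ENNReal.ofReal (exp 1 + 1) := by
  set c := baseLevel N
  set w := spikeWidth N
  set α := momentExponent N
  obtain ⟨hc_low, hc_high⟩ := baseLevel_mem_Icc hN
  have hw0 : 0 < w := spikeWidth_pos (by linarith)
  have hw1 : w ≤ 1 / 2 := spikeWidth_le_half hN
  have hstep (x : ℝ) : spikeDensity N x * |log (spikeDensity N x)| ^ α
      = stepFun w (exp N * |log (exp N)| ^ α) (c * |log c| ^ α) x :=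
    apply_stepFun (fun y => y * |log y| ^ α) _ _ _ x
  simp only [hstep]
  rw [lintegral_ofReal_stepFun hw0.le (by linarith) (by positivity) (by positivity)]
  apply ENNReal.ofReal_le_ofReal
  have hspike : exp N * |log (exp N)| ^ α * w = exp 1 := by
    have hmass : exp N * w = 1 / N := exp_mul_spikeWidth (by linarith)
    rw [log_exp, abs_of_pos (by linarith), rpow_momentExponent (by linarith)]
    calc exp N * (N * exp 1) * w = (exp N * w) * N * exp 1 := by ring
      _ = exp 1 := by rw [hmass, one_div_mul_cancel (by linarith), one_mul]
  have hpow : |log c| ^ α ≤ 1 :=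
    rpow_le_one (abs_nonneg _) (abs_log_baseLevel_le_one hN)
      (by linarith [one_lt_momentExponent (by linarith : 1 < N)])
  have hbase : c * |log c| ^ α ≤ 1 :=
    mul_le_one₀ hc_high (by positivity) hpow
  have hbase' : c * |log c| ^ α * (1 - w) ≤ 1 :=
    mul_le_one₀ hbase (by linarith) (by linarith)
  linarith

lemma tendsto_spikeWidth : Tendsto spikeWidth atTop (𝓝 0) := by
  have h := (tendsto_exp_neg_atTop_nhds_zero).mul tendsto_inv_atTop_zero
  rw [zero_mul] at h
  exact h.congr fun N => (div_eq_mul_inv _ _).symm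

lemma tendsto_baseLevel : Tendsto baseLevel atTop (𝓝 1) := by
  have hnum : Tendsto (fun N : ℝ => 1 - 1 / N) atTop (𝓝 1) := by
    simpa using tendsto_const_nhds.sub
      (tendsto_inv_atTop_zero.congr fun N : ℝ => inv_eq_one_div N)
  have hden : Tendsto (fun N => 1 - spikeWidth N) atTop (𝓝 1) := by
    simpa using tendsto_const_nhds.sub tendsto_spikeWidth
  have h := hnum.div hden one_ne_zero
  rwa [div_one] at h

lemma ae_tendsto_spikeDensity :
    ∀ᵐ x ∂(volume.restrict (Icc (0 : ℝ) 1)), Tendsto (fun N => spikeDensity N x) atTop (𝓝 1) := by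
  rw [← Measure.restrict_congr_set Ioc_ae_eq_Icc]
  filter_upwards [ae_restrict_mem measurableSet_Ioc] with x hx
  refine tendsto_baseLevel.congr' ?_
  filter_upwards [tendsto_spikeWidth.eventually_lt_const hx.1] with N hN
  exact (if_neg (not_le.2 hN)).symm

lemma tendsto_integral_spikeDensity_mul_log :
    Tendsto (fun N => ∫ x in Icc 0 1, spikeDensity N x * log (spikeDensity N x)) atTop (𝓝 1) := by
  have hlog : Tendsto (fun N => log (baseLevel N)) atTop (𝓝 0) := by
    have h := (continuousAt_log one_ne_zero).tendsto.comp tendsto_baseLevel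
    rwa [log_one] at h
  have hbase : Tendsto (fun N => 1 + baseLevel N * log (baseLevel N) * (1 - spikeWidth N))
      atTop (𝓝 1) := by
    simpa using tendsto_const_nhds.add
      ((tendsto_baseLevel.mul hlog).mul (tendsto_const_nhds.sub tendsto_spikeWidth))
  refine hbase.congr' ?_
  filter_upwards [eventually_ge_atTop 2] with N hN
  exact (integral_spikeDensity_mul_log hN).symm

end SpikeDensity

theorem entropy_stmt13 :
    ∃ (f : ℕ → ℝ → ℝ) (g : ℝ → ℝ) (α : ℕ → ℝ),
      (∀ n, Measurable (f n)) ∧ (∀ n x, 0 ≤ f n x) ∧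
      (∀ n, ∫⁻ x in Set.Icc (0:ℝ) 1, ENNReal.ofReal (f n x) = 1) ∧
      Measurable g ∧ (∀ x, 0 ≤ g x) ∧
      (∫⁻ x in Set.Icc (0:ℝ) 1, ENNReal.ofReal (g x)) = 1 ∧
      (∀ n, 1 < α n) ∧ Antitone α ∧ Tendsto α atTop (nhds 1) ∧
      (∀ᵐ x ∂(volume.restrict (Set.Icc (0:ℝ) 1)),
        Tendsto (fun n => f n x) atTop (nhds (g x))) ∧
      (∃ B : ℝ, ∀ n,
        ∫⁻ x in Set.Icc (0:ℝ) 1,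
          ENNReal.ofReal (f n x * |Real.log (f n x)| ^ (α n)) ≤ ENNReal.ofReal B) ∧
      ¬ Tendsto (fun n => -∫ x in Set.Icc (0:ℝ) 1, f n x * Real.log (f n x)) atTop
          (nhds (-∫ x in Set.Icc (0:ℝ) 1, g x * Real.log (g x))) := by
  set N : ℕ → ℝ := fun n => n + 2
  have hN (n : ℕ) : 2 ≤ N n := by simp [N]
  have hN_tendsto : Tendsto N atTop atTop :=
    tendsto_atTop_add_const_right _ 2 tendsto_natCast_atTop_atTop
  refine ⟨fun n => spikeDensity (N n), fun _ => 1, fun n => momentExponent (N n),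
    fun n => measurable_spikeDensity _, fun n => spikeDensity_nonneg (hN n),
    fun n => lintegral_spikeDensity (hN n), measurable_const, fun _ => zero_le_one, by simp,
    fun n => one_lt_momentExponent (by linarith [hN n]), ?_, tendsto_momentExponent.comp hN_tendsto,
    ?_, ⟨exp 1 + 1, fun n => lintegral_spikeDensity_moment_le (hN n)⟩, ?_⟩
  · intro m k hmk
    exact antitoneOn_momentExponent (by linarith [hN m] : 1 < N m) (by linarith [hN k] : 1 < N k)
      (by simpa [N] using hmk)
  · filter_upwards [ae_tendsto_spikeDensity] with x hx
    exact hx.comp hN_tendsto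
  · intro h
    have hlim := (tendsto_integral_spikeDensity_mul_log.comp hN_tendsto).neg
    simp only [log_one, mul_zero, integral_zero, neg_zero] at h
    exact absurd (tendsto_nhds_unique hlim h) (by norm_num)
end

section
/- With f_n as in the Godavarti–Hero counterexample (f_n = e^n on [0, e^{−n}/n], f_n = c_n elsewhere on [0,1]) and α_n = 1 + 1/(log n), the spike contribution to ∫ f_n (|log f_n|)^{α_n} equals e^n · n^{α_n} · e^{−n}/n = n^{1/log n} = e, so sup_{n≥2} ∫₀¹ f_n (|log f_n|)^{α_n} dx < ∞. -/
open MeasureTheory Filter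

/-- The Godavarti--Hero counterexample density: a spike of height `e^n` on
`[0, e^{-n}/n]` and the normalizing constant `c_n` elsewhere. -/
noncomputable def ghF (n : ℕ) (x : ℝ) : ℝ :=
  if x ≤ Real.exp (-(n:ℝ)) / n then Real.exp n
  else (1 - 1 / (n:ℝ)) / (1 - Real.exp (-(n:ℝ)) / n)

lemma gh_key (n : ℕ) (hn : 2 ≤ n) :
    Real.exp (-(n:ℝ)) / n * (Real.exp n * (n:ℝ) ^ (1 + 1 / Real.log n)) = Real.exp 1 := by
  have hn0 : (0:ℝ) < n := by positivity
  have hlog : Real.log n ≠ 0 := by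
    have : (1:ℝ) < n := by exact_mod_cast hn.trans_lt' one_lt_two
    exact ne_of_gt (Real.log_pos this)
  have hpow : (n:ℝ) ^ (1 + 1 / Real.log n) = n * Real.exp 1 := by
    rw [Real.rpow_add hn0, Real.rpow_one, Real.rpow_def_of_pos hn0]
    field_simp
  rw [hpow, Real.exp_neg]
  field_simp [Real.exp_ne_zero]

lemma gh_spike (n : ℕ) (hn : 2 ≤ n) :
    ∫ x in Set.Icc (0:ℝ) (Real.exp (-(n:ℝ)) / n),
        ghF n x * |Real.log (ghF n x)| ^ (1 + 1 / Real.log n)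
      = Real.exp 1 := by
  have hn0 : (0:ℝ) < n := by positivity
  have ht0 : 0 ≤ Real.exp (-(n:ℝ)) / n := by positivity
  have hval : ∀ x ∈ Set.Icc (0:ℝ) (Real.exp (-(n:ℝ)) / n),
      ghF n x * |Real.log (ghF n x)| ^ (1 + 1 / Real.log n)
        = Real.exp n * (n:ℝ) ^ (1 + 1 / Real.log n) := by
    intro x hx
    have : ghF n x = Real.exp n := by simp [ghF, hx.2]
    rw [this, Real.log_exp, abs_of_nonneg hn0.le]
  rw [setIntegral_congr_fun measurableSet_Icc hval, setIntegral_const,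
    measureReal_def, Real.volume_Icc, smul_eq_mul, sub_zero, ENNReal.toReal_ofReal ht0]
  exact gh_key n hn

theorem entropy_stmt15 :
    (∀ n : ℕ, 2 ≤ n →
      ∫ x in Set.Icc (0:ℝ) (Real.exp (-(n:ℝ)) / n),
        ghF n x * |Real.log (ghF n x)| ^ (1 + 1 / Real.log n) = Real.exp 1) ∧
    ∃ B : ℝ, ∀ n : ℕ, 2 ≤ n →
      ∫⁻ x in Set.Icc (0:ℝ) 1,
        ENNReal.ofReal (ghF n x * |Real.log (ghF n x)| ^ (1 + 1 / Real.log n))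
          ≤ ENNReal.ofReal B := by
  constructor
  · exact gh_spike
  · refine ⟨Real.exp 1 + 1, fun n hn => ?_⟩
    set t := Real.exp (-(n:ℝ)) / n with htdef
    have hn0 : (0:ℝ) < n := by positivity
    have hn2 : (2:ℝ) ≤ n := by exact_mod_cast hn
    have ht0 : 0 ≤ t := by positivity
    have hexp1 : Real.exp (-(n:ℝ)) < 1 := by
      rw [Real.exp_lt_one_iff]; linarith
    have ht1 : t ≤ 1 := by
      rw [div_le_one hn0]; linarith
    have htn : t < 1 / n := by
      rw [div_lt_div_iff₀ hn0 hn0]; nlinarith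
    -- properties of c
    set c := (1 - 1 / (n:ℝ)) / (1 - t) with hcdef
    have h1n : 1 / (n:ℝ) ≤ 1 / 2 := by
      apply one_div_le_one_div_of_le <;> linarith
    have hden : (0:ℝ) < 1 - t := by linarith
    have hnum : (0:ℝ) < 1 - 1 / (n:ℝ) := by
      have : 1 / (n:ℝ) ≤ 1 / 2 := by
        apply one_div_le_one_div_of_le <;> linarith
      linarith
    have hc0 : 0 < c := div_pos hnum hden
    have hc1 : c ≤ 1 := by
      rw [hcdef, div_le_one hden]
      have : t ≤ 1 / n := htn.le
      linarith
    have hchalf : 1 / 2 ≤ c := by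
      rw [hcdef, le_div_iff₀ hden]
      have h1 : 1 / (n:ℝ) ≤ 1 / 2 := by
        apply one_div_le_one_div_of_le <;> linarith
      nlinarith
    have hlogc : |Real.log c| ≤ 1 := by
      rw [abs_le]
      constructor
      · have := Real.log_le_log (by norm_num : (0:ℝ) < 1/2) hchalf
        have h2 : Real.log (1/2) = -Real.log 2 := by
          rw [one_div, Real.log_inv]
        have h3 : Real.log 2 ≤ 1 := by
          have := Real.log_le_sub_one_of_pos (by norm_num : (0:ℝ) < 2)
          linarith
        linarith
      · have := Real.log_nonpos hc0.le hc1
        linarith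
    have hα : 0 ≤ 1 + 1 / Real.log n := by
      have : 0 < Real.log n := Real.log_pos (by linarith)
      positivity
    have hbd : c * |Real.log c| ^ (1 + 1 / Real.log n) ≤ 1 := by
      have h1 : |Real.log c| ^ (1 + 1 / Real.log n) ≤ 1 :=
        Real.rpow_le_one (abs_nonneg _) hlogc hα
      nlinarith [Real.rpow_nonneg (abs_nonneg (Real.log c)) (1 + 1 / Real.log n)]
    -- split
    have hsplit : Set.Icc (0:ℝ) 1 = Set.Icc 0 t ∪ Set.Ioc t 1 := by
      rw [Set.Icc_union_Ioc_eq_Icc ht0 ht1]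
    calc ∫⁻ x in Set.Icc (0:ℝ) 1,
        ENNReal.ofReal (ghF n x * |Real.log (ghF n x)| ^ (1 + 1 / Real.log n))
        ≤ (∫⁻ x in Set.Icc (0:ℝ) t,
            ENNReal.ofReal (ghF n x * |Real.log (ghF n x)| ^ (1 + 1 / Real.log n)))
          + ∫⁻ x in Set.Ioc t 1,
            ENNReal.ofReal (ghF n x * |Real.log (ghF n x)| ^ (1 + 1 / Real.log n)) := by
          rw [hsplit]; exact lintegral_union_le _ _ _
      _ ≤ ENNReal.ofReal (Real.exp 1) + ENNReal.ofReal 1 := by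
          gcongr
          · -- spike part
            have hval : ∀ x ∈ Set.Icc (0:ℝ) t,
                ENNReal.ofReal (ghF n x * |Real.log (ghF n x)| ^ (1 + 1 / Real.log n))
                  = ENNReal.ofReal (Real.exp n * (n:ℝ) ^ (1 + 1 / Real.log n)) := by
              intro x hx
              have : ghF n x = Real.exp n := by simp [ghF, ← htdef, hx.2]
              rw [this, Real.log_exp, abs_of_nonneg hn0.le]
            rw [setLIntegral_congr_fun measurableSet_Icc hval,
              setLIntegral_const, Real.volume_Icc, sub_zero,
              ← ENNReal.ofReal_mul (by positivity)]
            rw [mul_comm]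
            rw [← gh_key n hn]
          · -- background part
            have hval : ∀ x ∈ Set.Ioc t 1,
                ENNReal.ofReal (ghF n x * |Real.log (ghF n x)| ^ (1 + 1 / Real.log n))
                  = ENNReal.ofReal (c * |Real.log c| ^ (1 + 1 / Real.log n)) := by
              intro x hx
              have : ghF n x = c := by
                simp [ghF, ← htdef, not_le.mpr hx.1, hcdef]
              rw [this]
            rw [setLIntegral_congr_fun measurableSet_Ioc hval,
              setLIntegral_const]
            calc ENNReal.ofReal (c * |Real.log c| ^ (1 + 1 / Real.log n)) * volume (Set.Ioc t 1)
                ≤ ENNReal.ofReal 1 * 1 := by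
                  gcongr
                  · rw [Real.volume_Ioc]
                    exact ENNReal.ofReal_le_one.mpr (by linarith)
              _ = ENNReal.ofReal 1 := by rw [mul_one]
      _ ≤ ENNReal.ofReal (Real.exp 1 + 1) := by
          rw [ENNReal.ofReal_add (by positivity) (by norm_num)]
end

section
/- For the counterexample densities f_n (spike e^n on an interval of length e^{−n}/n, constant c_n elsewhere on [0,1]) and any fixed α > 1, the integral ∫₀¹ f_n (|log f_n|)^α dx → ∞ as n → ∞. -/
open MeasureTheory Filter

lemma ghF_integral (α : ℝ) (n : ℕ) (hn : 1 ≤ n) :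
    ∫ x in Set.Icc (0:ℝ) 1, ghF n x * |Real.log (ghF n x)| ^ α
      = Real.exp (-(n:ℝ)) / n * (Real.exp n * |(n:ℝ)| ^ α)
        + (1 - Real.exp (-(n:ℝ)) / n) *
          (((1 - 1 / (n:ℝ)) / (1 - Real.exp (-(n:ℝ)) / n)) *
            |Real.log ((1 - 1 / (n:ℝ)) / (1 - Real.exp (-(n:ℝ)) / n))| ^ α) := by
  set a : ℝ := Real.exp (-(n:ℝ)) / n with ha
  have hn' : (1:ℝ) ≤ n := by exact_mod_cast hn
  have ha0 : 0 < a := by positivity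
  have ha1 : a < 1 := by
    have h1 : Real.exp (-(n:ℝ)) < 1 := by
      rw [Real.exp_lt_one_iff]; linarith
    have : a ≤ Real.exp (-(n:ℝ)) := by
      rw [ha, div_le_iff₀ (by linarith)]
      nlinarith [Real.exp_pos (-(n:ℝ))]
    linarith
  have heq1 : ∀ x ∈ Set.Icc (0:ℝ) a, ghF n x * |Real.log (ghF n x)| ^ α
      = Real.exp n * |(n:ℝ)| ^ α := fun x hx => by
    simp [ghF, ← ha, hx.2]
  have heq2 : ∀ x ∈ Set.Ioc a (1:ℝ), ghF n x * |Real.log (ghF n x)| ^ α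
      = ((1 - 1 / (n:ℝ)) / (1 - a)) * |Real.log ((1 - 1 / (n:ℝ)) / (1 - a))| ^ α :=
    fun x hx => by simp [ghF, ← ha, not_le.mpr hx.1]
  have hdisj : Disjoint (Set.Icc (0:ℝ) a) (Set.Ioc a 1) :=
    Set.disjoint_left.mpr fun x hx hx' => absurd hx.2 (not_le.mpr hx'.1)
  have hsplit : Set.Icc (0:ℝ) 1 = Set.Icc 0 a ∪ Set.Ioc a 1 :=
    (Set.Icc_union_Ioc_eq_Icc ha0.le ha1.le).symm
  rw [hsplit, setIntegral_union hdisj measurableSet_Ioc]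
  · congr 1
    · rw [setIntegral_congr_fun measurableSet_Icc heq1]
      simp [Real.volume_Icc, ENNReal.toReal_ofReal ha0.le, smul_eq_mul, ha0.le]
    · rw [setIntegral_congr_fun measurableSet_Ioc heq2]
      simp [Real.volume_Ioc, ENNReal.toReal_ofReal (by linarith : (0:ℝ) ≤ 1 - a),
        smul_eq_mul, ha1.le]
  · exact ((integrableOn_const_iff enorm_ne_top).mpr (Or.inr (by simp [Real.volume_Icc]))).congr_fun
      (fun x hx => (heq1 x hx).symm) measurableSet_Icc
  · exact ((integrableOn_const_iff enorm_ne_top).mpr (Or.inr (by simp [Real.volume_Ioc]))).congr_fun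
      (fun x hx => (heq2 x hx).symm) measurableSet_Ioc

theorem entropy_stmt16 (α : ℝ) (hα : 1 < α) :
    Tendsto (fun n : ℕ =>
        ∫ x in Set.Icc (0:ℝ) 1, ghF n x * |Real.log (ghF n x)| ^ α)
      atTop atTop := by
  have hlim : Tendsto (fun n : ℕ => (n:ℝ) ^ (α - 1)) atTop atTop :=
    (tendsto_rpow_atTop (by linarith)).comp tendsto_natCast_atTop_atTop
  refine tendsto_atTop_mono' _ ?_ hlim
  filter_upwards [eventually_ge_atTop 1] with n hn
  have hn' : (1:ℝ) ≤ n := by exact_mod_cast hn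
  have hnpos : (0:ℝ) < n := by linarith
  rw [ghF_integral α n hn]
  set a : ℝ := Real.exp (-(n:ℝ)) / n with ha
  have ha0 : 0 < a := by positivity
  have ha1 : a < 1 := by
    have h1 : Real.exp (-(n:ℝ)) < 1 := by
      rw [Real.exp_lt_one_iff]; linarith
    have : a ≤ Real.exp (-(n:ℝ)) := by
      rw [ha, div_le_iff₀ hnpos]
      nlinarith [Real.exp_pos (-(n:ℝ))]
    linarith
  have hB : 0 ≤ (1 - a) *
      (((1 - 1 / (n:ℝ)) / (1 - a)) * |Real.log ((1 - 1 / (n:ℝ)) / (1 - a))| ^ α) := by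
    have h1 : (0:ℝ) ≤ 1 - 1 / (n:ℝ) := by
      have : 1 / (n:ℝ) ≤ 1 := by
        rw [div_le_one hnpos]; exact hn'
      linarith
    have h2 : (0:ℝ) ≤ 1 - a := by linarith
    positivity
  have hA : a * (Real.exp n * |(n:ℝ)| ^ α) = (n:ℝ) ^ (α - 1) := by
    rw [abs_of_nonneg hnpos.le, ha, Real.rpow_sub hnpos, Real.rpow_one]
    rw [Real.exp_neg]
    field_simp
  rw [hA] at *
  linarith
end

section
/- Let δ_n = 1/(n·e^n·log(1+n)) and define pdfs f_n on [0,1] by f_n = e^n on [0, δ_n] and f_n = c_n (normalizing constant) on (δ_n, 1]. Then with Ψ(t) = t·log(1+t), sup_n ∫₀¹ f_n·Ψ(|log f_n|) dx < ∞, but for every fixed α > 1, sup_n ∫₀¹ f_n·(|log f_n|)^α dx = ∞. -/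
open MeasureTheory Filter
open scoped ENNReal

/-- Spike width for the Orlicz example. -/
noncomputable def orδ (n : ℕ) : ℝ := 1 / ((n:ℝ) * Real.exp n * Real.log (1 + n))

/-- The Orlicz example density: a spike of height `e^n` on `[0, δ_n]` and the
normalizing constant `c_n` elsewhere. -/
noncomputable def orF (n : ℕ) (x : ℝ) : ℝ :=
  if x ≤ orδ n then Real.exp n
  else (1 - Real.exp n * orδ n) / (1 - orδ n)


lemma step_lint (δ : ℝ) (h0 : 0 ≤ δ) (h1 : δ ≤ 1) (A B : ℝ≥0∞) :
    ∫⁻ x in Set.Icc (0:ℝ) 1, (if x ≤ δ then A else B) =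
      ENNReal.ofReal δ * A + ENNReal.ofReal (1 - δ) * B := by
  rw [← Set.Icc_union_Ioc_eq_Icc h0 h1,
    lintegral_union measurableSet_Ioc
      ((Set.Iic_disjoint_Ioi le_rfl).mono Set.Icc_subset_Iic_self Set.Ioc_subset_Ioi_self)]
  rw [setLIntegral_congr_fun measurableSet_Icc (fun x hx => if_pos hx.2),
    setLIntegral_congr_fun measurableSet_Ioc
      (fun x (hx : x ∈ Set.Ioc δ 1) => if_neg (not_le.2 hx.1)),
    setLIntegral_const, setLIntegral_const, Real.volume_Icc, Real.volume_Ioc, sub_zero,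
    mul_comm, mul_comm B]


section facts
variable {n : ℕ} (hn : 2 ≤ n)
include hn

lemma hlog1 : 1 ≤ Real.log (1 + n) := by
  rw [Real.le_log_iff_exp_le (by positivity)]
  calc Real.exp 1 ≤ 2.7182818286 := (Real.exp_one_lt_d9).le
    _ ≤ 1 + (n:ℝ) := by
        have : (2:ℝ) ≤ n := by exact_mod_cast hn
        linarith

lemma hδpos : 0 < orδ n := by
  have h1 := hlog1 hn
  have hn0 : (0:ℝ) < n := by positivity
  unfold orδ
  positivity

lemma hEδ : Real.exp n * orδ n = 1 / ((n:ℝ) * Real.log (1 + n)) := by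
  have h1 := hlog1 hn
  have hn0 : (0:ℝ) < n := by positivity
  have hE : Real.exp (n:ℝ) ≠ 0 := (Real.exp_pos _).ne'
  unfold orδ
  field_simp

lemma hEδhalf : Real.exp n * orδ n ≤ 1 / 2 := by
  rw [hEδ hn]
  have h1 := hlog1 hn
  have hn2 : (2:ℝ) ≤ n := by exact_mod_cast hn
  rw [div_le_div_iff₀ (by nlinarith) (by norm_num)]
  nlinarith

lemma hδEδ : orδ n ≤ Real.exp n * orδ n := by
  have := hδpos hn
  nlinarith [Real.one_le_exp (by positivity : (0:ℝ) ≤ (n:ℝ))]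

lemma hδhalf : orδ n ≤ 1 / 2 := (hδEδ hn).trans (hEδhalf hn)

lemma hc_half : 1 / 2 ≤ (1 - Real.exp n * orδ n) / (1 - orδ n) := by
  have h1 := hEδhalf hn
  have h2 := hδpos hn
  have h3 := hδhalf hn
  have h4 := hδEδ hn
  rw [le_div_iff₀ (by linarith)]
  nlinarith

lemma hc_one : (1 - Real.exp n * orδ n) / (1 - orδ n) ≤ 1 := by
  have h2 := hδpos hn
  have h3 := hδhalf hn
  have h4 := hδEδ hn
  rw [div_le_one (by linarith)]
  linarith

lemma habslogc : |Real.log ((1 - Real.exp n * orδ n) / (1 - orδ n))| ≤ 1 := by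
  set c := (1 - Real.exp n * orδ n) / (1 - orδ n) with hc
  have h1 := hc_half hn
  have h2 := hc_one hn
  have hlogle : Real.log c ≤ 0 := Real.log_nonpos (by linarith) h2
  have hge : -1 ≤ Real.log c := by
    have : Real.log (1/2) ≤ Real.log c := Real.log_le_log (by norm_num) h1
    have h12 : -1 < Real.log (1/2) := by
      rw [Real.lt_log_iff_exp_lt (by norm_num)]
      calc Real.exp (-1) ≤ 1/Real.exp 1 := by rw [Real.exp_neg]; rw [one_div]
        _ < 1/2 := by
            have := Real.exp_one_gt_d9
            rw [div_lt_div_iff₀ (Real.exp_pos 1) (by norm_num)]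
            linarith
    linarith
  rw [abs_le]; constructor <;> linarith

end facts

lemma claim2 {n : ℕ} (hn : 2 ≤ n) :
    ∫⁻ x in Set.Icc (0:ℝ) 1, ENNReal.ofReal (orF n x) = 1 := by
  have h2 := hδpos hn
  have h3 := hδhalf hn
  have h4 := hδEδ hn
  have h5 := hEδhalf hn
  have e1 : ∫⁻ x in Set.Icc (0:ℝ) 1, ENNReal.ofReal (orF n x) =
      ∫⁻ x in Set.Icc (0:ℝ) 1,
        (if x ≤ orδ n then ENNReal.ofReal (Real.exp n)
         else ENNReal.ofReal ((1 - Real.exp n * orδ n) / (1 - orδ n))) :=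
    lintegral_congr fun x => by unfold orF; split_ifs <;> rfl
  rw [e1, step_lint _ h2.le (by linarith) _ _,
    ← ENNReal.ofReal_mul h2.le, ← ENNReal.ofReal_mul (by linarith),
    mul_div_cancel₀ _ (by linarith : (1:ℝ) - orδ n ≠ 0)]
  rw [← ENNReal.ofReal_add (by positivity) (by linarith), ]
  rw [show orδ n * Real.exp n + (1 - Real.exp n * orδ n) = 1 by ring]
  exact ENNReal.ofReal_one

lemma claim3 {n : ℕ} (hn : 2 ≤ n) :
    ∫⁻ x in Set.Icc (0:ℝ) 1,
        ENNReal.ofReal (orF n x *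
          (|Real.log (orF n x)| * Real.log (1 + |Real.log (orF n x)|)))
        ≤ ENNReal.ofReal 2 := by
  have h2 := hδpos hn
  have h3 := hδhalf hn
  have h4 := hδEδ hn
  have h5 := hEδhalf hn
  have hc1 := hc_half hn
  have hc2 := hc_one hn
  have hlc := habslogc hn
  set c := (1 - Real.exp n * orδ n) / (1 - orδ n) with hc
  set G : ℝ → ℝ≥0∞ := fun t =>
    ENNReal.ofReal (t * (|Real.log t| * Real.log (1 + |Real.log t|))) with hG
  have e1 : ∫⁻ x in Set.Icc (0:ℝ) 1,
      ENNReal.ofReal (orF n x *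
        (|Real.log (orF n x)| * Real.log (1 + |Real.log (orF n x)|)))
      = ∫⁻ x in Set.Icc (0:ℝ) 1,
        (if x ≤ orδ n then G (Real.exp n) else G c) :=
    lintegral_congr fun x => by unfold orF; split_ifs <;> rfl
  rw [e1, step_lint _ h2.le (by linarith)]
  have hspike : ENNReal.ofReal (orδ n) * G (Real.exp n) = ENNReal.ofReal 1 := by
    rw [hG]
    simp only [Real.log_exp]
    rw [← ENNReal.ofReal_mul h2.le]
    congr 1
    have hn0 : (0:ℝ) < n := by
      have : (2:ℝ) ≤ n := by exact_mod_cast hn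
      linarith
    have h1 := hlog1 hn
    rw [abs_of_nonneg hn0.le]
    unfold orδ
    have hE : Real.exp (n:ℝ) ≠ 0 := (Real.exp_pos _).ne'
    field_simp
  have hflat : ENNReal.ofReal (1 - orδ n) * G c ≤ ENNReal.ofReal 1 := by
    rw [hG, ← ENNReal.ofReal_mul (by linarith)]
    apply ENNReal.ofReal_le_ofReal
    have hcpos : (0:ℝ) < c := by linarith
    have hl2 : Real.log (1 + |Real.log c|) ≤ 1 := by
      have : Real.log (1 + |Real.log c|) ≤ Real.log 2 :=
        Real.log_le_log (by positivity) (by linarith)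
      have h2' : Real.log 2 < 1 := by
        have := Real.log_two_lt_d9; linarith
      linarith
    have habs : (0:ℝ) ≤ |Real.log c| := abs_nonneg _
    have hl0 : 0 ≤ Real.log (1 + |Real.log c|) :=
      Real.log_nonneg (by linarith)
    have hin : |Real.log c| * Real.log (1 + |Real.log c|) ≤ 1 :=
      mul_le_one₀ hlc hl0 hl2
    have hin0 : 0 ≤ |Real.log c| * Real.log (1 + |Real.log c|) :=
      mul_nonneg habs hl0
    have hout : c * (|Real.log c| * Real.log (1 + |Real.log c|)) ≤ 1 :=
      mul_le_one₀ hc2 hin0 hin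
    have hout0 : 0 ≤ c * (|Real.log c| * Real.log (1 + |Real.log c|)) :=
      mul_nonneg hcpos.le hin0
    calc (1 - orδ n) * (c * (|Real.log c| * Real.log (1 + |Real.log c|)))
        ≤ 1 * 1 := mul_le_mul (by linarith) hout hout0 one_pos.le
      _ = 1 := one_mul 1
  calc ENNReal.ofReal (orδ n) * G (Real.exp n) + ENNReal.ofReal (1 - orδ n) * G c
      ≤ ENNReal.ofReal 1 + ENNReal.ofReal 1 := by
        rw [hspike]; exact add_le_add le_rfl hflat
    _ = ENNReal.ofReal 2 := by rw [← ENNReal.ofReal_add] <;> norm_num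

lemma claim4_lb {n : ℕ} (hn : 2 ≤ n) (α : ℝ) :
    ENNReal.ofReal ((n:ℝ) ^ α / ((n:ℝ) * Real.log (1 + n))) ≤
    ∫⁻ x in Set.Icc (0:ℝ) 1,
        ENNReal.ofReal (orF n x * |Real.log (orF n x)| ^ α) := by
  have h2 := hδpos hn
  have h3 := hδhalf hn
  set c := (1 - Real.exp n * orδ n) / (1 - orδ n) with hc
  set G : ℝ → ℝ≥0∞ := fun t => ENNReal.ofReal (t * |Real.log t| ^ α) with hG
  have e1 : ∫⁻ x in Set.Icc (0:ℝ) 1,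
      ENNReal.ofReal (orF n x * |Real.log (orF n x)| ^ α)
      = ∫⁻ x in Set.Icc (0:ℝ) 1,
        (if x ≤ orδ n then G (Real.exp n) else G c) :=
    lintegral_congr fun x => by unfold orF; split_ifs <;> rfl
  rw [e1, step_lint _ h2.le (by linarith)]
  have hspike : ENNReal.ofReal (orδ n) * G (Real.exp n) =
      ENNReal.ofReal ((n:ℝ) ^ α / ((n:ℝ) * Real.log (1 + n))) := by
    rw [hG]
    simp only [Real.log_exp]
    rw [← ENNReal.ofReal_mul h2.le]
    congr 1
    have hn0 : (0:ℝ) < n := by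
      have : (2:ℝ) ≤ n := by exact_mod_cast hn
      linarith
    have h1 := hlog1 hn
    rw [abs_of_nonneg hn0.le]
    unfold orδ
    have hE : Real.exp (n:ℝ) ≠ 0 := (Real.exp_pos _).ne'
    field_simp
  rw [hspike]
  exact le_self_add

lemma claim4_tendsto (α : ℝ) (hα : 1 < α) :
    Tendsto (fun n : ℕ => (n:ℝ) ^ α / ((n:ℝ) * Real.log (1 + n))) atTop atTop := by
  set ε : ℝ := (α - 1) / 2 with hε
  have hεpos : 0 < ε := by rw [hε]; linarith
  have h2ε : (0:ℝ) < 2 ^ ε := Real.rpow_pos_of_pos two_pos ε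
  have hbd : ∀ n : ℕ, 1 ≤ n →
      ε / 2 ^ ε * (n:ℝ) ^ ε ≤ (n:ℝ) ^ α / ((n:ℝ) * Real.log (1 + n)) := by
    intro n hn
    set x : ℝ := (n:ℝ) with hx
    have hx1 : (1:ℝ) ≤ x := by rw [hx]; exact_mod_cast hn
    have hx0 : (0:ℝ) < x := by linarith
    have hxε : (0:ℝ) < x ^ ε := Real.rpow_pos_of_pos hx0 ε
    have l1 : Real.log (1 + x) ≤ (1 + x) ^ ε / ε :=
      Real.log_le_rpow_div (by linarith) hεpos
    have l2 : (1 + x) ^ ε ≤ (2 * x) ^ ε :=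
      Real.rpow_le_rpow (by linarith) (by linarith) hεpos.le
    have l3 : (2 * x) ^ ε = 2 ^ ε * x ^ ε :=
      Real.mul_rpow (by norm_num) hx0.le
    have hlogpos : 0 < Real.log (1 + x) := Real.log_pos (by linarith)
    have hD : x * Real.log (1 + x) ≤ x * (2 ^ ε * x ^ ε / ε) := by
      apply mul_le_mul_of_nonneg_left _ hx0.le
      calc Real.log (1 + x) ≤ (1 + x) ^ ε / ε := l1
        _ ≤ (2 * x) ^ ε / ε := by
            apply div_le_div_of_nonneg_right l2 hεpos.le
        _ = 2 ^ ε * x ^ ε / ε := by rw [l3]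
    have hxα : x ^ α = x * (x ^ ε * x ^ ε) := by
      have : α = 1 + ε + ε := by rw [hε]; ring
      rw [this, Real.rpow_add hx0, Real.rpow_add hx0, Real.rpow_one, mul_assoc]
    have hden : 0 < x * Real.log (1 + x) := mul_pos hx0 hlogpos
    calc ε / 2 ^ ε * x ^ ε = x ^ α / (x * (2 ^ ε * x ^ ε / ε)) := by
          rw [hxα]
          field_simp
      _ ≤ x ^ α / (x * Real.log (1 + x)) := by
          apply div_le_div_of_nonneg_left (by positivity) hden hD
  have htend : Tendsto (fun n : ℕ => ε / 2 ^ ε * (n:ℝ) ^ ε) atTop atTop := by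
    apply Tendsto.const_mul_atTop (by positivity)
    exact (tendsto_rpow_atTop hεpos).comp tendsto_natCast_atTop_atTop
  exact tendsto_atTop_mono' atTop (eventually_atTop.2 ⟨1, hbd⟩) htend

lemma claim4 (α : ℝ) (hα : 1 < α) :
    (⨆ n, ∫⁻ x in Set.Icc (0:ℝ) 1,
      ENNReal.ofReal (orF n x * |Real.log (orF n x)| ^ α)) = ⊤ := by
  rw [iSup_eq_top]
  intro b hb
  have h1 : ∀ᶠ n : ℕ in atTop,
      b.toReal + 1 ≤ (n:ℝ) ^ α / ((n:ℝ) * Real.log (1 + n)) :=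
    (claim4_tendsto α hα).eventually_ge_atTop _
  obtain ⟨n, hn2, hgn⟩ := ((eventually_ge_atTop 2).and h1).exists
  refine ⟨n, lt_of_lt_of_le ?_ (claim4_lb hn2 α)⟩
  calc b = ENNReal.ofReal b.toReal := (ENNReal.ofReal_toReal hb.ne).symm
    _ < ENNReal.ofReal ((n:ℝ) ^ α / ((n:ℝ) * Real.log (1 + n))) := by
        rw [ENNReal.ofReal_lt_ofReal_iff]
        · linarith
        · have := ENNReal.toReal_nonneg (a := b); linarith

theorem entropy_stmt18 :
    (∀ n, 2 ≤ n → ∀ x, 0 ≤ orF n x) ∧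
    (∀ n, 2 ≤ n → ∫⁻ x in Set.Icc (0:ℝ) 1, ENNReal.ofReal (orF n x) = 1) ∧
    (∃ B : ℝ, ∀ n, 2 ≤ n →
      ∫⁻ x in Set.Icc (0:ℝ) 1,
        ENNReal.ofReal (orF n x *
          (|Real.log (orF n x)| * Real.log (1 + |Real.log (orF n x)|)))
        ≤ ENNReal.ofReal B) ∧
    (∀ α : ℝ, 1 < α →
      (⨆ n, ∫⁻ x in Set.Icc (0:ℝ) 1,
        ENNReal.ofReal (orF n x * |Real.log (orF n x)| ^ α)) = ⊤) := by
  refine ⟨?_, ?_, ⟨2, ?_⟩, ?_⟩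
  · intro n hn x
    unfold orF
    split_ifs
    · exact (Real.exp_pos _).le
    · have h2 := hδpos hn
      have h3 := hδhalf hn
      have h5 := hEδhalf hn
      exact div_nonneg (by linarith) (by linarith)
  · exact fun n hn => claim2 hn
  · exact fun n hn => claim3 hn
  · exact claim4
end
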